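/- arXiv:1611.05961 — 10 statements merged into one kernel-verified Lean document; each statement's English description precedes it below -/
import Mathlib

section
/- For any SAM F : ℝ^d × S → {subsets of ℝ^k} there exists a sequence of set-valued maps F^{(l)} : ℝ^d × S → {subsets of ℝ^k}, l ≥ 1, such that: each F^{(l)} is continuous with nonempty convex compact values; F(x,y,s) ⊆ F^{(l+1)}(x,y,s) ⊆ F^{(l)}(x,y,s) for every (x,y,s) and every l ≥ 1; there exist constants K^{(l)} > 0 with sup_{l≥1} K^{(l)} < ∞ such that sup{‖z‖ : z ∈ F^{(l)}(x,y,s)} ≤ K^{(l)}(1+‖(x,y)‖) for all (x,y,s); and ⋂_{l≥1} F^{(l)}(x,y,s) = F(x,y,s) for every (x,y,s). -/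
open MeasureTheory Metric Filter Topology
open scoped Pointwise NNReal ENNReal RealInnerProductSpace

abbrev Euc (n : ℕ) : Type := EuclideanSpace ℝ (Fin n)

/-!
Fix a unit functional `f`. The support function `h_f(Q) = sup f(F Q)` grows at most linearly
and, by the closed graph and local compactness, is upper semicontinuous. Hence its Lipschitz
envelopes `e_l(P) = sup_Q (h_f(Q) - (K + l) dist(P, Q))` are `(K + l)`-Lipschitz in `P`,
decrease in `l` and converge to `h_f(P)`. Take `F^{(l)}(P)` to be the set of `z` with
`f z ≤ e_l(P) + 1/(l+1)` for every unit `f`. A point of every `F^{(l)}(P)` satisfies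
`f z ≤ h_f(P)` for all unit `f`, so it lies in the compact convex set `F(P)` by Hahn–Banach.
Hausdorff continuity comes from the Lipschitz bounds on the right-hand sides: the slack
`1/(l+1)` leaves room around a point of `F(P₀)`, and shrinking towards that point turns a
small change of the right-hand sides into a small displacement.
-/

open Set

section SupportFunction

variable {E : Type*} [NormedAddCommGroup E] [NormedSpace ℝ E]

noncomputable def supportFun (A : Set E) (f : E →L[ℝ] ℝ) : ℝ := sSup (f '' A)

def supportBoundSet (ψ : (E →L[ℝ] ℝ) → ℝ) : Set E :=
  {z | ∀ f : E →L[ℝ] ℝ, ‖f‖ ≤ 1 → f z ≤ ψ f}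

lemma ContinuousLinearMap.apply_le_norm_of_norm_le_one {f : E →L[ℝ] ℝ} (hf : ‖f‖ ≤ 1) (z : E) :
    f z ≤ ‖z‖ :=
  calc f z ≤ ‖f z‖ := Real.le_norm_self _
    _ ≤ ‖f‖ * ‖z‖ := f.le_opNorm z
    _ ≤ ‖z‖ := mul_le_of_le_one_left (norm_nonneg z) hf

lemma le_supportFun {A : Set E} (hA : IsCompact A) (f : E →L[ℝ] ℝ) {z : E} (hz : z ∈ A) :
    f z ≤ supportFun A f :=
  le_csSup (hA.bddAbove_image f.continuous.continuousOn) (mem_image_of_mem f hz)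

lemma supportFun_le {A : Set E} (hA : A.Nonempty) {f : E →L[ℝ] ℝ} (hf : ‖f‖ ≤ 1) {b : ℝ}
    (hb : ∀ z ∈ A, ‖z‖ ≤ b) : supportFun A f ≤ b :=
  csSup_le (hA.image f) <| forall_mem_image.2 fun z hz =>
    (f.apply_le_norm_of_norm_le_one hf z).trans (hb z hz)

lemma supportBoundSet_mono {ψ ψ' : (E →L[ℝ] ℝ) → ℝ}
    (h : ∀ f : E →L[ℝ] ℝ, ‖f‖ ≤ 1 → ψ f ≤ ψ' f) : supportBoundSet ψ ⊆ supportBoundSet ψ' :=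
  fun _ hz f hf => (hz f hf).trans (h f hf)

lemma supportBoundSet_eq_iInter (ψ : (E →L[ℝ] ℝ) → ℝ) :
    supportBoundSet ψ = ⋂ (f : E →L[ℝ] ℝ) (_ : ‖f‖ ≤ 1), {z | f z ≤ ψ f} := by
  ext z
  simp [supportBoundSet]

lemma convex_supportBoundSet (ψ : (E →L[ℝ] ℝ) → ℝ) : Convex ℝ (supportBoundSet ψ) := by
  rw [supportBoundSet_eq_iInter]
  exact convex_iInter fun f => convex_iInter fun _ => convex_halfSpace_le f.isLinear _

lemma isClosed_supportBoundSet (ψ : (E →L[ℝ] ℝ) → ℝ) : IsClosed (supportBoundSet ψ) := by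
  rw [supportBoundSet_eq_iInter]
  exact isClosed_iInter fun f => isClosed_iInter fun _ => isClosed_le f.continuous continuous_const

lemma norm_le_of_mem_supportBoundSet {ψ : (E →L[ℝ] ℝ) → ℝ} {b : ℝ}
    (hψ : ∀ f : E →L[ℝ] ℝ, ‖f‖ ≤ 1 → ψ f ≤ b) {z : E} (hz : z ∈ supportBoundSet ψ) :
    ‖z‖ ≤ b := by
  obtain ⟨g, hg, hgz⟩ := exists_dual_vector'' ℝ z
  have := hz g hg
  rw [hgz] at this
  exact this.trans (hψ g hg)

lemma isCompact_supportBoundSet [ProperSpace E] {ψ : (E →L[ℝ] ℝ) → ℝ} {b : ℝ}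
    (hψ : ∀ f : E →L[ℝ] ℝ, ‖f‖ ≤ 1 → ψ f ≤ b) : IsCompact (supportBoundSet ψ) :=
  (isCompact_closedBall (0 : E) b).of_isClosed_subset (isClosed_supportBoundSet ψ)
    fun _ hz => mem_closedBall_zero_iff.2 (norm_le_of_mem_supportBoundSet hψ hz)

lemma subset_supportBoundSet_supportFun {A : Set E} (hA : IsCompact A) :
    A ⊆ supportBoundSet (supportFun A) :=
  fun _ hz f _ => le_supportFun hA f hz

lemma supportBoundSet_supportFun_subset {A : Set E} (hA : IsCompact A) (hconv : Convex ℝ A)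
    (hne : A.Nonempty) : supportBoundSet (supportFun A) ⊆ A := by
  intro z hz
  by_contra hzA
  obtain ⟨f, u, hfA, hfz⟩ := geometric_hahn_banach_closed_point hconv hA.isClosed hzA
  obtain ⟨a, ha⟩ := hne
  have hf : 0 < ‖f‖ := norm_pos_iff.2 fun hf0 => by
    have := (hfA a ha).trans hfz
    simp [hf0] at this
  set g : E →L[ℝ] ℝ := ‖f‖⁻¹ • f
  have hg : ‖g‖ ≤ 1 := by
    rw [norm_smul, norm_inv, norm_norm, inv_mul_cancel₀ hf.ne']
  have hgA : supportFun A g < ‖f‖⁻¹ * u :=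
    (hA.sSup_lt_iff_of_continuous ⟨a, ha⟩ g.continuous.continuousOn _).2 fun y hy =>
      mul_lt_mul_of_pos_left (hfA y hy) (inv_pos.2 hf)
  have hgz : ‖f‖⁻¹ * u < g z := mul_lt_mul_of_pos_left hfz (inv_pos.2 hf)
  exact (hgA.trans hgz).not_ge (hz g hg)

lemma iInter_supportBoundSet_subset {ψ : ℕ → (E →L[ℝ] ℝ) → ℝ} {φ : (E →L[ℝ] ℝ) → ℝ}
    (h : ∀ f : E →L[ℝ] ℝ, ‖f‖ ≤ 1 → Tendsto (fun l => ψ l f) atTop (𝓝 (φ f))) :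
    ⋂ l, supportBoundSet (ψ l) ⊆ supportBoundSet φ := fun _ hz f hf =>
  ge_of_tendsto' (h f hf) fun l => mem_iInter.1 hz l f hf

/-- Shrink towards `x₀` by the factor `ρ / (ρ + η)`. -/
lemma supportBoundSet_subset_add_closedBall {ψ ψ' : (E →L[ℝ] ℝ) → ℝ} {x₀ : E} {ρ η R : ℝ}
    (hρ : 0 < ρ) (hη : 0 ≤ η) (hx₀ : ∀ f : E →L[ℝ] ℝ, ‖f‖ ≤ 1 → f x₀ + ρ ≤ ψ' f)
    (hψ : ∀ f : E →L[ℝ] ℝ, ‖f‖ ≤ 1 → ψ f ≤ ψ' f + η)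
    (hR : supportBoundSet ψ ⊆ closedBall x₀ R) :
    supportBoundSet ψ ⊆ supportBoundSet ψ' + closedBall 0 (η / ρ * R) := by
  intro c hc
  have hcR : ‖c - x₀‖ ≤ R := by simpa [dist_eq_norm] using hR hc
  set a := η / (ρ + η)
  set t := ρ / (ρ + η)
  have hρη : 0 < ρ + η := by linarith
  have ha : 0 ≤ a := div_nonneg hη hρη.le
  have ht : 0 ≤ t := div_nonneg hρ.le hρη.le
  have hat : a + t = 1 := by rw [← add_div, add_comm, div_self hρη.ne']
  have hcross : a * ρ = t * η := by simp only [a, t]; ring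
  refine ⟨x₀ + t • (c - x₀), fun f hf => ?_, a • (c - x₀), ?_,
    by linear_combination (norm := module) hat • (c - x₀)⟩
  · have hfd : f (x₀ + t • (c - x₀)) = a * f x₀ + t * f c := by
      simp only [map_add, map_smul, map_sub, smul_eq_mul]
      linear_combination (-f x₀) * hat
    have h₁ := mul_le_mul_of_nonneg_left (show f x₀ ≤ ψ' f - ρ by linarith [hx₀ f hf]) ha
    have h₂ := mul_le_mul_of_nonneg_left ((hc f hf).trans (hψ f hf)) ht
    have h₃ : a * ψ' f + t * ψ' f = ψ' f := by rw [← add_mul, hat, one_mul]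
    rw [hfd]
    linarith
  · rw [mem_closedBall_zero_iff, norm_smul, Real.norm_of_nonneg ha]
    calc a * ‖c - x₀‖ ≤ a * R := mul_le_mul_of_nonneg_left hcR ha
      _ ≤ η / ρ * R := mul_le_mul_of_nonneg_right
        (div_le_div_of_nonneg_left hη hρ (by linarith)) ((norm_nonneg _).trans hcR)

end SupportFunction

section Semicontinuity

variable {X E : Type*} [TopologicalSpace X] [NormedAddCommGroup E] [NormedSpace ℝ E]

/-- Tube lemma: the open set `{(Q, y) | y ∈ F Q → f y < c}` contains `{P} × C`, hence some
`u × C` with `u` a neighbourhood of `P`. -/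
lemma upperSemicontinuousAt_supportFun {F : X → Set E} {P : X} {C : Set E}
    (hgraph : IsClosed {x : X × E | x.2 ∈ F x.1}) (hne : ∀ Q, (F Q).Nonempty)
    (hC : IsCompact C) (hFC : ∀ᶠ Q in 𝓝 P, F Q ⊆ C) (f : E →L[ℝ] ℝ) :
    UpperSemicontinuousAt (fun Q => supportFun (F Q) f) P := by
  have hcompact : ∀ Q, F Q ⊆ C → IsCompact (F Q) := fun Q hQ =>
    hC.of_isClosed_subset (hgraph.preimage (Continuous.prodMk_right Q)) hQ
  intro c hc
  have hopen : IsOpen {x : X × E | x.2 ∈ F x.1 → f x.2 < c} := by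
    simp only [imp_iff_not_or]
    exact hgraph.isOpen_compl.union (isOpen_lt (f.continuous.comp continuous_snd) continuous_const)
  have htube : {P} ×ˢ C ⊆ {x : X × E | x.2 ∈ F x.1 → f x.2 < c} := by
    rintro ⟨Q, y⟩ ⟨rfl, -⟩ hy
    exact (le_supportFun (hcompact Q hFC.self_of_nhds) f hy).trans_lt hc
  obtain ⟨u, v, hu, -, hPu, hCv, huv⟩ := generalized_tube_lemma isCompact_singleton hC hopen htube
  filter_upwards [hu.mem_nhds (singleton_subset_iff.1 hPu), hFC] with Q hQu hQC
  exact ((hcompact Q hQC).sSup_lt_iff_of_continuous (hne Q) f.continuous.continuousOn c).2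
    fun y hy => huv (mk_mem_prod hQu (hCv (hQC hy))) hy

end Semicontinuity

section LipschitzEnvelope

variable {X : Type*} [PseudoMetricSpace X]

noncomputable def lipEnvelope (φ : X → ℝ) (L : ℝ) (P : X) : ℝ :=
  ⨆ Q, φ Q - L * dist P Q

variable {φ : X → ℝ} {P : X} {b M L : ℝ}

lemma bddAbove_range_sub_mul_dist (hφ : ∀ Q, φ Q ≤ b + M * dist P Q) (hML : M ≤ L) :
    BddAbove (range fun Q => φ Q - L * dist P Q) := by
  refine ⟨b, forall_mem_range.2 fun Q => ?_⟩
  nlinarith [hφ Q, mul_nonneg (sub_nonneg.2 hML) (dist_nonneg (x := P) (y := Q))]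

lemma lipEnvelope_le (hφ : ∀ Q, φ Q ≤ b + M * dist P Q) (hML : M ≤ L) :
    lipEnvelope φ L P ≤ b :=
  have : Nonempty X := ⟨P⟩
  ciSup_le fun Q => by
    nlinarith [hφ Q, mul_nonneg (sub_nonneg.2 hML) (dist_nonneg (x := P) (y := Q))]

lemma le_lipEnvelope (hφ : ∀ Q, φ Q ≤ b + M * dist P Q) (hML : M ≤ L) :
    φ P ≤ lipEnvelope φ L P := by
  simpa [lipEnvelope] using le_ciSup (bddAbove_range_sub_mul_dist hφ hML) P

lemma lipEnvelope_le_add_mul_dist {P' : X} (hφ : ∀ Q, φ Q ≤ b + M * dist P' Q) (hML : M ≤ L)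
    (hL : 0 ≤ L) : lipEnvelope φ L P ≤ lipEnvelope φ L P' + L * dist P P' :=
  have : Nonempty X := ⟨P⟩
  ciSup_le fun Q => by
    have h₁ : φ Q - L * dist P' Q ≤ lipEnvelope φ L P' :=
      le_ciSup (bddAbove_range_sub_mul_dist hφ hML) Q
    nlinarith [mul_le_mul_of_nonneg_left (dist_triangle_left P' Q P) hL]

lemma lipEnvelope_anti {L' : ℝ} (hφ : ∀ Q, φ Q ≤ b + M * dist P Q) (hML : M ≤ L)
    (hLL' : L ≤ L') : lipEnvelope φ L' P ≤ lipEnvelope φ L P :=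
  have : Nonempty X := ⟨P⟩
  ciSup_le fun Q => by
    have h₁ : φ Q - L * dist P Q ≤ lipEnvelope φ L P :=
      le_ciSup (bddAbove_range_sub_mul_dist hφ hML) Q
    nlinarith [mul_le_mul_of_nonneg_right hLL' (dist_nonneg (x := P) (y := Q))]

/-- Near `P` the envelope is controlled by upper semicontinuity, far from `P` by the
penalty `L * dist P Q`, which beats the linear growth once `L` is large. -/
lemma tendsto_lipEnvelope (hφ : ∀ Q, φ Q ≤ b + M * dist P Q) (hM : 0 ≤ M)
    (husc : UpperSemicontinuousAt φ P) :
    Tendsto (fun L => lipEnvelope φ L P) atTop (𝓝 (φ P)) := by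
  have : Nonempty X := ⟨P⟩
  refine tendsto_order.2 ⟨fun a ha => ?_, fun c hc => ?_⟩
  · filter_upwards [eventually_ge_atTop M] with L hML
    exact ha.trans_le (le_lipEnvelope hφ hML)
  obtain ⟨c', hPc', hc'c⟩ := exists_between hc
  obtain ⟨δ, hδ, hnear⟩ := Metric.eventually_nhds_iff.1 (husc c' hPc')
  filter_upwards [eventually_ge_atTop M, eventually_ge_atTop (M + (b - c') / δ)] with L hML hL
  refine (ciSup_le fun Q => ?_).trans_lt hc'c
  rcases lt_or_ge (dist Q P) δ with hQ | hQ
  · nlinarith [hnear hQ, mul_nonneg (hM.trans hML) (dist_nonneg (x := P) (y := Q))]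
  · have hpenalty : b - c' ≤ (L - M) * δ := (div_le_iff₀ hδ).1 (by linarith)
    rw [dist_comm] at hQ
    nlinarith [hφ Q, mul_le_mul_of_nonneg_left hQ (sub_nonneg.2 hML)]

end LipschitzEnvelope

section HausdorffContinuity

variable {X E : Type*} [PseudoMetricSpace X] [NormedAddCommGroup E] [NormedSpace ℝ E]

def HausdorffContinuousAt (G : X → Set E) (P₀ : X) : Prop :=
  ∀ ε > 0, ∃ δ > 0, ∀ P, dist P P₀ < δ →
    G P ⊆ G P₀ + closedBall 0 ε ∧ G P₀ ⊆ G P + closedBall 0 ε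

/-- The slack `r` at `x₀` survives as slack `r - L * dist P P₀` at nearby `P`, so
`supportBoundSet_subset_add_closedBall` applies in both directions. -/
lemma hausdorffContinuousAt_supportBoundSet {ψ : X → (E →L[ℝ] ℝ) → ℝ} {P₀ : X} {x₀ : E}
    {L r b : ℝ} (hL : 0 ≤ L) (hr : 0 < r)
    (hlip : ∀ P P', ∀ f : E →L[ℝ] ℝ, ‖f‖ ≤ 1 → ψ P f ≤ ψ P' f + L * dist P P')
    (hx₀ : ∀ f : E →L[ℝ] ℝ, ‖f‖ ≤ 1 → f x₀ + r ≤ ψ P₀ f)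
    (hb : ∀ f : E →L[ℝ] ℝ, ‖f‖ ≤ 1 → ψ P₀ f ≤ b) :
    HausdorffContinuousAt (fun P => supportBoundSet (ψ P)) P₀ := by
  intro ε hε
  set R := b + L + ‖x₀‖
  have hball : ∀ P, dist P P₀ < 1 → supportBoundSet (ψ P) ⊆ closedBall x₀ R := by
    intro P hP c hc
    have hψP : ∀ f : E →L[ℝ] ℝ, ‖f‖ ≤ 1 → ψ P f ≤ b + L := fun f hf => by
      nlinarith [hlip P P₀ f hf, hb f hf, mul_le_mul_of_nonneg_left hP.le hL]
    rw [mem_closedBall]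
    linarith [dist_le_norm_add_norm c x₀, norm_le_of_mem_supportBoundSet hψP hc]
  have hsmall : Tendsto (fun P => L * dist P P₀) (𝓝 P₀) (𝓝 0) := by
    simpa using ((continuous_id.dist (continuous_const (y := P₀))).tendsto P₀).const_mul L
  have hsmallR : Tendsto (fun P => L * dist P P₀ * R) (𝓝 P₀) (𝓝 0) := by
    simpa using hsmall.mul_const R
  obtain ⟨δ, hδ, hnear⟩ := Metric.eventually_nhds_iff.1 <|
    Eventually.and (ball_mem_nhds P₀ one_pos) <|
      (hsmall.eventually (eventually_lt_nhds (half_pos hr))).and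
        (hsmallR.eventually (eventually_lt_nhds (by positivity : 0 < ε * r / 2)))
  refine ⟨δ, hδ, fun P hP => ?_⟩
  obtain ⟨hP1, hηr, hηR⟩ := hnear hP
  set η := L * dist P P₀
  have hη : 0 ≤ η := mul_nonneg hL dist_nonneg
  have hradius : ∀ ρ, r / 2 ≤ ρ → η / ρ * R ≤ ε := fun ρ hρ => by
    rw [div_mul_eq_mul_div, div_le_iff₀ (by linarith)]
    nlinarith
  have hlip' : ∀ f : E →L[ℝ] ℝ, ‖f‖ ≤ 1 → ψ P₀ f ≤ ψ P f + η := fun f hf => by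
    simpa only [dist_comm P₀ P] using hlip P₀ P f hf
  have hmargin : ∀ f : E →L[ℝ] ℝ, ‖f‖ ≤ 1 → f x₀ + (r - η) ≤ ψ P f := fun f hf => by
    linarith [hx₀ f hf, hlip' f hf]
  exact ⟨(supportBoundSet_subset_add_closedBall hr hη hx₀ (hlip P P₀) (hball P hP1)).trans
      (add_subset_add_left (closedBall_subset_closedBall (hradius r (by linarith)))),
    (supportBoundSet_subset_add_closedBall (by linarith) hη hmargin hlip'
      (hball P₀ (by simp))).trans
      (add_subset_add_left (closedBall_subset_closedBall (hradius (r - η) (by linarith))))⟩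

end HausdorffContinuity

section Regularization

variable {X E : Type*} [PseudoMetricSpace X] [NormedAddCommGroup E] [NormedSpace ℝ E]

noncomputable def lipRegularization (F : X → Set E) (M : ℝ) (l : ℕ) (P : X) : Set E :=
  supportBoundSet fun f => lipEnvelope (fun Q => supportFun (F Q) f) (M + l) P + 1 / (l + 1)

variable {F : X → Set E} {B : X → ℝ} {M : ℝ}

lemma subset_lipRegularization (hne : ∀ Q, (F Q).Nonempty) (hcomp : ∀ Q, IsCompact (F Q))
    (hgrowth : ∀ P Q, ∀ z ∈ F Q, ‖z‖ ≤ B P + M * dist P Q) (l : ℕ) (P : X) :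
    F P ⊆ lipRegularization F M l P := by
  refine (subset_supportBoundSet_supportFun (hcomp P)).trans (supportBoundSet_mono fun f hf => ?_)
  have := le_lipEnvelope (fun Q => supportFun_le (hne Q) hf (hgrowth P Q))
    (le_add_of_nonneg_right l.cast_nonneg : M ≤ M + l)
  have : (0 : ℝ) < 1 / (l + 1) := by positivity
  linarith

lemma lipRegularization_succ_subset (hne : ∀ Q, (F Q).Nonempty)
    (hgrowth : ∀ P Q, ∀ z ∈ F Q, ‖z‖ ≤ B P + M * dist P Q) (l : ℕ) (P : X) :
    lipRegularization F M (l + 1) P ⊆ lipRegularization F M l P := by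
  refine supportBoundSet_mono fun f hf => ?_
  push_cast
  have := lipEnvelope_anti (fun Q => supportFun_le (hne Q) hf (hgrowth P Q))
    (le_add_of_nonneg_right l.cast_nonneg : M ≤ M + l) (by linarith : M + l ≤ M + (l + 1))
  have : 1 / ((l : ℝ) + 1 + 1) ≤ 1 / (l + 1) := by gcongr; linarith
  linarith

lemma lipEnvelope_supportFun_add_le (hne : ∀ Q, (F Q).Nonempty)
    (hgrowth : ∀ P Q, ∀ z ∈ F Q, ‖z‖ ≤ B P + M * dist P Q) (l : ℕ) (P : X) :
    ∀ f : E →L[ℝ] ℝ, ‖f‖ ≤ 1 →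
      lipEnvelope (fun Q => supportFun (F Q) f) (M + l) P + 1 / (l + 1) ≤ B P + 1 / (l + 1) :=
  fun _ hf => add_le_add_left (lipEnvelope_le (fun Q => supportFun_le (hne Q) hf (hgrowth P Q))
    (le_add_of_nonneg_right l.cast_nonneg)) _

lemma norm_le_of_mem_lipRegularization (hne : ∀ Q, (F Q).Nonempty)
    (hgrowth : ∀ P Q, ∀ z ∈ F Q, ‖z‖ ≤ B P + M * dist P Q) {l : ℕ} {P : X} {z : E}
    (hz : z ∈ lipRegularization F M l P) : ‖z‖ ≤ B P + 1 / (l + 1) :=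
  norm_le_of_mem_supportBoundSet (lipEnvelope_supportFun_add_le hne hgrowth l P) hz

lemma isCompact_lipRegularization [ProperSpace E] (hne : ∀ Q, (F Q).Nonempty)
    (hgrowth : ∀ P Q, ∀ z ∈ F Q, ‖z‖ ≤ B P + M * dist P Q) (l : ℕ) (P : X) :
    IsCompact (lipRegularization F M l P) :=
  isCompact_supportBoundSet (lipEnvelope_supportFun_add_le hne hgrowth l P)

lemma iInter_lipRegularization [ProperSpace E] (hgraph : IsClosed {x : X × E | x.2 ∈ F x.1})
    (hne : ∀ Q, (F Q).Nonempty) (hconv : ∀ Q, Convex ℝ (F Q)) (hcomp : ∀ Q, IsCompact (F Q))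
    (hgrowth : ∀ P Q, ∀ z ∈ F Q, ‖z‖ ≤ B P + M * dist P Q) (hM : 0 ≤ M) (P : X) :
    ⋂ l, lipRegularization F M l P = F P := by
  refine subset_antisymm ?_ (subset_iInter fun l => subset_lipRegularization hne hcomp hgrowth l P)
  have hlocal : ∀ᶠ Q in 𝓝 P, F Q ⊆ closedBall 0 (B P + M) := by
    filter_upwards [ball_mem_nhds P one_pos] with Q hQ z hz
    rw [mem_ball, dist_comm] at hQ
    rw [mem_closedBall_zero_iff]
    nlinarith [hgrowth P Q z hz]
  have hpenalty : Tendsto (fun l : ℕ => M + l) atTop atTop :=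
    tendsto_atTop_add_const_left _ M tendsto_natCast_atTop_atTop
  refine (iInter_supportBoundSet_subset fun f hf => ?_).trans
    (supportBoundSet_supportFun_subset (hcomp P) (hconv P) (hne P))
  simpa using ((tendsto_lipEnvelope (fun Q => supportFun_le (hne Q) hf (hgrowth P Q)) hM
    (upperSemicontinuousAt_supportFun hgraph hne (isCompact_closedBall 0 (B P + M)) hlocal
      f)).comp hpenalty).add tendsto_one_div_add_atTop_nhds_zero_nat

lemma hausdorffContinuousAt_lipRegularization (hne : ∀ Q, (F Q).Nonempty)
    (hcomp : ∀ Q, IsCompact (F Q)) (hgrowth : ∀ P Q, ∀ z ∈ F Q, ‖z‖ ≤ B P + M * dist P Q)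
    (hM : 0 ≤ M) (l : ℕ) (P₀ : X) :
    HausdorffContinuousAt (lipRegularization F M l) P₀ := by
  obtain ⟨x₀, hx₀⟩ := hne P₀
  have hML : M ≤ M + l := le_add_of_nonneg_right l.cast_nonneg
  refine hausdorffContinuousAt_supportBoundSet (x₀ := x₀) (hM.trans hML)
    (by positivity : (0 : ℝ) < 1 / (l + 1)) (fun P P' f hf => ?_) (fun f hf => ?_) (lipEnvelope_supportFun_add_le hne hgrowth l P₀)
  · linarith [lipEnvelope_le_add_mul_dist (P := P)
      (fun Q => supportFun_le (hne Q) hf (hgrowth P' Q)) hML (hM.trans hML)]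
  · linarith [le_supportFun (hcomp P₀) f hx₀,
      le_lipEnvelope (fun Q => supportFun_le (hne Q) hf (hgrowth P₀ Q)) hML]

end Regularization

theorem sam_continuous_embedding_general
    (d₁ d₂ k : ℕ)
    (S : Type) [MetricSpace S]
    (F : (Euc d₁ × Euc d₂) → S → Set (Euc k))
    (hFne : ∀ p s, (F p s).Nonempty)
    (hFconv : ∀ p s, Convex ℝ (F p s))
    (hFcomp : ∀ p s, IsCompact (F p s))
    (hFgraph : ∀ (p : Euc d₁ × Euc d₂) (s : S) (pn : ℕ → Euc d₁ × Euc d₂) (sn : ℕ → S)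
      (zn : ℕ → Euc k) (z : Euc k),
      Tendsto pn atTop (𝓝 p) → Tendsto sn atTop (𝓝 s) →
      (∀ n, zn n ∈ F (pn n) (sn n)) → Tendsto zn atTop (𝓝 z) → z ∈ F p s)
    (K : ℝ) (hK : 0 < K)
    (hFbd : ∀ p s, ∀ z ∈ F p s, ‖z‖ ≤ K * (1 + ‖p‖)) :
    ∃ (G : ℕ → (Euc d₁ × Euc d₂) → S → Set (Euc k)) (Kl : ℕ → ℝ),
      -- nonempty convex compact values
      (∀ l p s, (G l p s).Nonempty ∧ Convex ℝ (G l p s) ∧ IsCompact (G l p s)) ∧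
      -- each G l is a continuous set-valued map (Hausdorff sense)
      (∀ (l : ℕ) (p₀ : Euc d₁ × Euc d₂) (s₀ : S), ∀ ε > (0 : ℝ), ∃ δ > (0 : ℝ),
        ∀ (p : Euc d₁ × Euc d₂) (s : S), ‖p - p₀‖ < δ → dist s s₀ < δ →
          G l p s ⊆ G l p₀ s₀ + closedBall (0 : Euc k) ε ∧
          G l p₀ s₀ ⊆ G l p s + closedBall (0 : Euc k) ε) ∧
      -- decreasing nesting containing F
      (∀ l p s, F p s ⊆ G (l + 1) p s ∧ G (l + 1) p s ⊆ G l p s) ∧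
      -- positive growth constants, uniformly bounded
      (∀ l, 0 < Kl l) ∧ (∃ Ktil : ℝ, ∀ l, Kl l ≤ Ktil) ∧
      (∀ l p s, ∀ z ∈ G l p s, ‖z‖ ≤ Kl l * (1 + ‖p‖)) ∧
      -- intersection recovers F
      (∀ p s, (⋂ l : ℕ, G l p s) = F p s) := by
  set F' : (Euc d₁ × Euc d₂) × S → Set (Euc k) := fun P => F P.1 P.2
  have hgrowth : ∀ P Q, ∀ z ∈ F' Q, ‖z‖ ≤ K * (1 + ‖P.1‖) + K * dist P Q := by
    intro P Q z hz
    have hQP : ‖Q.1‖ ≤ ‖P.1‖ + dist P Q := by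
      have hfst : dist Q.1 P.1 ≤ dist Q P := le_max_left _ _
      linarith [norm_le_norm_add_norm_sub' Q.1 P.1, dist_eq_norm Q.1 P.1, dist_comm P Q]
    nlinarith [hFbd Q.1 Q.2 z hz]
  have hgraph : IsClosed {x : ((Euc d₁ × Euc d₂) × S) × Euc k | x.2 ∈ F' x.1} :=
    isSeqClosed_iff_isClosed.1 fun x _ hx hlim =>
      hFgraph _ _ _ _ _ _ hlim.fst_nhds.fst_nhds hlim.fst_nhds.snd_nhds hx hlim.snd_nhds
  have hne : ∀ P, (F' P).Nonempty := fun P => hFne P.1 P.2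
  have hcomp : ∀ P, IsCompact (F' P) := fun P => hFcomp P.1 P.2
  refine ⟨fun l p s => lipRegularization F' K l (p, s), fun _ => K + 1,
    fun l p s => ⟨(hne _).mono (subset_lipRegularization hne hcomp hgrowth l _),
      convex_supportBoundSet _, isCompact_lipRegularization hne hgrowth l _⟩,
    fun l p₀ s₀ ε hε => ?_,
    fun l p s => ⟨subset_lipRegularization hne hcomp hgrowth (l + 1) (p, s),
      lipRegularization_succ_subset hne hgrowth l _⟩,
    fun _ => by linarith, ⟨K + 1, fun _ => le_rfl⟩, fun l p s z hz => ?_,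
    fun p s => iInter_lipRegularization hgraph hne (fun P => hFconv P.1 P.2) hcomp hgrowth
      hK.le (p, s)⟩
  · obtain ⟨δ, hδ, hG⟩ := hausdorffContinuousAt_lipRegularization hne hcomp hgrowth hK.le l
      (p₀, s₀) ε hε
    exact ⟨δ, hδ, fun p s hp hs => hG (p, s) (max_lt (by rwa [dist_eq_norm]) hs)⟩
  · have hl : 1 / ((l : ℝ) + 1) ≤ 1 := div_le_one_of_le₀ (by linarith [l.cast_nonneg (α := ℝ)])
      (by positivity)
    nlinarith [norm_le_of_mem_lipRegularization hne hgrowth hz, norm_nonneg p]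

/-- Continuous embedding: any SAM is approximated from above by a decreasing
sequence of continuous set-valued maps with nonempty convex compact values, with uniformly
bounded linear-growth constants, whose intersection is the SAM itself. -/
theorem sam_continuous_embedding
    (d₁ d₂ k : ℕ) (hd₁ : 0 < d₁) (hd₂ : 0 < d₂) (hk : 0 < k)
    (S : Type) [MetricSpace S] [CompactSpace S]
    (F : (Euc d₁ × Euc d₂) → S → Set (Euc k))
    (hFne : ∀ p s, (F p s).Nonempty)
    (hFconv : ∀ p s, Convex ℝ (F p s))
    (hFcomp : ∀ p s, IsCompact (F p s))
    (hFgraph : ∀ (p : Euc d₁ × Euc d₂) (s : S) (pn : ℕ → Euc d₁ × Euc d₂) (sn : ℕ → S)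
      (zn : ℕ → Euc k) (z : Euc k),
      Tendsto pn atTop (𝓝 p) → Tendsto sn atTop (𝓝 s) →
      (∀ n, zn n ∈ F (pn n) (sn n)) → Tendsto zn atTop (𝓝 z) → z ∈ F p s)
    (K : ℝ) (hK : 0 < K)
    (hFbd : ∀ p s, ∀ z ∈ F p s, ‖z‖ ≤ K * (1 + ‖p‖)) :
    ∃ (G : ℕ → (Euc d₁ × Euc d₂) → S → Set (Euc k)) (Kl : ℕ → ℝ),
      -- nonempty convex compact values
      (∀ l p s, (G l p s).Nonempty ∧ Convex ℝ (G l p s) ∧ IsCompact (G l p s)) ∧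
      -- each G l is a continuous set-valued map (Hausdorff sense)
      (∀ (l : ℕ) (p₀ : Euc d₁ × Euc d₂) (s₀ : S), ∀ ε > (0 : ℝ), ∃ δ > (0 : ℝ),
        ∀ (p : Euc d₁ × Euc d₂) (s : S), ‖p - p₀‖ < δ → dist s s₀ < δ →
          G l p s ⊆ G l p₀ s₀ + closedBall (0 : Euc k) ε ∧
          G l p₀ s₀ ⊆ G l p s + closedBall (0 : Euc k) ε) ∧
      -- decreasing nesting containing F
      (∀ l p s, F p s ⊆ G (l + 1) p s ∧ G (l + 1) p s ⊆ G l p s) ∧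
      -- positive growth constants, uniformly bounded
      (∀ l, 0 < Kl l) ∧ (∃ Ktil : ℝ, ∀ l, Kl l ≤ Ktil) ∧
      (∀ l p s, ∀ z ∈ G l p s, ‖z‖ ≤ Kl l * (1 + ‖p‖)) ∧
      -- intersection recovers F
      (∀ p s, (⋂ l : ℕ, G l p s) = F p s) :=
  sam_continuous_embedding_general d₁ d₂ k S F hFne hFconv hFcomp hFgraph K hK hFbd
end

section
/- For any SAM F : ℝ^d × S → {subsets of ℝ^k} there exists a sequence of continuous single-valued maps f^{(l)} : ℝ^d × S × U → ℝ^k, l ≥ 1, such that: (i) for every (x,y,s), F(x,y,s) ⊆ f^{(l+1)}(x,y,s,U) ⊆ f^{(l)}(x,y,s,U), where f^{(l)}(x,y,s,U) := {f^{(l)}(x,y,s,u) : u ∈ U}, and each image f^{(l)}(x,y,s,U) is a convex compact subset of ℝ^k; (ii) there exist constants K^{(l)} > 0 with ‖f^{(l)}(x,y,s,u)‖ ≤ K^{(l)}(1+‖(x,y)‖) for all (x,y,s,u); and furthermore ⋂_{l≥1} f^{(l)}(x,y,s,U) = F(x,y,s) for every (x,y,s). -/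
open MeasureTheory Metric Filter Topology
open scoped Pointwise NNReal ENNReal RealInnerProductSpace

/-!
Over a compact base, with values in a fixed ball, glue by a partition of unity subordinate to
`δ`-balls the closed convex hulls of `F` over balls of radius `2δ`. The resulting convex compact
sets move continuously in the Hausdorff metric, lie between the hulls over balls of radius `δ` and
`3δ` (hence decrease along `δ = 3⁻ˡ`), and shrink to `F` because a map with closed graph and
bounded values is upper semicontinuous. The metric projection onto them, precomposed with
`u ↦ K • u`, parametrizes them continuously by the unit ball: the projection is jointly continuous
in the point and the set. The general case reduces to this one by transporting `F` to the closed
unit ball along `p ↦ (1 + ‖p‖)⁻¹ • p` and damping it by the same factor.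
-/

open Set

lemma le_add_sqrt_of_sq_le_add_mul {m b c : ℝ} (hb : 0 ≤ b) (hc : 0 ≤ c)
    (h : m ^ 2 ≤ c + b * m) : m ≤ b + √c := by
  nlinarith [Real.sq_sqrt hc, Real.sqrt_nonneg c]

lemma IsCompact.exists_dist_le_hausdorffDist {α : Type*} [PseudoMetricSpace α] {s t : Set α}
    (hs : IsCompact s) (ht : IsCompact t) (hne : t.Nonempty) {x : α} (hx : x ∈ s) :
    ∃ y ∈ t, dist x y ≤ hausdorffDist s t := by
  obtain ⟨y, hy, hxy⟩ := ht.exists_infDist_eq_dist hne x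
  refine ⟨y, hy, hxy ▸ infDist_le_hausdorffDist_of_mem hx ?_⟩
  exact hausdorffEDist_ne_top_of_nonempty_of_bounded ⟨x, hx⟩ hne hs.isBounded ht.isBounded

section ConvexProjection

variable {E : Type*} [NormedAddCommGroup E] [InnerProductSpace ℝ E]

/-- The metric projection onto `C`, defined through its variational characterisation; it is a
junk value unless `C` is nonempty, complete and convex. -/
noncomputable def convexProj (C : Set E) (x : E) : E :=
  Classical.epsilon fun v => v ∈ C ∧ ∀ w ∈ C, ⟪x - v, w - v⟫ ≤ 0

variable {C D : Set E}

lemma convexProj_spec (hne : C.Nonempty) (hC : IsComplete C) (hconv : Convex ℝ C) (x : E) :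
    convexProj C x ∈ C ∧ ∀ w ∈ C, ⟪x - convexProj C x, w - convexProj C x⟫ ≤ 0 := by
  obtain ⟨v, hv, hmin⟩ := exists_norm_eq_iInf_of_complete_convex hne hC hconv x
  exact Classical.epsilon_spec (p := fun v => v ∈ C ∧ ∀ w ∈ C, ⟪x - v, w - v⟫ ≤ 0)
    ⟨v, hv, (norm_eq_iInf_iff_real_inner_le_zero hconv hv).1 hmin⟩

lemma convexProj_eq_self (hne : C.Nonempty) (hC : IsComplete C) (hconv : Convex ℝ C) {z : E}
    (hz : z ∈ C) : convexProj C z = z := by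
  have h := (convexProj_spec hne hC hconv z).2 z hz
  exact (sub_eq_zero.mp (real_inner_self_nonpos.mp h)).symm

lemma image_convexProj_of_subset (hne : C.Nonempty) (hC : IsComplete C) (hconv : Convex ℝ C)
    {s : Set E} (hCs : C ⊆ s) : convexProj C '' s = C := by
  refine Subset.antisymm (image_subset_iff.2 fun x _ => (convexProj_spec hne hC hconv x).1) ?_
  exact fun z hz => ⟨z, hCs hz, convexProj_eq_self hne hC hconv hz⟩

lemma norm_sub_convexProj_le (hne : C.Nonempty) (hC : IsComplete C) (hconv : Convex ℝ C)
    {R : ℝ} (hCR : C ⊆ closedBall 0 R) (x : E) : ‖x - convexProj C x‖ ≤ ‖x‖ + R :=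
  (norm_sub_le _ _).trans <| add_le_add le_rfl <|
    mem_closedBall_zero_iff.1 (hCR (convexProj_spec hne hC hconv x).1)

lemma sq_norm_convexProj_sub_convexProj_le (hCne : C.Nonempty) (hC : IsCompact C)
    (hCconv : Convex ℝ C) (hDne : D.Nonempty) (hD : IsCompact D) (hDconv : Convex ℝ D) (x y : E) :
    ‖convexProj C x - convexProj D y‖ ^ 2 ≤
      hausdorffDist C D * (‖x - convexProj C x‖ + ‖y - convexProj D y‖) +
        ‖x - y‖ * ‖convexProj C x - convexProj D y‖ := by
  obtain ⟨ha, hvi⟩ := convexProj_spec hCne hC.isComplete hCconv x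
  obtain ⟨hb, hvi'⟩ := convexProj_spec hDne hD.isComplete hDconv y
  set a := convexProj C x
  set b := convexProj D y
  obtain ⟨b', hb', hbb'⟩ := hD.exists_dist_le_hausdorffDist hC hCne hb
  obtain ⟨a', ha', haa'⟩ := hC.exists_dist_le_hausdorffDist hD hDne ha
  rw [hausdorffDist_comm] at hbb'
  rw [dist_eq_norm] at hbb' haa'
  have expand : ‖a - b‖ ^ 2 = ⟪x - a, b - a⟫ + ⟪x - y, a - b⟫ + ⟪y - b, a - b⟫ := by
    rw [← real_inner_self_eq_norm_sq]
    simp only [inner_sub_left, inner_sub_right]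
    ring
  have e1 : ⟪x - a, b - a⟫ ≤ ‖x - a‖ * hausdorffDist C D := by
    have := real_inner_le_norm (x - a) (b - b')
    rw [show b - a = (b' - a) + (b - b') by abel, inner_add_right]
    nlinarith [hvi b' hb', norm_nonneg (x - a)]
  have e2 : ⟪y - b, a - b⟫ ≤ ‖y - b‖ * hausdorffDist C D := by
    have := real_inner_le_norm (y - b) (a - a')
    rw [show a - b = (a' - b) + (a - a') by abel, inner_add_right]
    nlinarith [hvi' a' ha', norm_nonneg (y - b)]
  nlinarith [real_inner_le_norm (x - y) (a - b)]

theorem continuous_convexProj {X : Type*} [TopologicalSpace X] {G : X → Set E} {R : ℝ}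
    (hne : ∀ x, (G x).Nonempty) (hG : ∀ x, IsCompact (G x)) (hconv : ∀ x, Convex ℝ (G x))
    (hR : ∀ x, G x ⊆ closedBall 0 R)
    (hcont : ∀ x₀, Tendsto (fun x => hausdorffDist (G x) (G x₀)) (𝓝 x₀) (𝓝 0)) :
    Continuous fun q : X × E => convexProj (G q.1) q.2 := by
  refine continuous_iff_continuousAt.2 fun ⟨x₀, v₀⟩ => ?_
  rw [ContinuousAt, tendsto_iff_norm_sub_tendsto_zero]
  set bound : X × E → ℝ := fun q =>
    ‖q.2 - v₀‖ + √(hausdorffDist (G q.1) (G x₀) * (‖q.2‖ + R + (‖v₀‖ + R)))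
  have hbound : Tendsto bound (𝓝 (x₀, v₀)) (𝓝 0) := by
    have h1 : Tendsto (fun q : X × E => ‖q.2 - v₀‖) (𝓝 (x₀, v₀)) (𝓝 0) :=
      (continuous_snd.sub continuous_const).norm.tendsto' (x₀, v₀) 0 (by simp)
    have h2 : Tendsto (fun q : X × E =>
        hausdorffDist (G q.1) (G x₀) * (‖q.2‖ + R + (‖v₀‖ + R))) (𝓝 (x₀, v₀)) (𝓝 0) := by
      simpa using ((hcont x₀).comp (continuous_fst.tendsto (x₀, v₀))).mul
        (((continuous_snd.norm.add continuous_const).add continuous_const).tendsto (x₀, v₀))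
    simpa [bound] using h1.add h2.sqrt
  refine squeeze_zero (fun _ => norm_nonneg _) (fun q => ?_) hbound
  have hq := norm_sub_convexProj_le (hne q.1) (hG q.1).isComplete (hconv q.1) (hR q.1) q.2
  have h₀ := norm_sub_convexProj_le (hne x₀) (hG x₀).isComplete (hconv x₀) (hR x₀) v₀
  have hA : 0 ≤ ‖q.2‖ + R + (‖v₀‖ + R) :=
    (add_nonneg (norm_nonneg _) (norm_nonneg _)).trans (add_le_add hq h₀)
  refine le_add_sqrt_of_sq_le_add_mul (norm_nonneg _) (mul_nonneg hausdorffDist_nonneg hA) ?_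
  calc _ ≤ _ := sq_norm_convexProj_sub_convexProj_le (hne q.1) (hG q.1) (hconv q.1)
          (hne x₀) (hG x₀) (hconv x₀) q.2 v₀
    _ ≤ _ := by gcongr; exact hausdorffDist_nonneg

lemma range_convexProj_smul (hne : C.Nonempty) (hC : IsComplete C) (hconv : Convex ℝ C)
    {K : ℝ} (hK : 0 ≤ K) (hCK : C ⊆ closedBall 0 K) :
    range (fun u : closedBall (0 : E) 1 => convexProj C (K • (u : E))) = C := by
  have hball : range (fun u : closedBall (0 : E) 1 => K • (u : E)) = closedBall 0 K := by
    rw [range_smul, Subtype.range_coe, _root_.smul_closedBall _ _ zero_le_one, smul_zero,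
      Real.norm_of_nonneg hK, mul_one]
  change range (convexProj C ∘ fun u : closedBall (0 : E) 1 => K • (u : E)) = C
  rw [range_comp, hball]
  exact image_convexProj_of_subset hne hC hconv hCK

end ConvexProjection

section FinsetSumSmul

variable {ι E : Type*}

lemma isCompact_finsetSum [AddCommMonoid E] [TopologicalSpace E] [ContinuousAdd E]
    {T : Finset ι} {A : ι → Set E} (h : ∀ i ∈ T, IsCompact (A i)) :
    IsCompact (∑ i ∈ T, A i) := by
  classical
  induction T using Finset.induction_on with
  | empty => simp
  | insert i T hi ih =>
    rw [Finset.sum_insert hi]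
    exact (h i (Finset.mem_insert_self i T)).add (ih fun j hj => h j (Finset.mem_insert_of_mem hj))

variable [NormedAddCommGroup E] [NormedSpace ℝ E] {T : Finset ι} {ψ : ι → ℝ} {A : ι → Set E}

lemma sum_smul_mem_finsetSum_smul (hA : ∀ i ∈ T, (A i).Nonempty) {z : E}
    (hz : ∀ i ∈ T, ψ i ≠ 0 → z ∈ A i) : (∑ i ∈ T, ψ i) • z ∈ ∑ i ∈ T, ψ i • A i := by
  rw [Finset.sum_smul]
  refine finsetSum_mem_finsetSum T _ _ fun i hi => ?_
  by_cases h : ψ i = 0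
  · simp [h, zero_smul_set (hA i hi)]
  · exact smul_mem_smul_set (hz i hi h)

lemma finsetSum_smul_subset_sum_smul {D : Set E} (hψ : ∀ i ∈ T, 0 ≤ ψ i)
    (hA : ∀ i ∈ T, (A i).Nonempty) (hD : Convex ℝ D) (hDne : D.Nonempty)
    (hAD : ∀ i ∈ T, ψ i ≠ 0 → A i ⊆ D) : ∑ i ∈ T, ψ i • A i ⊆ (∑ i ∈ T, ψ i) • D := by
  classical
  induction T using Finset.induction_on with
  | empty => simp [zero_smul_set hDne]
  | insert i T hi ih =>
    simp only [Finset.forall_mem_insert] at hψ hA hAD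
    rw [Finset.sum_insert hi, Finset.sum_insert hi,
      hD.add_smul hψ.1 (Finset.sum_nonneg hψ.2)]
    refine add_subset_add ?_ (ih hψ.2 hA.2 hAD.2)
    by_cases h : ψ i = 0
    · simp [h, zero_smul_set hA.1, zero_smul_set hDne]
    · exact smul_set_mono (hAD.1 h)

lemma exists_norm_sub_le_of_mem_finsetSum_smul (a b : ι → ℝ) {M : ℝ}
    (hM : ∀ i ∈ T, A i ⊆ closedBall 0 M) {z : E} (hz : z ∈ ∑ i ∈ T, a i • A i) :
    ∃ w ∈ ∑ i ∈ T, b i • A i, ‖z - w‖ ≤ ∑ i ∈ T, |a i - b i| * M := by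
  classical
  obtain ⟨g, hg, rfl⟩ := (mem_finsetSum T _ z).mp hz
  have hc : ∀ i, ∃ c : E, i ∈ T → c ∈ A i ∧ a i • c = g i := fun i => by
    by_cases hi : i ∈ T
    · obtain ⟨c, hc, hgc⟩ := mem_smul_set.mp (hg hi)
      exact ⟨c, fun _ => ⟨hc, hgc⟩⟩
    · exact ⟨0, fun h => absurd h hi⟩
  choose c hc using hc
  refine ⟨∑ i ∈ T, b i • c i,
    finsetSum_mem_finsetSum T _ _ fun i hi => smul_mem_smul_set (hc i hi).1, ?_⟩
  rw [← Finset.sum_sub_distrib]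
  refine (norm_sum_le _ _).trans (Finset.sum_le_sum fun i hi => ?_)
  rw [← (hc i hi).2, ← sub_smul, norm_smul, Real.norm_eq_abs]
  exact mul_le_mul_of_nonneg_left (mem_closedBall_zero_iff.1 (hM i hi (hc i hi).1)) (abs_nonneg _)

lemma hausdorffDist_finsetSum_smul_le (a b : ι → ℝ) (hA : ∀ i ∈ T, (A i).Nonempty) {M : ℝ}
    (hM : ∀ i ∈ T, A i ⊆ closedBall 0 M) :
    hausdorffDist (∑ i ∈ T, a i • A i) (∑ i ∈ T, b i • A i) ≤ ∑ i ∈ T, |a i - b i| * M := by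
  have hM₀ : ∀ i ∈ T, 0 ≤ M := fun i hi =>
    have ⟨c, hc⟩ := hA i hi
    (norm_nonneg c).trans (mem_closedBall_zero_iff.1 (hM i hi hc))
  refine hausdorffDist_le_of_mem_dist
    (Finset.sum_nonneg fun i hi => mul_nonneg (abs_nonneg _) (hM₀ i hi)) (fun z hz => ?_)
    (fun z hz => ?_)
  · simpa [dist_eq_norm] using exists_norm_sub_le_of_mem_finsetSum_smul a b hM hz
  · simpa [dist_eq_norm, abs_sub_comm] using exists_norm_sub_le_of_mem_finsetSum_smul b a hM hz

end FinsetSumSmul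

section LocalHull

variable {X E : Type*} [PseudoMetricSpace X] [NormedAddCommGroup E] [NormedSpace ℝ E]
  {F : X → Set E}

noncomputable def localHull (F : X → Set E) (x : X) (r : ℝ) : Set E :=
  closure (convexHull ℝ (⋃ y ∈ closedBall x r, F y))

lemma subset_localHull (x : X) {r : ℝ} (hr : 0 ≤ r) : F x ⊆ localHull F x r :=
  fun _ hz => subset_closure (subset_convexHull ℝ _ (mem_biUnion (mem_closedBall_self hr) hz))

lemma localHull_mono {x y : X} {r s : ℝ} (h : closedBall x r ⊆ closedBall y s) :
    localHull F x r ⊆ localHull F y s :=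
  closure_mono (convexHull_mono (biUnion_mono h fun _ _ => subset_rfl))

lemma convex_localHull (x : X) (r : ℝ) : Convex ℝ (localHull F x r) :=
  (convex_convexHull ℝ _).closure

lemma localHull_subset_of_forall {x : X} {r : ℝ} {D : Set E} (hD : Convex ℝ D) (hDc : IsClosed D)
    (h : ∀ y ∈ closedBall x r, F y ⊆ D) : localHull F x r ⊆ D :=
  closure_minimal (convexHull_min (iUnion₂_subset h) hD) hDc

lemma isCompact_localHull [ProperSpace E] {K : ℝ} (hK : ∀ y, F y ⊆ closedBall 0 K) (x : X)
    (r : ℝ) : IsCompact (localHull F x r) :=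
  (isCompact_closedBall 0 K).of_isClosed_subset isClosed_closure
    (localHull_subset_of_forall (convex_closedBall 0 K) isClosed_closedBall fun y _ => hK y)

lemma exists_localHull_subset_cthickening [ProperSpace E] {K : ℝ}
    (hgraph : IsClosed {q : X × E | q.2 ∈ F q.1}) (hK : ∀ y, F y ⊆ closedBall 0 K)
    {x : X} (hconv : Convex ℝ (F x)) {γ : ℝ} (hγ : 0 < γ) :
    ∃ ρ > 0, localHull F x ρ ⊆ cthickening γ (F x) := by
  have htube : {x} ×ˢ closedBall (0 : E) K ⊆
      {q : X × E | q.2 ∈ F q.1}ᶜ ∪ univ ×ˢ thickening γ (F x) := by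
    rintro ⟨y, z⟩ ⟨rfl, -⟩
    by_cases hz : z ∈ F y
    · exact Or.inr ⟨trivial, self_subset_thickening hγ _ hz⟩
    · exact Or.inl hz
  obtain ⟨u, v, hu, -, hxu, hKv, huv⟩ := generalized_tube_lemma isCompact_singleton
    (isCompact_closedBall 0 K) (hgraph.isOpen_compl.union (isOpen_univ.prod isOpen_thickening))
    htube
  obtain ⟨ρ, hρ, hball⟩ := Metric.isOpen_iff.1 hu x (hxu rfl)
  refine ⟨ρ / 2, half_pos hρ, localHull_subset_of_forall (hconv.cthickening γ)
    isClosed_cthickening fun y hy z hz => ?_⟩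
  have hyu : y ∈ u := hball (closedBall_subset_ball (half_lt_self hρ) hy)
  rcases huv (show (y, z) ∈ u ×ˢ v from ⟨hyu, hKv (hK y hz)⟩) with hnot | ⟨-, hthick⟩
  · exact absurd hz hnot
  · exact thickening_subset_cthickening γ _ hthick

lemma mem_of_forall_mem_localHull [ProperSpace E] {K : ℝ}
    (hgraph : IsClosed {q : X × E | q.2 ∈ F q.1}) (hK : ∀ y, F y ⊆ closedBall 0 K) {x : X}
    (hconv : Convex ℝ (F x)) {z : E} (hz : ∀ ρ > 0, z ∈ localHull F x ρ) : z ∈ F x := by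
  have hclosed : IsClosed (F x) := hgraph.preimage (continuous_const.prodMk continuous_id)
  rw [← hclosed.closure_eq, closure_eq_iInter_cthickening]
  refine mem_iInter₂.2 fun γ hγ => ?_
  obtain ⟨ρ, hρ, hsub⟩ := exists_localHull_subset_cthickening hgraph hK hconv hγ
  exact hsub (hz ρ hρ)

end LocalHull

structure BallPartitionOfUnity (X : Type*) [PseudoMetricSpace X] (δ : ℝ) where
  centers : Finset X
  toFun : X → X → ℝ
  continuous : ∀ i, Continuous (toFun i)
  nonneg : ∀ i x, 0 ≤ toFun i x
  sum_eq_one : ∀ x, ∑ i ∈ centers, toFun i x = 1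
  dist_lt : ∀ i x, toFun i x ≠ 0 → dist x i < δ

namespace BallPartitionOfUnity

variable {X E : Type*} [PseudoMetricSpace X] {δ : ℝ}

theorem nonempty [CompactSpace X] (hδ : 0 < δ) : Nonempty (BallPartitionOfUnity X δ) := by
  obtain ⟨t, -, ht, hcover⟩ := finite_cover_balls_of_compact (isCompact_univ (X := X)) hδ
  set θ : X → X → ℝ := fun i x => max (δ - dist x i) 0
  have hθ : ∀ x, 0 < ∑ i ∈ ht.toFinset, θ i x := fun x => by
    obtain ⟨i, hi, hxi⟩ := mem_iUnion₂.1 (hcover (mem_univ x))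
    exact Finset.sum_pos' (fun j _ => le_max_right _ _)
      ⟨i, ht.mem_toFinset.2 hi, lt_max_of_lt_left (sub_pos.2 hxi)⟩
  refine ⟨⟨ht.toFinset, fun i x => θ i x / ∑ j ∈ ht.toFinset, θ j x, fun i => ?_,
    fun i x => div_nonneg (le_max_right _ _) (hθ x).le,
    fun x => by rw [← Finset.sum_div, div_self (hθ x).ne'], fun i x h => ?_⟩⟩
  · have hcont : ∀ j, Continuous (θ j) := fun j =>
      (continuous_const.sub (continuous_id.dist continuous_const)).max continuous_const
    exact (hcont i).div (continuous_finsetSum _ fun j _ => hcont j) fun x => (hθ x).ne'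
  · by_contra hle
    exact h (by simp [θ, max_eq_right (sub_nonpos.2 (not_lt.1 hle))])

lemma pos (P : BallPartitionOfUnity X δ) (x : X) : 0 < δ := by
  obtain ⟨i, -, hi⟩ := Finset.exists_ne_zero_of_sum_ne_zero (P.sum_eq_one x ▸ one_ne_zero)
  exact dist_nonneg.trans_lt (P.dist_lt i x hi)

variable (P : BallPartitionOfUnity X δ) [NormedAddCommGroup E] [NormedSpace ℝ E] {F : X → Set E}

/-- The radius `2δ` is what puts `hullSum` between the local hulls of radii `δ` and `3δ`, so that
the choice `δ = 3⁻ˡ` makes the sequence decreasing. -/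
noncomputable def hullSum (F : X → Set E) (x : X) : Set E :=
  ∑ i ∈ P.centers, P.toFun i x • localHull F i (2 * δ)

lemma localHull_subset_hullSum (hne : ∀ y, (F y).Nonempty) (x : X) :
    localHull F x δ ⊆ P.hullSum F x := by
  intro z hz
  have hδ := P.pos x
  have h := sum_smul_mem_finsetSum_smul (T := P.centers) (ψ := fun i => P.toFun i x)
    (A := fun i => localHull F i (2 * δ))
    (fun i _ => (hne i).mono (subset_localHull i (by linarith)))
    fun i _ hi => localHull_mono (closedBall_subset_closedBall' (by linarith [P.dist_lt i x hi])) hz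
  rwa [P.sum_eq_one, one_smul] at h

lemma hullSum_subset_localHull (hne : ∀ y, (F y).Nonempty) (x : X) :
    P.hullSum F x ⊆ localHull F x (3 * δ) := by
  have hδ := P.pos x
  have h := finsetSum_smul_subset_sum_smul (T := P.centers) (ψ := fun i => P.toFun i x)
    (A := fun i => localHull F i (2 * δ)) (D := localHull F x (3 * δ))
    (fun i _ => P.nonneg i x) (fun i _ => (hne i).mono (subset_localHull i (by linarith)))
    (convex_localHull x _) ((hne x).mono (subset_localHull x (by linarith)))
    fun i _ hi => localHull_mono (closedBall_subset_closedBall' (by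
      rw [dist_comm]; linarith [P.dist_lt i x hi]))
  rwa [P.sum_eq_one, one_smul] at h

lemma convex_hullSum (x : X) : Convex ℝ (P.hullSum F x) :=
  convex_sum _ fun i _ => (convex_localHull i _).smul _

lemma isCompact_hullSum [ProperSpace E] {K : ℝ} (hK : ∀ y, F y ⊆ closedBall 0 K) (x : X) :
    IsCompact (P.hullSum F x) :=
  isCompact_finsetSum fun i _ => (isCompact_localHull hK i _).smul _

lemma tendsto_hausdorffDist_hullSum (hne : ∀ y, (F y).Nonempty) {K : ℝ}
    (hK : ∀ y, F y ⊆ closedBall 0 K) (x₀ : X) :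
    Tendsto (fun x => hausdorffDist (P.hullSum F x) (P.hullSum F x₀)) (𝓝 x₀) (𝓝 0) := by
  have hδ := P.pos x₀
  have hbound : Tendsto (fun x => ∑ i ∈ P.centers, |P.toFun i x - P.toFun i x₀| * K)
      (𝓝 x₀) (𝓝 0) := by
    have hcont : Continuous fun x => ∑ i ∈ P.centers, |P.toFun i x - P.toFun i x₀| * K :=
      continuous_finsetSum _ fun i _ => ((P.continuous i).sub continuous_const).abs.mul
        continuous_const
    simpa using hcont.tendsto x₀
  refine squeeze_zero (fun _ => hausdorffDist_nonneg) (fun x => ?_) hbound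
  exact hausdorffDist_finsetSum_smul_le _ _
    (fun i _ => (hne i).mono (subset_localHull i (by linarith)))
    fun i _ => localHull_subset_of_forall (convex_closedBall 0 K) isClosed_closedBall
      fun y _ => hK y

end BallPartitionOfUnity

structure IsDecreasingParametrization {X E : Type*} [TopologicalSpace X] [NormedAddCommGroup E]
    [NormedSpace ℝ E] (F : X → Set E) (f : ℕ → X → closedBall (0 : E) 1 → E) : Prop where
  continuous : ∀ l, Continuous fun q : X × closedBall (0 : E) 1 => f l q.1 q.2
  subset_range : ∀ l x, F x ⊆ range (f l x)
  range_succ_subset : ∀ l x, range (f (l + 1) x) ⊆ range (f l x)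
  convex_range : ∀ l x, Convex ℝ (range (f l x))
  isCompact_range : ∀ l x, IsCompact (range (f l x))
  iInter_range : ∀ x, ⋂ l, range (f l x) = F x

theorem isDecreasingParametrization_convexProj {X E : Type*} [TopologicalSpace X]
    [NormedAddCommGroup E] [InnerProductSpace ℝ E] {F : X → Set E} {G : ℕ → X → Set E} {K : ℝ}
    (hK : 0 ≤ K) (hne : ∀ l x, (G l x).Nonempty) (hG : ∀ l x, IsCompact (G l x))
    (hconv : ∀ l x, Convex ℝ (G l x)) (hGK : ∀ l x, G l x ⊆ closedBall 0 K)
    (hcont : ∀ l x₀, Tendsto (fun x => hausdorffDist (G l x) (G l x₀)) (𝓝 x₀) (𝓝 0))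
    (hFG : ∀ l x, F x ⊆ G l x) (hanti : ∀ l x, G (l + 1) x ⊆ G l x)
    (hinter : ∀ x, ⋂ l, G l x ⊆ F x) :
    IsDecreasingParametrization F fun l x u => convexProj (G l x) (K • (u : E)) := by
  have hrange : ∀ l x, range (fun u : closedBall (0 : E) 1 => convexProj (G l x) (K • (u : E)))
      = G l x := fun l x =>
    range_convexProj_smul (hne l x) (hG l x).isComplete (hconv l x) hK (hGK l x)
  refine ⟨fun l => ?_, fun l x => ?_, fun l x => ?_, fun l x => ?_, fun l x => ?_, fun x => ?_⟩
  · exact (continuous_convexProj (hne l) (hG l) (hconv l) (hGK l) (hcont l)).comp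
      (continuous_fst.prodMk (continuous_const.smul (continuous_subtype_val.comp continuous_snd)))
  · exact (hrange l x).symm ▸ hFG l x
  · exact (hrange l x).symm ▸ (hrange (l + 1) x).symm ▸ hanti l x
  · exact (hrange l x).symm ▸ hconv l x
  · exact (hrange l x).symm ▸ hG l x
  · simp only [hrange]
    exact (hinter x).antisymm (subset_iInter fun l => hFG l x)

theorem exists_isDecreasingParametrization_of_compactSpace {X E : Type*} [PseudoMetricSpace X]
    [CompactSpace X] [NormedAddCommGroup E] [InnerProductSpace ℝ E] [ProperSpace E]
    {F : X → Set E} (hne : ∀ x, (F x).Nonempty) (hconv : ∀ x, Convex ℝ (F x))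
    (hgraph : IsClosed {q : X × E | q.2 ∈ F q.1}) {K : ℝ} (hK : 0 ≤ K)
    (hFK : ∀ x, F x ⊆ closedBall 0 K) :
    ∃ f, IsDecreasingParametrization F f ∧ ∀ l x u, ‖f l x u‖ ≤ K := by
  have hδ : ∀ l : ℕ, 0 < (3⁻¹ : ℝ) ^ l := fun l => by positivity
  let P : ∀ l : ℕ, BallPartitionOfUnity X ((3⁻¹ : ℝ) ^ l) :=
    fun l => (BallPartitionOfUnity.nonempty (hδ l)).some
  have hGK : ∀ l x, (P l).hullSum F x ⊆ closedBall 0 K := fun l x =>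
    ((P l).hullSum_subset_localHull hne x).trans <| localHull_subset_of_forall
      (convex_closedBall 0 K) isClosed_closedBall fun y _ => hFK y
  have hFG : ∀ l x, F x ⊆ (P l).hullSum F x := fun l x =>
    (subset_localHull x (hδ l).le).trans ((P l).localHull_subset_hullSum hne x)
  have hGne : ∀ l x, ((P l).hullSum F x).Nonempty := fun l x => (hne x).mono (hFG l x)
  have hGcomp : ∀ l x, IsCompact ((P l).hullSum F x) := fun l => (P l).isCompact_hullSum hFK
  have hGconv : ∀ l x, Convex ℝ ((P l).hullSum F x) := fun l => (P l).convex_hullSum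
  refine ⟨_, isDecreasingParametrization_convexProj hK hGne hGcomp hGconv hGK
    (fun l => (P l).tendsto_hausdorffDist_hullSum hne hFK) hFG (fun l x => ?_) (fun x => ?_),
    fun l x u => mem_closedBall_zero_iff.1
      (hGK l x (convexProj_spec (hGne l x) (hGcomp l x).isComplete (hGconv l x) _).1)⟩
  · have h3 : 3 * (3⁻¹ : ℝ) ^ (l + 1) = (3⁻¹) ^ l := by ring
    exact ((P (l + 1)).hullSum_subset_localHull hne x).trans <|
      (localHull_mono (closedBall_subset_closedBall h3.le)).trans
        ((P l).localHull_subset_hullSum hne x)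
  · intro z hz
    refine mem_of_forall_mem_localHull hgraph hFK (hconv x) fun ρ hρ => ?_
    obtain ⟨l, hl⟩ := exists_pow_lt_of_lt_one (div_pos hρ three_pos) (by norm_num : (3⁻¹ : ℝ) < 1)
    refine localHull_mono (r := 3 * (3⁻¹ : ℝ) ^ l) (closedBall_subset_closedBall (by linarith)) ?_
    exact (P l).hullSum_subset_localHull hne x (mem_iInter.1 hz l)

theorem IsDecreasingParametrization.comp_smul {X Y E : Type*} [TopologicalSpace X]
    [TopologicalSpace Y] [NormedAddCommGroup E] [NormedSpace ℝ E] {G : X → Set E}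
    {g : ℕ → X → closedBall (0 : E) 1 → E} (hg : IsDecreasingParametrization G g)
    {F : Y → Set E} {ι : Y → X} (hι : Continuous ι) {c : Y → ℝ} (hc : Continuous c)
    (hc₀ : ∀ y, c y ≠ 0) (hF : ∀ y, F y = c y • G (ι y)) :
    IsDecreasingParametrization F fun l y u => c y • g l (ι y) u := by
  have hrange : ∀ l y, range (fun u => c y • g l (ι y) u) = c y • range (g l (ι y)) :=
    fun l y => range_smul _ _
  refine ⟨fun l => ?_, fun l y => ?_, fun l y => ?_, fun l y => ?_, fun l y => ?_, fun y => ?_⟩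
  · exact (hc.comp continuous_fst).smul
      ((hg.continuous l).comp ((hι.comp continuous_fst).prodMk continuous_snd))
  · rw [hrange, hF]
    exact smul_set_mono (hg.subset_range l (ι y))
  · rw [hrange, hrange]
    exact smul_set_mono (hg.range_succ_subset l (ι y))
  · rw [hrange]
    exact (hg.convex_range l (ι y)).smul _
  · rw [hrange]
    exact (hg.isCompact_range l (ι y)).smul _
  · simp only [hrange, ← image_smul]
    rw [← image_iInter (MulAction.bijective₀ (hc₀ y)), hg.iInter_range, hF, image_smul]

section Compactification

variable {V S E : Type*} [NormedAddCommGroup V] [NormedSpace ℝ V] [NormedAddCommGroup E]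
  [NormedSpace ℝ E] {F : V × S → Set E} {K : ℝ}

/-- The map `F` transported to the open unit ball along `p ↦ (1 + ‖p‖)⁻¹ • p`, whose inverse is
`q ↦ (1 - ‖q‖)⁻¹ • q`, and damped by the same factor so that linear growth becomes boundedness;
on the unit sphere it is the whole ball of radius `K`, which keeps the graph closed. -/
noncomputable def compactifiedMap (F : V × S → Set E) (K : ℝ) (y : V × S) : Set E :=
  if ‖y.1‖ < 1 then (1 - ‖y.1‖) • F ((1 - ‖y.1‖)⁻¹ • y.1, y.2) else closedBall 0 K

lemma norm_radial_lt_one (p : V) : ‖(1 + ‖p‖)⁻¹ • p‖ < 1 := by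
  rw [norm_smul, norm_inv, Real.norm_of_nonneg (by positivity), inv_mul_lt_one₀ (by positivity)]
  linarith

lemma compactifiedMap_radial (p : V) (s : S) :
    compactifiedMap F K ((1 + ‖p‖)⁻¹ • p, s) = (1 + ‖p‖)⁻¹ • F (p, s) := by
  have hp : 1 - ‖(1 + ‖p‖)⁻¹ • p‖ = (1 + ‖p‖)⁻¹ := by
    rw [norm_smul, norm_inv, Real.norm_of_nonneg (by positivity)]
    field_simp
    ring
  rw [compactifiedMap, if_pos (norm_radial_lt_one p), hp, inv_inv, smul_smul,
    mul_inv_cancel₀ (by positivity), one_smul]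

lemma compactifiedMap_subset_closedBall (hF : ∀ y, F y ⊆ closedBall 0 (K * (1 + ‖y.1‖)))
    (y : V × S) : compactifiedMap F K y ⊆ closedBall 0 K := by
  unfold compactifiedMap
  split_ifs with hy
  · rintro _ ⟨w, hw, rfl⟩
    have hw' := mem_closedBall_zero_iff.1 (hF _ hw)
    have ht : 0 < 1 - ‖y.1‖ := by linarith
    rw [norm_smul, norm_inv, Real.norm_of_nonneg ht.le] at hw'
    rw [mem_closedBall_zero_iff, norm_smul, Real.norm_of_nonneg ht.le]
    calc (1 - ‖y.1‖) * ‖w‖ ≤ (1 - ‖y.1‖) * (K * (1 + (1 - ‖y.1‖)⁻¹ * ‖y.1‖)) := by gcongr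
      _ = K := by field_simp; ring
  · exact subset_rfl

lemma compactifiedMap_nonempty (hK : 0 ≤ K) (hne : ∀ y, (F y).Nonempty) (y : V × S) :
    (compactifiedMap F K y).Nonempty := by
  unfold compactifiedMap
  split_ifs
  exacts [(hne _).smul_set, nonempty_closedBall.2 hK]

lemma convex_compactifiedMap (hconv : ∀ y, Convex ℝ (F y)) (y : V × S) :
    Convex ℝ (compactifiedMap F K y) := by
  unfold compactifiedMap
  split_ifs
  exacts [(hconv _).smul _, convex_closedBall 0 K]

/-- Off the graph, a point either lies over the open ball, where the graph is the preimage of the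
graph of `F` under a map continuous there, or has norm larger than `K`. -/
lemma isClosed_graph_compactifiedMap [TopologicalSpace S]
    (hF : ∀ y, F y ⊆ closedBall 0 (K * (1 + ‖y.1‖)))
    (hgraph : IsClosed {q : (V × S) × E | q.2 ∈ F q.1}) :
    IsClosed {q : (V × S) × E | q.2 ∈ compactifiedMap F K q.1} := by
  set Φ : (V × S) × E → (V × S) × E := fun q =>
    (((1 - ‖q.1.1‖)⁻¹ • q.1.1, q.1.2), (1 - ‖q.1.1‖)⁻¹ • q.2)
  have hΦ : ContinuousOn Φ {q | ‖q.1.1‖ < 1} := by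
    have hinv : ContinuousOn (fun q : (V × S) × E => (1 - ‖q.1.1‖)⁻¹) {q | ‖q.1.1‖ < 1} :=
      (continuous_const.sub continuous_fst.fst.norm).continuousOn.inv₀ fun q hq =>
        (sub_pos.2 hq).ne'
    exact ((hinv.smul continuous_fst.fst.continuousOn).prodMk
      continuous_fst.snd.continuousOn).prodMk (hinv.smul continuous_snd.continuousOn)
  have hcompl : {q : (V × S) × E | q.2 ∈ compactifiedMap F K q.1}ᶜ =
      ({q | ‖q.1.1‖ < 1} ∩ Φ ⁻¹' {q | q.2 ∈ F q.1}ᶜ) ∪ {q | K < ‖q.2‖} := by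
    ext ⟨y, z⟩
    simp only [mem_compl_iff, mem_ofPred_eq, mem_union, mem_inter_iff, mem_preimage, Φ]
    constructor
    · intro hz
      by_cases hy : ‖y.1‖ < 1
      · rw [compactifiedMap, if_pos hy, mem_smul_set_iff_inv_smul_mem₀ (sub_pos.2 hy).ne'] at hz
        exact Or.inl ⟨hy, hz⟩
      · rw [compactifiedMap, if_neg hy, mem_closedBall_zero_iff, not_le] at hz
        exact Or.inr hz
    · rintro (⟨hy, hz⟩ | hz) hmem
      · rw [compactifiedMap, if_pos hy, mem_smul_set_iff_inv_smul_mem₀ (sub_pos.2 hy).ne'] at hmem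
        exact hz hmem
      · exact not_lt.2 (mem_closedBall_zero_iff.1 (compactifiedMap_subset_closedBall hF y hmem)) hz
  rw [← isOpen_compl_iff, hcompl]
  exact (hΦ.isOpen_inter_preimage (isOpen_lt continuous_fst.fst.norm continuous_const)
    hgraph.isOpen_compl).union (isOpen_lt continuous_const continuous_snd.norm)

end Compactification

theorem exists_isDecreasingParametrization_of_linearGrowth {V S E : Type*}
    [NormedAddCommGroup V] [NormedSpace ℝ V] [ProperSpace V] [PseudoMetricSpace S]
    [CompactSpace S] [NormedAddCommGroup E] [InnerProductSpace ℝ E] [ProperSpace E]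
    {F : V × S → Set E} (hne : ∀ y, (F y).Nonempty) (hconv : ∀ y, Convex ℝ (F y))
    (hgraph : IsClosed {q : (V × S) × E | q.2 ∈ F q.1}) {K : ℝ} (hK : 0 ≤ K)
    (hF : ∀ y, F y ⊆ closedBall 0 (K * (1 + ‖y.1‖))) :
    ∃ f, IsDecreasingParametrization F f ∧ ∀ l y u, ‖f l y u‖ ≤ K * (1 + ‖y.1‖) := by
  have : CompactSpace (closedBall (0 : V) 1) :=
    isCompact_iff_compactSpace.1 (isCompact_closedBall 0 1)
  set Fc : closedBall (0 : V) 1 × S → Set E := fun x => compactifiedMap F K (x.1, x.2)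
  have hgraphc : IsClosed {q : (closedBall (0 : V) 1 × S) × E | q.2 ∈ Fc q.1} :=
    (isClosed_graph_compactifiedMap hF hgraph).preimage <|
      ((continuous_subtype_val.comp continuous_fst.fst).prodMk continuous_fst.snd).prodMk
        continuous_snd
  obtain ⟨g, hg, hgK⟩ := exists_isDecreasingParametrization_of_compactSpace (F := Fc)
    (fun _ => compactifiedMap_nonempty hK hne _) (fun _ => convex_compactifiedMap hconv _)
    hgraphc hK fun _ => compactifiedMap_subset_closedBall hF _
  set ι : V × S → closedBall (0 : V) 1 × S := fun y =>
    (⟨(1 + ‖y.1‖)⁻¹ • y.1, mem_closedBall_zero_iff.2 (norm_radial_lt_one y.1).le⟩, y.2)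
  have hc : ∀ y : V × S, 0 < 1 + ‖y.1‖ := fun y => by positivity
  have hι : Continuous ι :=
    (((continuous_const.add continuous_fst.norm).inv₀ fun y => (hc y).ne').smul
      continuous_fst).subtype_mk _ |>.prodMk continuous_snd
  refine ⟨_, hg.comp_smul (c := fun y => 1 + ‖y.1‖) hι (continuous_const.add continuous_fst.norm)
    (fun y => (hc y).ne') fun y => ?_, fun l y u => ?_⟩
  · simp only [Fc, ι, compactifiedMap_radial, smul_smul]
    rw [mul_inv_cancel₀ (hc y).ne', one_smul]
  · rw [norm_smul, Real.norm_of_nonneg (hc y).le, mul_comm]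
    gcongr
    exact hgK l _ u

theorem sam_approximation_general
    (d₁ d₂ k : ℕ)
    (S : Type) [MetricSpace S] [CompactSpace S]
    (F : (Euc d₁ × Euc d₂) → S → Set (Euc k))
    (hFne : ∀ p s, (F p s).Nonempty)
    (hFconv : ∀ p s, Convex ℝ (F p s))
    (hFgraph : ∀ (p : Euc d₁ × Euc d₂) (s : S) (pn : ℕ → Euc d₁ × Euc d₂) (sn : ℕ → S)
      (zn : ℕ → Euc k) (z : Euc k),
      Tendsto pn atTop (𝓝 p) → Tendsto sn atTop (𝓝 s) →
      (∀ n, zn n ∈ F (pn n) (sn n)) → Tendsto zn atTop (𝓝 z) → z ∈ F p s)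
    (K : ℝ) (hK : 0 < K)
    (hFbd : ∀ p s, ∀ z ∈ F p s, ‖z‖ ≤ K * (1 + ‖p‖)) :
    ∃ (f : ℕ → (Euc d₁ × Euc d₂) → S → (closedBall (0 : Euc k) 1 : Set (Euc k)) → Euc k)
      (Kl : ℕ → ℝ),
      -- continuity of each parametrization
      (∀ l : ℕ, Continuous (fun q :
          (Euc d₁ × Euc d₂) × S × (closedBall (0 : Euc k) 1 : Set (Euc k)) =>
          f l q.1 q.2.1 q.2.2)) ∧
      -- (i) nesting of the images around F, and images convex compact
      (∀ l p s, F p s ⊆ Set.range (f (l + 1) p s) ∧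
        Set.range (f (l + 1) p s) ⊆ Set.range (f l p s)) ∧
      (∀ l p s, Convex ℝ (Set.range (f l p s)) ∧ IsCompact (Set.range (f l p s))) ∧
      -- (ii) growth bounds
      (∀ l, 0 < Kl l) ∧
      (∀ l p s u, ‖f l p s u‖ ≤ Kl l * (1 + ‖p‖)) ∧
      -- intersection of the images recovers F
      (∀ p s, (⋂ l : ℕ, Set.range (f l p s)) = F p s) := by
  have hgraph : IsClosed {q : ((Euc d₁ × Euc d₂) × S) × Euc k | q.2 ∈ F q.1.1 q.1.2} :=
    IsSeqClosed.isClosed fun q y hq hy => hFgraph _ _ _ _ _ _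
      ((continuous_fst.fst.tendsto y).comp hy) ((continuous_fst.snd.tendsto y).comp hy) hq
      ((continuous_snd.tendsto y).comp hy)
  obtain ⟨f, hf, hfK⟩ := exists_isDecreasingParametrization_of_linearGrowth
    (fun y => hFne y.1 y.2) (fun y => hFconv y.1 y.2) hgraph hK.le
    fun y z hz => mem_closedBall_zero_iff.2 (hFbd y.1 y.2 z hz)
  refine ⟨fun l p s => f l (p, s), fun _ => K, fun l => ?_,
    fun l p s => ⟨hf.subset_range (l + 1) (p, s), hf.range_succ_subset l (p, s)⟩,
    fun l p s => ⟨hf.convex_range l (p, s), hf.isCompact_range l (p, s)⟩, fun _ => hK,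
    fun l p s u => hfK l (p, s) u, fun p s => hf.iInter_range (p, s)⟩
  exact (hf.continuous l).comp
    ((continuous_fst.prodMk continuous_snd.fst).prodMk continuous_snd.snd)

/-- Approximation theorem: any SAM admits a sequence of continuous single-valued
parametrizations `f^(l) : ℝ^d × S × U → ℝ^k` whose images decrease to the SAM. -/
theorem sam_approximation
    (d₁ d₂ k : ℕ) (hd₁ : 0 < d₁) (hd₂ : 0 < d₂) (hk : 0 < k)
    (S : Type) [MetricSpace S] [CompactSpace S]
    (F : (Euc d₁ × Euc d₂) → S → Set (Euc k))
    (hFne : ∀ p s, (F p s).Nonempty)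
    (hFconv : ∀ p s, Convex ℝ (F p s))
    (hFcomp : ∀ p s, IsCompact (F p s))
    (hFgraph : ∀ (p : Euc d₁ × Euc d₂) (s : S) (pn : ℕ → Euc d₁ × Euc d₂) (sn : ℕ → S)
      (zn : ℕ → Euc k) (z : Euc k),
      Tendsto pn atTop (𝓝 p) → Tendsto sn atTop (𝓝 s) →
      (∀ n, zn n ∈ F (pn n) (sn n)) → Tendsto zn atTop (𝓝 z) → z ∈ F p s)
    (K : ℝ) (hK : 0 < K)
    (hFbd : ∀ p s, ∀ z ∈ F p s, ‖z‖ ≤ K * (1 + ‖p‖)) :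
    ∃ (f : ℕ → (Euc d₁ × Euc d₂) → S → (closedBall (0 : Euc k) 1 : Set (Euc k)) → Euc k)
      (Kl : ℕ → ℝ),
      -- continuity of each parametrization
      (∀ l : ℕ, Continuous (fun q :
          (Euc d₁ × Euc d₂) × S × (closedBall (0 : Euc k) 1 : Set (Euc k)) =>
          f l q.1 q.2.1 q.2.2)) ∧
      -- (i) nesting of the images around F, and images convex compact
      (∀ l p s, F p s ⊆ Set.range (f (l + 1) p s) ∧
        Set.range (f (l + 1) p s) ⊆ Set.range (f l p s)) ∧
      (∀ l p s, Convex ℝ (Set.range (f l p s)) ∧ IsCompact (Set.range (f l p s))) ∧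
      -- (ii) growth bounds
      (∀ l, 0 < Kl l) ∧
      (∀ l p s u, ‖f l p s u‖ ≤ Kl l * (1 + ‖p‖)) ∧
      -- intersection of the images recovers F
      (∀ p s, (⋂ l : ℕ, Set.range (f l p s)) = F p s) :=
  sam_approximation_general d₁ d₂ k S F hFne hFconv hFgraph K hK hFbd
end

section
/- Let S be a compact metric space, U the closed unit ball of ℝ^k, and f : S × U → ℝ^k a continuous map such that the image f(s,U) := {f(s,u) : u ∈ U} is convex for every s ∈ S. Define the set-valued map F : S → {subsets of ℝ^k} by F(s) = f(s,U). Then for every Borel probability measure μ on S, the Aumann integral ∫_S F dμ equals the set { ∫_{S×U} f(s,u) ν(ds,du) : ν a Borel probability measure on S × U whose marginal on S equals μ }. -/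
open MeasureTheory Metric Filter Topology
open scoped Pointwise NNReal ENNReal RealInnerProductSpace

/-- The Aumann integral of a set-valued map `G` with respect to a measure `μ`: the set of
integrals of `μ`-integrable measurable selections of `G`. -/
def aumannIntegral {W : Type*} [MeasurableSpace W] {E : Type*} [NormedAddCommGroup E]
    [NormedSpace ℝ E] [MeasurableSpace E] (μ : Measure W) (G : W → Set E) : Set E :=
  {v | ∃ g : W → E, Measurable g ∧ Integrable g μ ∧ (∀ w, g w ∈ G w) ∧ (∫ w, g w ∂μ) = v}

/-!
A measurable selection `g` of `s ↦ f(s,U)` lifts to a measurable `σ : S → U` with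
`f(s, σ s) = g s`: minimise the coordinates of `u` lexicographically over the closed sets
`{u | f(s,u) = g s}`; each successive minimum depends measurably on `s`, and the final zero set is
a single point. Pushing `μ` forward along `s ↦ (s, σ s)` gives the required `ν`. Conversely,
disintegrating `ν` over its marginal `μ` gives the selection `s ↦ ∫ f(s,u) dκ_s(u)`, which lies
in the closed convex set `f(s,U)`.
-/

open Set

section MinOnZeros

variable {S U : Type*} [TopologicalSpace U]

noncomputable def minOnZeros (ρ : S → U → ℝ) (φ : U → ℝ) (s : S) : ℝ :=
  sInf (φ '' {u | ρ s u = 0})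

variable [CompactSpace U] {ρ : S → U → ℝ} {φ : U → ℝ}

lemma exists_eq_zero_and_eq_minOnZeros {s : S} (hρs : Continuous (ρ s)) (hφ : Continuous φ)
    (hs : ∃ u, ρ s u = 0) : ∃ u, ρ s u = 0 ∧ φ u = minOnZeros ρ φ s :=
  ((isClosed_singleton.preimage hρs).isCompact.image hφ).sInf_mem (Nonempty.image φ hs)

lemma minOnZeros_le_iff {s : S} (hρs : Continuous (ρ s)) (hφ : Continuous φ)
    (hs : ∃ u, ρ s u = 0) (c : ℝ) : minOnZeros ρ φ s ≤ c ↔ ∃ u, ρ s u = 0 ∧ φ u ≤ c := by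
  constructor
  · intro h
    obtain ⟨u, hu, hmin⟩ := exists_eq_zero_and_eq_minOnZeros hρs hφ hs
    exact ⟨u, hu, hmin ▸ h⟩
  · rintro ⟨u, hu, huc⟩
    have hbdd : BddBelow (φ '' {u | ρ s u = 0}) :=
      ((isClosed_singleton.preimage hρs).isCompact.image hφ).bddBelow
    exact (csInf_le hbdd (mem_image_of_mem φ hu)).trans huc

end MinOnZeros

section Caratheodory

variable {S U : Type*} [MeasurableSpace S] [TopologicalSpace U]

structure IsCaratheodory (ρ : S → U → ℝ) : Prop where
  measurable : ∀ u, Measurable fun s => ρ s u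
  continuous : ∀ s, Continuous (ρ s)

namespace IsCaratheodory

variable {ρ τ : S → U → ℝ}

lemma abs (hρ : IsCaratheodory ρ) : IsCaratheodory fun s u => |ρ s u| :=
  ⟨fun u => continuous_abs.measurable.comp (hρ.measurable u), fun s => (hρ.continuous s).abs⟩

lemma add (hρ : IsCaratheodory ρ) (hτ : IsCaratheodory τ) :
    IsCaratheodory fun s u => ρ s u + τ s u :=
  ⟨fun u => (hρ.measurable u).add (hτ.measurable u),
    fun s => (hρ.continuous s).add (hτ.continuous s)⟩

lemma measurable_iInf [TopologicalSpace.SeparableSpace U] (hρ : IsCaratheodory ρ) :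
    Measurable fun s => ⨅ u, ρ s u := by
  obtain ⟨D, hD_count, hD_dense⟩ := TopologicalSpace.exists_countable_dense U
  have := hD_count.to_subtype
  simp_rw [← hD_dense.ciInf' (hρ.continuous _)]
  exact .iInf fun d => hρ.measurable d

lemma measurableSet_exists_eq_zero [CompactSpace U] [TopologicalSpace.SeparableSpace U]
    (hρ : IsCaratheodory ρ) : MeasurableSet {s | ∃ u, ρ s u = 0} := by
  rcases isEmpty_or_nonempty U with hU | hU
  · simp
  convert hρ.abs.measurable_iInf (measurableSet_singleton 0) using 1
  ext s
  obtain ⟨u₀, hu₀⟩ : ⨅ u, |ρ s u| ∈ range fun u => |ρ s u| :=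
    (isCompact_range (hρ.abs.continuous s)).sInf_mem (range_nonempty _)
  simp only [mem_preimage, mem_singleton_iff]
  constructor
  · rintro ⟨u, hu⟩
    refine le_antisymm ?_ (hu₀ ▸ abs_nonneg _)
    simpa [hu] using ciInf_le (isCompact_range (hρ.abs.continuous s)).bddBelow u
  · exact fun h => ⟨u₀, abs_eq_zero.mp (hu₀.trans h)⟩

lemma measurable_minOnZeros [CompactSpace U] [TopologicalSpace.SeparableSpace U] {φ : U → ℝ}
    (hρ : IsCaratheodory ρ) (hex : ∀ s, ∃ u, ρ s u = 0) (hφ : Continuous φ) :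
    Measurable (minOnZeros ρ φ) := by
  refine measurable_of_Iic fun c => ?_
  have hτ : IsCaratheodory fun s u => |ρ s u| + max (φ u - c) 0 :=
    hρ.abs.add ⟨fun _ => measurable_const, fun _ => (hφ.sub continuous_const).max continuous_const⟩
  convert hτ.measurableSet_exists_eq_zero using 1
  ext s
  simp only [mem_preimage, mem_Iic, mem_ofPred_eq, minOnZeros_le_iff (hρ.continuous s) hφ (hex s),
    add_eq_zero_iff_of_nonneg (abs_nonneg (ρ s _)) (le_max_right (φ _ - c) 0), abs_eq_zero,
    max_eq_right_iff, sub_nonpos]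

/-- Lexicographic minimisation: `ρ'` cuts the zero set of `ρ` down, for each `i ∈ t` in turn, to
the minimisers of `φ i` on it. -/
lemma exists_refinement_pinning [CompactSpace U] [TopologicalSpace.SeparableSpace U]
    (hρ : IsCaratheodory ρ) (hex : ∀ s, ∃ u, ρ s u = 0) {ι : Type*} {φ : ι → U → ℝ}
    (hφ : ∀ i, Continuous (φ i)) (t : Finset ι) :
    ∃ ρ' : S → U → ℝ, IsCaratheodory ρ' ∧ (∀ s, ∃ u, ρ' s u = 0) ∧
      (∀ s u, ρ' s u = 0 → ρ s u = 0) ∧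
      ∀ i ∈ t, ∃ θ : S → ℝ, Measurable θ ∧ ∀ s u, ρ' s u = 0 → φ i u = θ s := by
  classical
  induction t using Finset.induction_on with
  | empty => exact ⟨ρ, hρ, hex, fun _ _ => id, by simp⟩
  | insert a t _ ih =>
    obtain ⟨ρ', hρ', hex', hsub, hθ⟩ := ih
    set m := minOnZeros ρ' (φ a)
    have hm : Measurable m := hρ'.measurable_minOnZeros hex' (hφ a)
    have hzero : ∀ s u, |ρ' s u| + |φ a u - m s| = 0 ↔ ρ' s u = 0 ∧ φ a u = m s := by
      intro s u
      rw [add_eq_zero_iff_of_nonneg (abs_nonneg _) (abs_nonneg _), abs_eq_zero, abs_eq_zero,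
        sub_eq_zero]
    refine ⟨fun s u => |ρ' s u| + |φ a u - m s|,
      hρ'.abs.add ⟨fun u => (measurable_const.sub hm).abs,
        fun s => ((hφ a).sub continuous_const).abs⟩, fun s => ?_,
      fun s u hu => hsub s u ((hzero s u).1 hu).1, fun i hi => ?_⟩
    · obtain ⟨u, hu, hmu⟩ := exists_eq_zero_and_eq_minOnZeros (hρ'.continuous s) (hφ a) (hex' s)
      exact ⟨u, (hzero s u).2 ⟨hu, hmu⟩⟩
    rcases Finset.mem_insert.mp hi with rfl | hi
    · exact ⟨m, hm, fun s u hu => ((hzero s u).1 hu).2⟩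
    · obtain ⟨θ, hθm, hθ⟩ := hθ i hi
      exact ⟨θ, hθm, fun s u hu => hθ s u ((hzero s u).1 hu).1⟩

theorem exists_measurable_zero_selection [CompactSpace U] [MeasurableSpace U] [BorelSpace U]
    {ι : Type*} [Finite ι] {Φ : U → ι → ℝ} (hΦ : Continuous Φ) (hΦ_inj : Function.Injective Φ)
    (hρ : IsCaratheodory ρ) (hex : ∀ s, ∃ u, ρ s u = 0) :
    ∃ σ : S → U, Measurable σ ∧ ∀ s, ρ s (σ s) = 0 := by
  have := Fintype.ofFinite ι
  have hΦ_emb := hΦ.isClosedEmbedding hΦ_inj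
  have := hΦ_emb.isInducing.secondCountableTopology
  obtain ⟨ρ', -, hex', hsub, hθ⟩ :=
    hρ.exists_refinement_pinning hex (φ := fun i u => Φ u i) (fun i => (continuous_apply i).comp hΦ)
      Finset.univ
  choose θ hθm hθ using fun i => hθ i (Finset.mem_univ i)
  choose σ hσ using hex'
  refine ⟨σ, ?_, fun s => hsub s _ (hσ s)⟩
  have hΦσ : Φ ∘ σ = fun s i => θ i s := funext fun s => funext fun i => hθ i s (σ s) (hσ s)
  rw [← hΦ_emb.measurableEmbedding.measurable_comp_iff, hΦσ]
  exact measurable_pi_lambda _ hθm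

end IsCaratheodory

end Caratheodory

theorem exists_map_fst_eq_integral_eq_of_mem_aumannIntegral {S U E ι : Type*}
    [MeasurableSpace S] [TopologicalSpace U] [CompactSpace U] [MeasurableSpace U] [BorelSpace U]
    [Finite ι] {Φ : U → ι → ℝ} (hΦ : Continuous Φ) (hΦ_inj : Function.Injective Φ)
    [NormedAddCommGroup E] [NormedSpace ℝ E] [MeasurableSpace E] [BorelSpace E]
    [SecondCountableTopology E] (μ : Measure S) [IsProbabilityMeasure μ] {f : S × U → E}
    (hf : Measurable f) (hf_cont : ∀ s, Continuous fun u => f (s, u)) {v : E}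
    (hv : v ∈ aumannIntegral μ fun s => range fun u => f (s, u)) :
    ∃ ν : Measure (S × U), IsProbabilityMeasure ν ∧ ν.map Prod.fst = μ ∧ ∫ q, f q ∂ν = v := by
  obtain ⟨g, hg, -, hgF, rfl⟩ := hv
  have hρ : IsCaratheodory fun s u => dist (f (s, u)) (g s) :=
    ⟨fun u => (hf.comp (measurable_id.prodMk measurable_const)).dist hg,
      fun s => (hf_cont s).dist continuous_const⟩
  obtain ⟨σ, hσ, hfσ⟩ := hρ.exists_measurable_zero_selection hΦ hΦ_inj
    fun s => (hgF s).imp fun u hu => dist_eq_zero.mpr hu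
  have hgraph : Measurable fun s => (s, σ s) := measurable_id.prodMk hσ
  refine ⟨μ.map fun s => (s, σ s), Measure.isProbabilityMeasure_map hgraph.aemeasurable, ?_, ?_⟩
  · rw [Measure.map_map measurable_fst hgraph]
    exact Measure.map_id
  · rw [integral_map hgraph.aemeasurable hf.aestronglyMeasurable]
    exact integral_congr_ae (.of_forall fun s => dist_eq_zero.mp (hfσ s))

theorem integral_mem_aumannIntegral_fst {S U E : Type*} [MeasurableSpace S] [MeasurableSpace U]
    [StandardBorelSpace U] [Nonempty U] [NormedAddCommGroup E] [NormedSpace ℝ E] [CompleteSpace E]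
    [MeasurableSpace E] [BorelSpace E] (ν : Measure (S × U)) [IsFiniteMeasure ν]
    {f : S × U → E} (hf : StronglyMeasurable f) {C : ℝ} (hC : ∀ q, ‖f q‖ ≤ C)
    (hconv : ∀ s, Convex ℝ (range fun u => f (s, u)))
    (hclosed : ∀ s, IsClosed (range fun u => f (s, u))) :
    ∫ q, f q ∂ν ∈ aumannIntegral ν.fst fun s => range fun u => f (s, u) := by
  have hint : Integrable f ν := (integrable_const C).mono' hf.aestronglyMeasurable (.of_forall hC)
  have hbound : ∀ s, ‖∫ u, f (s, u) ∂ν.condKernel s‖ ≤ C := fun s => by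
    simpa using norm_integral_le_of_norm_le_const (μ := ν.condKernel s)
      (.of_forall fun u => hC (s, u))
  have hg : StronglyMeasurable fun s => ∫ u, f (s, u) ∂ν.condKernel s :=
    hf.integral_kernel_prod_right'
  refine ⟨_, hg.measurable,
    (integrable_const C).mono' hg.aestronglyMeasurable (.of_forall hbound), fun s => ?_,
    ν.integral_condKernel hint⟩
  exact (hconv s).integral_mem (hclosed s) (.of_forall fun u => mem_range_self u)
    ((integrable_const C).mono' (hf.comp_measurable measurable_prodMk_left).aestronglyMeasurable
      (.of_forall fun u => hC (s, u)))

theorem aumannIntegral_eq_param_integrals_general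
    (k : ℕ)
    (S : Type) [MetricSpace S] [CompactSpace S] [MeasurableSpace S] [BorelSpace S]
    (f : S × (closedBall (0 : Euc k) 1 : Set (Euc k)) → Euc k) (hf : Continuous f)
    (hconv : ∀ s : S, Convex ℝ {z : Euc k |
      ∃ u : (closedBall (0 : Euc k) 1 : Set (Euc k)), f (s, u) = z})
    (μ : Measure S) (hμ : IsProbabilityMeasure μ) :
    aumannIntegral μ (fun s => {z : Euc k |
        ∃ u : (closedBall (0 : Euc k) 1 : Set (Euc k)), f (s, u) = z}) =
      {v : Euc k | ∃ ν : Measure (S × (closedBall (0 : Euc k) 1 : Set (Euc k))),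
        IsProbabilityMeasure ν ∧ ν.map Prod.fst = μ ∧ (∫ q, f q ∂ν) = v} := by
  have : CompactSpace (closedBall (0 : Euc k) 1) :=
    isCompact_iff_compactSpace.mp (isCompact_closedBall _ _)
  have : Nonempty (closedBall (0 : Euc k) 1) := ⟨⟨0, mem_closedBall_self zero_le_one⟩⟩
  have : PolishSpace (closedBall (0 : Euc k) 1) := isClosed_closedBall.polishSpace
  obtain ⟨C, hC⟩ := (isCompact_range hf.norm).bddAbove
  have hf_slice : ∀ s, Continuous fun u => f (s, u) := fun s => hf.comp (.prodMk_right s)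
  ext v
  constructor
  · exact exists_map_fst_eq_integral_eq_of_mem_aumannIntegral
      (Φ := fun (u : closedBall (0 : Euc k) 1) i => (u : Euc k) i) (by fun_prop)
      (fun u w h => Subtype.ext (by ext i; exact congr_fun h i)) μ hf.measurable hf_slice
  · rintro ⟨ν, hν, rfl, rfl⟩
    exact integral_mem_aumannIntegral_fst ν hf.stronglyMeasurable (fun q => hC ⟨q, rfl⟩) hconv
      fun s => (isCompact_range (hf_slice s)).isClosed

/-- For a continuous parametrization `f : S × U → ℝ^k` with convex images,
the Aumann integral of `s ↦ f(s,U)` with respect to a Borel probability measure `μ` on `S`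
equals the set of integrals `∫ f dν` over probability measures `ν` on `S × U` whose
`S`-marginal is `μ`. -/
theorem aumannIntegral_eq_param_integrals
    (k : ℕ) (hk : 0 < k)
    (S : Type) [MetricSpace S] [CompactSpace S] [MeasurableSpace S] [BorelSpace S]
    (f : S × (closedBall (0 : Euc k) 1 : Set (Euc k)) → Euc k) (hf : Continuous f)
    (hconv : ∀ s : S, Convex ℝ {z : Euc k |
      ∃ u : (closedBall (0 : Euc k) 1 : Set (Euc k)), f (s, u) = z})
    (μ : Measure S) (hμ : IsProbabilityMeasure μ) :
    aumannIntegral μ (fun s => {z : Euc k |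
        ∃ u : (closedBall (0 : Euc k) 1 : Set (Euc k)), f (s, u) = z}) =
      {v : Euc k | ∃ ν : Measure (S × (closedBall (0 : Euc k) 1 : Set (Euc k))),
        IsProbabilityMeasure ν ∧ ν.map Prod.fst = μ ∧ (∫ q, f q ∂ν) = v} :=
  aumannIntegral_eq_param_integrals_general k S f hf hconv μ hμ
end

section
/- Let S be a compact metric space, U the closed unit ball of ℝ^k, and f : ℝ^{d₁} × S × U → ℝ^k a continuous map such that f(x,s,U) := {f(x,s,u) : u ∈ U} is convex for every (x,s) and such that, for some K > 0, ‖f(x,s,u)‖ ≤ K(1+‖x‖) for all (x,s,u). Define the set-valued map F : ℝ^{d₁} × S → {subsets of ℝ^k} by F(x,s) = f(x,s,U). Then for every Borel probability measure μ on ℝ^{d₁} × S with compact support, the Aumann integral ∫_{ℝ^{d₁}×S} F dμ equals the set { ∫_{ℝ^{d₁}×S×U} f(x,s,u) ν(dx,ds,du) : ν a Borel probability measure on ℝ^{d₁} × S × U whose marginal on ℝ^{d₁} × S equals μ }. -/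
/-!
A probability measure `ν` on `W × U` with marginal `μ` disintegrates as `μ ⊗ κ`; the barycentres
`w ↦ ∫ f(w, u) dκ_w(u)` lie in the compact convex sets `f(w, U)` and form a measurable selection
of `w ↦ f(w, U)` with the same integral. Conversely, a measurable selection `g` lifts to a
measurable `u` with `f(w, u(w)) = g(w)` (Filippov's lemma, via a Kuratowski–Ryll-Nardzewski
construction in the compact space `U`), and `ν` is the image of `μ` under `w ↦ (w, u(w))`.
Since `f` is continuous, `U` is compact and `μ` has compact support, `f` is bounded `ν`-a.e.,
so all these integrals exist.
-/

open MeasureTheory Metric Filter Topology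
open scoped Pointwise NNReal ENNReal RealInnerProductSpace

open Set ProbabilityTheory

section MeasurableSelection

variable {W Y E : Type*} [MeasurableSpace W]

theorem measurableSet_exists_mem_eq [TopologicalSpace Y]
    [TopologicalSpace.PseudoMetrizableSpace Y] [MetricSpace E] [MeasurableSpace E]
    [OpensMeasurableSpace E] [SecondCountableTopology E]
    {φ : W → Y → E} (hφc : ∀ w, Continuous (φ w)) (hφm : ∀ y, Measurable fun w => φ w y)
    {g : W → E} (hg : Measurable g) {K : Set Y} (hK : IsCompact K) :
    MeasurableSet {w | ∃ y ∈ K, φ w y = g w} := by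
  obtain ⟨T, hTK, hTc, hKT⟩ := hK.isSeparable.exists_countable_dense_subset
  have himage : ∀ w, φ w '' K = closure (φ w '' T) := fun w =>
    subset_antisymm ((image_mono hKT).trans (image_closure_subset_closure_image (hφc w)))
      ((hK.image (hφc w)).isClosed.closure_subset_iff.2 (image_mono hTK))
  have hset : {w | ∃ y ∈ K, φ w y = g w}
      = ⋂ n : ℕ, ⋃ y ∈ T, {w | dist (φ w y) (g w) < 1 / ((n : ℝ) + 1)} := by
    ext w
    have h :=
      mem_closure_iff_nhds_basis (t := φ w '' T) (nhds_basis_ball_inv_nat_succ (x := g w))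
    rw [← himage w] at h
    simpa [mem_ball] using h
  rw [hset]
  exact .iInter fun n => .biUnion hTc fun y _ =>
    measurableSet_lt ((hφm y).dist hg) measurable_const

variable [MetricSpace Y] {Z : W → Set Y} {D : ℕ → Y}

theorem exists_measurable_index_refine (hD : DenseRange D)
    (hZm : ∀ y r, MeasurableSet {w | (Z w ∩ closedBall y r).Nonempty})
    {b : W → ℕ} (hb : Measurable b) {r r' : ℝ} (hr' : 0 < r')
    (hbZ : ∀ w, (Z w ∩ closedBall (D (b w)) r).Nonempty) :
    ∃ b' : W → ℕ, Measurable b' ∧ ∀ w, (Z w ∩ closedBall (D (b' w)) r').Nonempty ∧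
      dist (D (b' w)) (D (b w)) ≤ r + r' := by
  classical
  let p w j := (Z w ∩ closedBall (D j) r').Nonempty ∧ dist (D j) (D (b w)) ≤ r + r'
  have hp : ∀ w, ∃ j, p w j := by
    intro w
    obtain ⟨y, hyZ, hyb⟩ := hbZ w
    obtain ⟨j, hj⟩ := Metric.denseRange_iff.mp hD y r' hr'
    refine ⟨j, ⟨y, hyZ, hj.le⟩, ?_⟩
    calc dist (D j) (D (b w)) ≤ dist (D j) y + dist y (D (b w)) := dist_triangle _ _ _
      _ ≤ r + r' := by rw [dist_comm] at hj; linarith [mem_closedBall.mp hyb]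
  refine ⟨fun w => Nat.find (hp w), measurable_find hp fun j => ?_,
    fun w => Nat.find_spec (hp w)⟩
  rw [ofPred_and]
  exact (hZm (D j) r').inter (measurableSet_le
    ((Measurable.of_discrete (f := fun i => dist (D j) (D i))).comp hb) measurable_const)

theorem exists_seq_measurable_index (hD : DenseRange D) (hZne : ∀ w, (Z w).Nonempty)
    (hZm : ∀ y r, MeasurableSet {w | (Z w ∩ closedBall y r).Nonempty}) :
    ∃ b : ℕ → W → ℕ, (∀ n, Measurable (b n)) ∧
      (∀ n w, (Z w ∩ closedBall (D (b n w)) ((1 / 2) ^ n)).Nonempty) ∧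
      ∀ n w, dist (D (b (n + 1) w)) (D (b n w)) ≤ 2 * (1 / 2) ^ n := by
  classical
  have hstart : ∀ w, ∃ j, (Z w ∩ closedBall (D j) 1).Nonempty := fun w => by
    obtain ⟨y, hy⟩ := hZne w
    obtain ⟨j, hj⟩ := Metric.denseRange_iff.mp hD y 1 one_pos
    exact ⟨j, y, hy, hj.le⟩
  choose! next hnext_meas hnext using fun (n : ℕ) (b : W → ℕ) (hb : Measurable b)
    (hbZ : ∀ w, (Z w ∩ closedBall (D (b w)) ((1 / 2) ^ n)).Nonempty) =>
    exists_measurable_index_refine hD hZm hb (r' := (1 / 2) ^ (n + 1)) (by positivity) hbZ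
  let b : ℕ → W → ℕ := fun n => Nat.rec (fun w => Nat.find (hstart w)) next n
  have hb : ∀ n, Measurable (b n) ∧
      ∀ w, (Z w ∩ closedBall (D (b n w)) ((1 / 2) ^ n)).Nonempty := by
    intro n
    induction n with
    | zero => exact ⟨measurable_find hstart fun j => hZm (D j) 1,
        fun w => by rw [pow_zero]; exact Nat.find_spec (hstart w)⟩
    | succ n ih => exact ⟨hnext_meas n _ ih.1 ih.2, fun w => (hnext n _ ih.1 ih.2 w).1⟩
  refine ⟨b, fun n => (hb n).1, fun n => (hb n).2, fun n w => ?_⟩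
  calc dist (D (b (n + 1) w)) (D (b n w)) ≤ (1 / 2) ^ n + (1 / 2) ^ (n + 1) :=
        (hnext n _ (hb n).1 (hb n).2 w).2
    _ ≤ 2 * (1 / 2) ^ n := by rw [pow_succ]; linarith [pow_pos (one_half_pos (α := ℝ)) n]

theorem exists_measurable_forall_mem [CompactSpace Y] [Nonempty Y] [MeasurableSpace Y]
    [BorelSpace Y] (hZc : ∀ w, IsClosed (Z w)) (hZne : ∀ w, (Z w).Nonempty)
    (hZm : ∀ y r, MeasurableSet {w | (Z w ∩ closedBall y r).Nonempty}) :
    ∃ u : W → Y, Measurable u ∧ ∀ w, u w ∈ Z w := by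
  obtain ⟨b, hbm, hbZ, hbD⟩ :=
    exists_seq_measurable_index (TopologicalSpace.denseRange_denseSeq Y) hZne hZm
  let c : ℕ → W → Y := fun n w => TopologicalSpace.denseSeq Y (b n w)
  have hc : ∀ w, CauchySeq fun n => c n w := fun w =>
    cauchySeq_of_le_geometric (1 / 2) 2 (by norm_num) fun n => by rw [dist_comm]; exact hbD n w
  choose u hu using fun w => cauchySeq_tendsto_of_complete (hc w)
  refine ⟨u, measurable_of_tendsto_metrizable (fun n => Measurable.of_discrete.comp (hbm n))
    (tendsto_pi_nhds.2 hu), fun w => ?_⟩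
  choose y hyZ hyc using fun n => hbZ n w
  have hy : Tendsto y atTop (𝓝 (u w)) :=
    (hu w).congr_dist <| squeeze_zero (fun _ => dist_nonneg)
      (fun n => by rw [dist_comm]; exact hyc n)
      (tendsto_pow_atTop_nhds_zero_of_lt_one (by norm_num) (by norm_num))
  exact (hZc w).mem_of_tendsto hy (.of_forall hyZ)

theorem exists_measurable_selection [CompactSpace Y] [Nonempty Y] [MeasurableSpace Y]
    [BorelSpace Y] [MetricSpace E] [MeasurableSpace E] [OpensMeasurableSpace E]
    [SecondCountableTopology E] {φ : W → Y → E} (hφc : ∀ w, Continuous (φ w))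
    (hφm : ∀ y, Measurable fun w => φ w y) {g : W → E} (hg : Measurable g)
    (hsel : ∀ w, g w ∈ range (φ w)) :
    ∃ u : W → Y, Measurable u ∧ ∀ w, φ w (u w) = g w := by
  refine exists_measurable_forall_mem (Z := fun w => φ w ⁻¹' {g w})
    (fun w => isClosed_singleton.preimage (hφc w)) hsel fun y r => ?_
  convert measurableSet_exists_mem_eq hφc hφm hg (isClosed_closedBall (x := y) (ε := r)).isCompact
    using 3 with w
  simp [Set.Nonempty, and_comm]

end MeasurableSelection

section RelaxedIntegrals

variable {W Y E : Type*} [MeasurableSpace W] [MeasurableSpace Y] [NormedAddCommGroup E]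
  [NormedSpace ℝ E]

/-- `ν` ranges over the relaxed controls (Young measures) with marginal `μ`. -/
def relaxedIntegrals (μ : Measure W) (φ : W → Y → E) : Set E :=
  {v | ∃ ν : Measure (W × Y), IsProbabilityMeasure ν ∧ ν.map Prod.fst = μ ∧
    ∫ p, φ p.1 p.2 ∂ν = v}

theorem relaxedIntegrals_prod {X S : Type*} [MeasurableSpace X] [MeasurableSpace S]
    (μ : Measure (X × S)) (φ : X × S → Y → E) :
    relaxedIntegrals μ φ = {v | ∃ ν : Measure (X × S × Y), IsProbabilityMeasure ν ∧
      ν.map (fun q => (q.1, q.2.1)) = μ ∧ ∫ q, φ (q.1, q.2.1) q.2.2 ∂ν = v} := by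
  let e : (X × S) × Y ≃ᵐ X × S × Y := .prodAssoc
  ext v
  constructor
  · rintro ⟨ν, hν, hνμ, rfl⟩
    refine ⟨ν.map e, Measure.isProbabilityMeasure_map e.measurable.aemeasurable, ?_,
      integral_map_equiv e _⟩
    rwa [Measure.map_map (by fun_prop) e.measurable]
  · rintro ⟨ν, hν, hνμ, rfl⟩
    refine ⟨ν.map e.symm, Measure.isProbabilityMeasure_map e.symm.measurable.aemeasurable, ?_,
      integral_map_equiv e.symm _⟩
    rwa [Measure.map_map measurable_fst e.symm.measurable]

variable [MetricSpace Y] [MeasurableSpace E] [BorelSpace E] [SecondCountableTopology E]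
  {μ : Measure W} {φ : W → Y → E}

theorem aumannIntegral_range_subset_relaxedIntegrals [IsProbabilityMeasure μ] [CompactSpace Y]
    [Nonempty Y] [BorelSpace Y] (hφc : ∀ w, Continuous (φ w))
    (hφm : Measurable (Function.uncurry φ)) :
    aumannIntegral μ (fun w => range (φ w)) ⊆ relaxedIntegrals μ φ := by
  rintro v ⟨g, hgm, -, hgφ, rfl⟩
  obtain ⟨u, hum, hu⟩ := exists_measurable_selection hφc
    (fun y => hφm.comp (measurable_id.prodMk measurable_const)) hgm hgφ
  have hgraph : Measurable fun w => (w, u w) := measurable_id.prodMk hum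
  refine ⟨μ.map fun w => (w, u w), Measure.isProbabilityMeasure_map hgraph.aemeasurable, ?_, ?_⟩
  · rw [Measure.map_map measurable_fst hgraph]
    exact Measure.map_id
  · exact (integral_map hgraph.aemeasurable hφm.aestronglyMeasurable).trans
      (integral_congr_ae (.of_forall hu))

theorem integral_mem_aumannIntegral_range [CompleteSpace E] [CompactSpace Y] [Nonempty Y]
    [BorelSpace Y] (hφc : ∀ w, Continuous (φ w))
    (hφm : Measurable (Function.uncurry φ)) (hconv : ∀ w, Convex ℝ (range (φ w)))
    {ν : Measure (W × Y)} [IsProbabilityMeasure ν] (hνμ : ν.map Prod.fst = μ)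
    (hφν : Integrable (Function.uncurry φ) ν) :
    ∫ p, φ p.1 p.2 ∂ν ∈ aumannIntegral μ (fun w => range (φ w)) := by
  have : IsProbabilityMeasure μ := hνμ ▸ Measure.isProbabilityMeasure_map (by fun_prop)
  let κ := ν.condKernel
  have hνκ : μ ⊗ₘ κ = ν := hνμ ▸ ν.disintegrate κ
  rw [← hνκ] at hφν
  refine ⟨fun w => ∫ y, φ w y ∂κ w,
    hφm.stronglyMeasurable.integral_kernel_prod_right'.measurable, hφν.integral_compProd,
    fun w => ?_, ?_⟩
  · exact (hconv w).integral_mem (isCompact_range (hφc w)).isClosed (.of_forall mem_range_self)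
      ((hφc w).integrable_of_hasCompactSupport (.of_compactSpace _))
  · exact (Measure.integral_compProd hφν).symm.trans (by rw [hνκ]; rfl)

theorem aumannIntegral_range_eq_relaxedIntegrals [CompleteSpace E] [IsProbabilityMeasure μ]
    [CompactSpace Y] [Nonempty Y] [BorelSpace Y] (hφc : ∀ w, Continuous (φ w))
    (hφm : Measurable (Function.uncurry φ)) (hconv : ∀ w, Convex ℝ (range (φ w))) {M : ℝ}
    (hM : ∀ᵐ w ∂μ, ∀ y, ‖φ w y‖ ≤ M) :
    aumannIntegral μ (fun w => range (φ w)) = relaxedIntegrals μ φ := by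
  refine (aumannIntegral_range_subset_relaxedIntegrals hφc hφm).antisymm ?_
  rintro v ⟨ν, hν, hνμ, rfl⟩
  refine integral_mem_aumannIntegral_range hφc hφm hconv hνμ ?_
  have hνM : ∀ᵐ p ∂ν, ‖Function.uncurry φ p‖ ≤ M :=
    ae_of_ae_map measurable_fst.aemeasurable (hνμ ▸ hM) |>.mono fun p hp => hp p.2
  exact (integrable_const M).mono' hφm.aestronglyMeasurable hνM

end RelaxedIntegrals

theorem aumannIntegral_eq_param_integrals_compactSupport_general
    (d₁ k : ℕ)
    (S : Type) [MetricSpace S] [CompactSpace S] [MeasurableSpace S] [BorelSpace S]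
    (f : Euc d₁ → S → (closedBall (0 : Euc k) 1 : Set (Euc k)) → Euc k)
    (hf : Continuous (fun q : Euc d₁ × S × (closedBall (0 : Euc k) 1 : Set (Euc k)) =>
      f q.1 q.2.1 q.2.2))
    (hconv : ∀ (x : Euc d₁) (s : S), Convex ℝ (Set.range (f x s)))
    (μ : Measure (Euc d₁ × S)) (hμ : IsProbabilityMeasure μ)
    (hsupp : ∃ Csupp : Set (Euc d₁ × S), IsCompact Csupp ∧ μ Csuppᶜ = 0) :
    aumannIntegral μ (fun p : Euc d₁ × S => Set.range (f p.1 p.2)) =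
      {v : Euc k | ∃ ν : Measure (Euc d₁ × S × (closedBall (0 : Euc k) 1 : Set (Euc k))),
        IsProbabilityMeasure ν ∧
        ν.map (fun q => (q.1, q.2.1)) = μ ∧
        (∫ q, f q.1 q.2.1 q.2.2 ∂ν) = v} := by
  have : CompactSpace (closedBall (0 : Euc k) 1) :=
    isCompact_iff_compactSpace.mp (isCompact_closedBall 0 1)
  have : Nonempty (closedBall (0 : Euc k) 1) := ⟨⟨0, mem_closedBall_self zero_le_one⟩⟩
  let φ : Euc d₁ × S → closedBall (0 : Euc k) 1 → Euc k := fun w u => f w.1 w.2 u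
  have hφ : Continuous (Function.uncurry φ) := hf.comp (by fun_prop : Continuous
    fun p : (Euc d₁ × S) × closedBall (0 : Euc k) 1 => (p.1.1, p.1.2, p.2))
  obtain ⟨C, hC, hμC⟩ := hsupp
  obtain ⟨M, hM⟩ := (hC.prod isCompact_univ).exists_bound_of_continuousOn hφ.continuousOn
  have hφM : ∀ᵐ w ∂μ, ∀ u, ‖φ w u‖ ≤ M := by
    filter_upwards [mem_ae_iff.2 hμC] with w hw u using hM (w, u) ⟨hw, mem_univ u⟩
  exact (aumannIntegral_range_eq_relaxedIntegrals (fun w => hφ.comp (.prodMk_right w))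
    hφ.measurable (fun w => hconv w.1 w.2) hφM).trans (relaxedIntegrals_prod μ φ)

/-- For a continuous parametrization `f : ℝ^{d₁} × S × U → ℝ^k` with convex
images and linear growth in `x`, and any compactly supported Borel probability measure `μ` on
`ℝ^{d₁} × S`, the Aumann integral of `(x,s) ↦ f(x,s,U)` with respect to `μ` equals the set of
integrals `∫ f dν` over probability measures `ν` on `ℝ^{d₁} × S × U` whose marginal on
`ℝ^{d₁} × S` is `μ`. -/
theorem aumannIntegral_eq_param_integrals_compactSupport
    (d₁ k : ℕ) (hd₁ : 0 < d₁) (hk : 0 < k)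
    (S : Type) [MetricSpace S] [CompactSpace S] [MeasurableSpace S] [BorelSpace S]
    (f : Euc d₁ → S → (closedBall (0 : Euc k) 1 : Set (Euc k)) → Euc k)
    (hf : Continuous (fun q : Euc d₁ × S × (closedBall (0 : Euc k) 1 : Set (Euc k)) =>
      f q.1 q.2.1 q.2.2))
    (hconv : ∀ (x : Euc d₁) (s : S), Convex ℝ (Set.range (f x s)))
    (K : ℝ) (hK : 0 < K)
    (hbd : ∀ x s u, ‖f x s u‖ ≤ K * (1 + ‖x‖))
    (μ : Measure (Euc d₁ × S)) (hμ : IsProbabilityMeasure μ)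
    (hsupp : ∃ Csupp : Set (Euc d₁ × S), IsCompact Csupp ∧ μ Csuppᶜ = 0) :
    aumannIntegral μ (fun p : Euc d₁ × S => Set.range (f p.1 p.2)) =
      {v : Euc k | ∃ ν : Measure (Euc d₁ × S × (closedBall (0 : Euc k) 1 : Set (Euc k))),
        IsProbabilityMeasure ν ∧
        ν.map (fun q => (q.1, q.2.1)) = μ ∧
        (∫ q, f q.1 q.2.1 q.2.2 ∂ν) = v} :=
  aumannIntegral_eq_param_integrals_compactSupport_general d₁ k S f hf hconv μ hμ hsupp
end

section
/- In the setting of the map D(·), assume in addition that λ has linear growth, i.e. there is K > 0 with sup{‖x‖ : x ∈ λ(y)} ≤ K(1+‖y‖) for all y, and that λ has closed graph, i.e. whenever yₙ → y in ℝ^{d₂} and xₙ ∈ λ(yₙ) with xₙ → x, then x ∈ λ(y). Then the map y ↦ D(y) has closed graph: for every sequence yₙ → y in ℝ^{d₂} and every sequence μⁿ ∈ D(yₙ) converging weakly to μ in P(ℝ^{d₁} × S), one has μ ∈ D(y). -/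
open MeasureTheory Metric Filter Topology
open scoped Pointwise NNReal ENNReal RealInnerProductSpace

/-!
Write `κ_z(x, s) = Π(x, z, s)`. The invariance condition says `μ_S = μ.bind κ_y`. Tested against a
bounded continuous `g`, its right side is `∫ H(y, q) dμ(q)` with `H(z, q) = ∫ g dκ_z(q)` bounded and
jointly continuous; since `δ_{yₙ} ⊗ μⁿ → δ_y ⊗ μ` weakly, both sides pass to the limit.

For the support condition, linear growth keeps every `λ(yₙ)` in one compact ball, so by the closed
graph of `λ` they eventually lie in any `ε`-neighbourhood of `λ(y)`. The portmanteau inequality for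
closed sets gives `μ(λ(y)^ε × S) = 1` for all `ε > 0`, and `ε → 0` gives `μ(λ(y) × S) = 1`.
-/

open scoped BoundedContinuousFunction

theorem eventually_subset_of_tendsto_of_closedGraph {X Y : Type*} [TopologicalSpace X]
    [FirstCountableTopology X] [TopologicalSpace Y] {Φ : Y → Set X} {y : Y} {ys : ℕ → Y}
    (hys : Tendsto ys atTop (𝓝 y))
    (hΦ : ∀ (zs : ℕ → Y) (xs : ℕ → X) (x : X), Tendsto zs atTop (𝓝 y) →
      (∀ n, xs n ∈ Φ (zs n)) → Tendsto xs atTop (𝓝 x) → x ∈ Φ y)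
    {C : Set X} (hC : IsCompact C) (hΦC : ∀ n, Φ (ys n) ⊆ C)
    {U : Set X} (hU : IsOpen U) (hΦU : Φ y ⊆ U) :
    ∀ᶠ n in atTop, Φ (ys n) ⊆ U := by
  by_contra h
  obtain ⟨φ, hφ, hbad⟩ := extraction_of_frequently_atTop (not_eventually.mp h)
  choose xs hxΦ hxU using fun n => Set.not_subset.mp (hbad n)
  obtain ⟨x, -, ψ, hψ, hx⟩ := hC.tendsto_subseq fun n => hΦC _ (hxΦ n)
  have hxy : x ∈ Φ y :=
    hΦ _ _ x (hys.comp (hφ.comp hψ).tendsto_atTop) (fun n => hxΦ (ψ n)) hx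
  obtain ⟨n, hn⟩ := (hx.eventually (hU.mem_nhds (hΦU hxy))).exists
  exact hxU _ hn

theorem IsClosed.measure_eq_one_of_forall_cthickening {X : Type*} [PseudoMetricSpace X]
    [MeasurableSpace X] [OpensMeasurableSpace X] {μ : Measure X} [IsProbabilityMeasure μ]
    {s : Set X} (hs : IsClosed s) (h : ∀ ε > 0, μ (cthickening ε s) = 1) : μ s = 1 := by
  have hlim := (tendsto_measure_cthickening_of_isClosed (μ := μ)
    ⟨1, one_pos, measure_ne_top _ _⟩ hs).mono_left (nhdsWithin_le_nhds (s := Set.Ioi 0))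
  exact tendsto_nhds_unique hlim
    (tendsto_const_nhds.congr' (eventually_mem_nhdsWithin.mono fun ε hε => (h ε hε).symm))

theorem Continuous.measurable_toMeasure {α S : Type*} [TopologicalSpace α] [MeasurableSpace α]
    [OpensMeasurableSpace α] [TopologicalSpace S] [MeasurableSpace S] [BorelSpace S]
    [HasOuterApproxClosed S] {κ : α → ProbabilityMeasure S} (hκ : Continuous κ) :
    Measurable fun a => (κ a : Measure S) := by
  refine .measure_of_isPiSystem_of_isProbabilityMeasure
    (BorelSpace.measurable_eq.trans borel_eq_generateFrom_isClosed) isPiSystem_isClosed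
    fun F hF => UpperSemicontinuous.measurable fun a => ?_
  exact upperSemicontinuousAt_iff_limsup_le.mpr
    (ProbabilityMeasure.limsup_measure_closed_le_of_tendsto (hκ.tendsto a) hF)

namespace MeasureTheory

theorem Measure.map_eq_bind_iff {α β : Type*} [MeasurableSpace α] [MeasurableSpace β]
    {μ : Measure α} {f : α → β} {κ : α → Measure β} (hκ : AEMeasurable κ μ) :
    μ.map f = μ.bind κ ↔ ∀ A, MeasurableSet A → μ.map f A = ∫⁻ x, κ x A ∂μ := by
  simp only [Measure.ext_iff]
  exact forall₂_congr fun A hA => by rw [Measure.bind_apply hA hκ]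

namespace ProbabilityMeasure

theorem toMeasure_map_fst_apply {X T : Type*} [MeasurableSpace X] [MeasurableSpace T]
    (ν : ProbabilityMeasure (X × T)) {s : Set X} (hs : MeasurableSet s) :
    (ν.map measurable_fst.aemeasurable : Measure X) s = (ν : Measure (X × T)) (s ×ˢ Set.univ) := by
  rw [toMeasure_map, Measure.map_apply measurable_fst hs, Set.prod_univ]

section Support

variable {X ι : Type*} {L : Filter ι} [L.NeBot] [MeasurableSpace X]
  {μs : ι → ProbabilityMeasure X} {μ : ProbabilityMeasure X}

theorem measure_eq_one_of_tendsto [TopologicalSpace X] [OpensMeasurableSpace X]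
    [HasOuterApproxClosed X] (hμ : Tendsto μs L (𝓝 μ)) {F : Set X} (hF : IsClosed F)
    (h : ∀ᶠ i in L, (μs i : Measure X) F = 1) : (μ : Measure X) F = 1 := by
  refine le_antisymm prob_le_one ?_
  calc (1 : ℝ≥0∞) = L.limsup fun i => (μs i : Measure X) F := by
        rw [limsup_congr h, limsup_const]
    _ ≤ (μ : Measure X) F := limsup_measure_closed_le_of_tendsto hμ hF

theorem measure_eq_one_of_tendsto_of_eventually_subset_cthickening [PseudoMetricSpace X]
    [OpensMeasurableSpace X] (hμ : Tendsto μs L (𝓝 μ)) {s : Set X} (hs : IsClosed s)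
    {ts : ι → Set X} (hts : ∀ i, (μs i : Measure X) (ts i) = 1)
    (hsub : ∀ ε > 0, ∀ᶠ i in L, ts i ⊆ cthickening ε s) :
    (μ : Measure X) s = 1 :=
  hs.measure_eq_one_of_forall_cthickening fun ε hε =>
    measure_eq_one_of_tendsto hμ isClosed_cthickening <| (hsub ε hε).mono fun i hi =>
      le_antisymm prob_le_one (hts i ▸ measure_mono hi)

end Support

section Invariance

variable {α S : Type*} [TopologicalSpace α] [TopologicalSpace S] [MeasurableSpace S]
  [OpensMeasurableSpace S]

noncomputable def lintegralBCF {κ : α → ProbabilityMeasure S} (hκ : Continuous κ)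
    (g : S →ᵇ ℝ≥0) : α →ᵇ ℝ≥0 :=
  .mkOfBound ⟨fun a => (κ a).toFiniteMeasure.testAgainstNN g,
      (continuous_testAgainstNN_eval g).comp hκ⟩ (nndist g 0) fun a b => by
    have hle : ∀ ν : ProbabilityMeasure S, ν.toFiniteMeasure.testAgainstNN g ≤ nndist g 0 :=
      fun ν => by
        have := ν.toFiniteMeasure.testAgainstNN_mono (g := .const S (nndist g 0))
          (BoundedContinuousFunction.NNReal.upper_bound g)
        rwa [FiniteMeasure.testAgainstNN_const, mass_toFiniteMeasure, mul_one] at this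
    rw [NNReal.dist_eq]
    exact abs_sub_le_of_nonneg_of_le (NNReal.coe_nonneg _) (hle _) (NNReal.coe_nonneg _) (hle _)

theorem coe_lintegralBCF_apply {κ : α → ProbabilityMeasure S} (hκ : Continuous κ)
    (g : S →ᵇ ℝ≥0) (a : α) : (lintegralBCF hκ g a : ℝ≥0∞) = ∫⁻ x, g x ∂(κ a : Measure S) :=
  FiniteMeasure.testAgainstNN_coe_eq

variable {Z X : Type*} [TopologicalSpace Z] [MeasurableSpace Z] [OpensMeasurableSpace Z]
  [SecondCountableTopology Z] [TopologicalSpace.PseudoMetrizableSpace Z]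
  [TopologicalSpace X] [MeasurableSpace X] [OpensMeasurableSpace X]
  [SecondCountableTopology X] [TopologicalSpace.PseudoMetrizableSpace X]
  {ι : Type*} {L : Filter ι} {zs : ι → Z} {z : Z} {μs : ι → ProbabilityMeasure X}
  {μ : ProbabilityMeasure X}

theorem tendsto_lintegral_prodMk_of_tendsto (hz : Tendsto zs L (𝓝 z)) (hμ : Tendsto μs L (𝓝 μ))
    (H : Z × X →ᵇ ℝ≥0) :
    Tendsto (fun i => ∫⁻ x, H (zs i, x) ∂(μs i : Measure X)) L
      (𝓝 (∫⁻ x, H (z, x) ∂(μ : Measure X))) := by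
  have hprod : Tendsto (fun i => (diracProba (zs i)).prod (μs i)) L
      (𝓝 ((diracProba z).prod μ)) :=
    (continuous_prod.tendsto _).comp ((continuous_diracProba.tendsto z).comp hz |>.prodMk_nhds hμ)
  have hslice : ∀ (w : Z) (ν : ProbabilityMeasure X),
      ∫⁻ p, H p ∂((diracProba w).prod ν : Measure (Z × X)) = ∫⁻ x, H (w, x) ∂(ν : Measure X) := by
    intro w ν
    change ∫⁻ p, H p ∂((Measure.dirac w).prod (ν : Measure X)) = _
    rw [Measure.dirac_prod, lintegral_map (by fun_prop) measurable_prodMk_left]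
  simpa only [hslice] using tendsto_iff_forall_lintegral_tendsto.mp hprod H

theorem map_eq_bind_of_tendsto [L.NeBot] [HasOuterApproxClosed S] [BorelSpace S] {f : X → S}
    (hf : Continuous f) {κ : Z → X → ProbabilityMeasure S}
    (hκ : Continuous fun p : Z × X => κ p.1 p.2) (hz : Tendsto zs L (𝓝 z))
    (hμ : Tendsto μs L (𝓝 μ))
    (h : ∀ i, (μs i : Measure X).map f = (μs i : Measure X).bind (fun x => κ (zs i) x)) :
    (μ : Measure X).map f = (μ : Measure X).bind (fun x => κ z x) := by
  have hbind : ∀ w (ν : ProbabilityMeasure X) (g : S →ᵇ ℝ≥0),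
      ∫⁻ s, g s ∂((ν : Measure X).bind fun x => κ w x) = ∫⁻ x, lintegralBCF hκ g (w, x) ∂ν := by
    intro w ν g
    have hκw : Measurable fun x => (κ w x : Measure S) :=
      (hκ.comp (Continuous.prodMk_right w)).measurable_toMeasure
    simp only [coe_lintegralBCF_apply]
    exact Measure.lintegral_bind hκw.aemeasurable
      g.continuous.measurable.coe_nnreal_ennreal.aemeasurable
  have hmap : ∀ (ν : ProbabilityMeasure X) (g : S →ᵇ ℝ≥0),
      ∫⁻ s, g s ∂((ν : Measure X).map f) = ∫⁻ x, g.compContinuous ⟨f, hf⟩ x ∂ν := fun ν g =>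
    lintegral_map (by fun_prop) hf.measurable
  refine ext_of_forall_lintegral_eq_of_IsFiniteMeasure fun g => ?_
  rw [hmap, hbind]
  refine tendsto_nhds_unique (tendsto_iff_forall_lintegral_tendsto.mp hμ _) ?_
  simpa only [← hmap, h, hbind] using tendsto_lintegral_prodMk_of_tendsto hz hμ (lintegralBCF hκ g)

end Invariance

end ProbabilityMeasure

end MeasureTheory

theorem Dmap_closedGraph_general
    (d₁ d₂ : ℕ)
    (S : Type) [MetricSpace S] [CompactSpace S] [MeasurableSpace S] [BorelSpace S]
    (Pi : (Euc d₁ × Euc d₂) → S → ProbabilityMeasure S)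
    (hPi : Continuous (fun q : (Euc d₁ × Euc d₂) × S => Pi q.1 q.2))
    (lam : Euc d₂ → Set (Euc d₁))
    (hlamcomp : ∀ y, IsCompact (lam y))
    -- linear growth of λ
    (K : ℝ) (hK : 0 < K)
    (hgrow : ∀ y, ∀ x ∈ lam y, ‖x‖ ≤ K * (1 + ‖y‖))
    -- closed graph of λ
    (hlamgraph : ∀ (y : Euc d₂) (yn : ℕ → Euc d₂) (xn : ℕ → Euc d₁) (x : Euc d₁),
      Tendsto yn atTop (𝓝 y) → (∀ n, xn n ∈ lam (yn n)) → Tendsto xn atTop (𝓝 x) →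
      x ∈ lam y) :
    let D : Euc d₂ → Set (ProbabilityMeasure (Euc d₁ × S)) := fun y =>
      {μ | (μ : Measure (Euc d₁ × S)) (lam y ×ˢ (Set.univ : Set S)) = 1 ∧
        ∀ A : Set S, MeasurableSet A →
          ((μ : Measure (Euc d₁ × S)).map Prod.snd) A =
            ∫⁻ q, (Pi (q.1, y) q.2 : Measure S) A ∂(μ : Measure (Euc d₁ × S))}
    ∀ (y : Euc d₂) (yn : ℕ → Euc d₂) (μn : ℕ → ProbabilityMeasure (Euc d₁ × S))
      (μ : ProbabilityMeasure (Euc d₁ × S)),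
      Tendsto yn atTop (𝓝 y) → (∀ n, μn n ∈ D (yn n)) → Tendsto μn atTop (𝓝 μ) →
      μ ∈ D y := by
  intro D y yn μn μ hy hμn hlim
  let κ : Euc d₂ → Euc d₁ × S → ProbabilityMeasure S := fun z q => Pi (q.1, z) q.2
  have hκ : Continuous fun p : Euc d₂ × (Euc d₁ × S) => κ p.1 p.2 :=
    hPi.comp (f := fun p : Euc d₂ × (Euc d₁ × S) => ((p.2.1, p.1), p.2.2)) (by fun_prop)
  have hκmeas : ∀ z (ν : Measure (Euc d₁ × S)), AEMeasurable (fun q => (κ z q : Measure S)) ν :=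
    fun z _ => (hκ.comp (Continuous.prodMk_right z)).measurable_toMeasure.aemeasurable
  obtain ⟨M, hM⟩ := isBounded_iff_forall_norm_le.mp (isBounded_range_of_tendsto yn hy)
  have hbdd : ∀ n, lam (yn n) ⊆ closedBall 0 (K * (1 + M)) := fun n x hx =>
    mem_closedBall_zero_iff.mpr <| (hgrow _ x hx).trans <|
      mul_le_mul_of_nonneg_left (by linarith [hM _ ⟨n, rfl⟩]) hK.le
  have hsub : ∀ ε > 0, ∀ᶠ n in atTop, lam (yn n) ⊆ cthickening ε (lam y) := fun ε hε =>
    (eventually_subset_of_tendsto_of_closedGraph hy (hlamgraph y) (isCompact_closedBall _ _) hbdd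
      isOpen_thickening (self_subset_thickening hε _)).mono
      fun _ h => h.trans (thickening_subset_cthickening _ _)
  refine ⟨?_, (Measure.map_eq_bind_iff (hκmeas y _)).mp <|
    ProbabilityMeasure.map_eq_bind_of_tendsto continuous_snd hκ hy hlim fun n =>
      (Measure.map_eq_bind_iff (hκmeas (yn n) _)).mpr (hμn n).2⟩
  rw [← μ.toMeasure_map_fst_apply (hlamcomp y).measurableSet]
  exact ProbabilityMeasure.measure_eq_one_of_tendsto_of_eventually_subset_cthickening
    (((ProbabilityMeasure.continuous_map continuous_fst).tendsto μ).comp hlim) (hlamcomp y).isClosed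
    (fun n => ((μn n).toMeasure_map_fst_apply (hlamcomp _).measurableSet).trans (hμn n).1) hsub

/-- If `λ` has linear growth and closed graph, then the map `y ↦ D(y)` has
closed graph: `yₙ → y`, `μⁿ ∈ D(yₙ)`, `μⁿ → μ` weakly imply `μ ∈ D(y)`. -/
theorem Dmap_closedGraph
    (d₁ d₂ : ℕ) (hd₁ : 0 < d₁) (hd₂ : 0 < d₂)
    (S : Type) [MetricSpace S] [CompactSpace S] [MeasurableSpace S] [BorelSpace S]
    (Pi : (Euc d₁ × Euc d₂) → S → ProbabilityMeasure S)
    (hPi : Continuous (fun q : (Euc d₁ × Euc d₂) × S => Pi q.1 q.2))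
    (lam : Euc d₂ → Set (Euc d₁))
    (hlamne : ∀ y, (lam y).Nonempty) (hlamcomp : ∀ y, IsCompact (lam y))
    -- linear growth of λ
    (K : ℝ) (hK : 0 < K)
    (hgrow : ∀ y, ∀ x ∈ lam y, ‖x‖ ≤ K * (1 + ‖y‖))
    -- closed graph of λ
    (hlamgraph : ∀ (y : Euc d₂) (yn : ℕ → Euc d₂) (xn : ℕ → Euc d₁) (x : Euc d₁),
      Tendsto yn atTop (𝓝 y) → (∀ n, xn n ∈ lam (yn n)) → Tendsto xn atTop (𝓝 x) →
      x ∈ lam y) :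
    let D : Euc d₂ → Set (ProbabilityMeasure (Euc d₁ × S)) := fun y =>
      {μ | (μ : Measure (Euc d₁ × S)) (lam y ×ˢ (Set.univ : Set S)) = 1 ∧
        ∀ A : Set S, MeasurableSet A →
          ((μ : Measure (Euc d₁ × S)).map Prod.snd) A =
            ∫⁻ q, (Pi (q.1, y) q.2 : Measure S) A ∂(μ : Measure (Euc d₁ × S))}
    ∀ (y : Euc d₂) (yn : ℕ → Euc d₂) (μn : ℕ → ProbabilityMeasure (Euc d₁ × S))
      (μ : ProbabilityMeasure (Euc d₁ × S)),
      Tendsto yn atTop (𝓝 y) → (∀ n, μn n ∈ D (yn n)) → Tendsto μn atTop (𝓝 μ) →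
      μ ∈ D y :=
  Dmap_closedGraph_general d₁ d₂ S Pi hPi lam hlamcomp K hK hgrow hlamgraph
end

section
/- Suppose, in addition to the interpolation construction, that the sequences satisfy the recursion yₙ₊₁ = yₙ + b(n)vₙ + b(n)mₙ₊₁ for all n ≥ 0, where {mₙ₊₁}_{n≥0} ⊆ ℝ^{d₂} satisfies the noise condition: for every T > 0, lim_{n→∞} sup_{n ≤ k ≤ τ(n,T)} ‖Σ_{m=n}^{k} b(m) m_{m+1}‖ = 0, where τ(n,T) := min{m > n : Σ_{k=n}^{m−1} b(k) ≥ T}. Then for every T > 0, lim_{t→∞} sup_{0 ≤ q ≤ T} ‖ȳ(t+q) − ỹ(q;t)‖ = 0. -/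
open MeasureTheory Metric Filter Topology
open scoped Pointwise NNReal ENNReal RealInnerProductSpace

/-!
Both `ȳ` and `s ↦ ∫₀ˢ g` are polygonal paths on the grid `t`: on `[t j, t (j+1)]` the first
has slope `v j + m (j+1)` (by the recursion) and the second slope `v j`. Their difference is
therefore the polygonal path of the noise, whose increment over a window of length `T` starting
late is a tail sum `∑ b j • m (j+1)` controlled by the noise condition, plus two boundary terms,
each at most one summand `b j • m (j+1)`.
-/

open Set

theorem exists_mem_Ico_of_tendsto_atTop {t : ℕ → ℝ} (ht : Tendsto t atTop atTop) {s : ℝ}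
    (hs : t 0 ≤ s) : ∃ n, s ∈ Ico (t n) (t (n + 1)) := by
  classical
  have hex : ∃ n, s < t n := (ht.eventually_gt_atTop s).exists
  obtain ⟨n, hn⟩ : ∃ n, Nat.find hex = n + 1 :=
    Nat.exists_eq_succ_of_ne_zero fun h => (Nat.find_spec hex).not_ge (h ▸ hs)
  exact ⟨n, not_lt.1 (Nat.find_min hex (by omega)), hn ▸ Nat.find_spec hex⟩

section PolygonalPath

variable {E : Type*} [NormedAddCommGroup E] [NormedSpace ℝ E]

/-- The value at `s ∈ [t n, t (n+1)]` of the path starting at `0` with slope `w j` on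
`[t j, t (j+1)]`. -/
def polygonalPath (t : ℕ → ℝ) (w : ℕ → E) (n : ℕ) (s : ℝ) : E :=
  ∑ j ∈ Finset.range n, (t (j + 1) - t j) • w j + (s - t n) • w n

variable {t : ℕ → ℝ}

theorem polygonalPath_add (w w' : ℕ → E) (n : ℕ) (s : ℝ) :
    polygonalPath t (w + w') n s = polygonalPath t w n s + polygonalPath t w' n s := by
  simp only [polygonalPath, Pi.add_apply, smul_add, Finset.sum_add_distrib]
  abel

theorem polygonalPath_succ (w : ℕ → E) (n : ℕ) (s : ℝ) :
    polygonalPath t w (n + 1) s =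
      polygonalPath t w n (t (n + 1)) + (s - t (n + 1)) • w (n + 1) := by
  simp only [polygonalPath, Finset.sum_range_succ]

theorem polygonalPath_eq_sum_range_succ_sub (w : ℕ → E) (n : ℕ) (s : ℝ) :
    polygonalPath t w n s =
      ∑ j ∈ Finset.range (n + 1), (t (j + 1) - t j) • w j - (t (n + 1) - s) • w n := by
  rw [polygonalPath, Finset.sum_range_succ, add_sub_assoc, ← sub_smul]
  congr 2
  ring

theorem polygonalPath_sub_polygonalPath (w : ℕ → E) {n k : ℕ} (hnk : n ≤ k) (s s' : ℝ) :
    polygonalPath t w k s' - polygonalPath t w n s =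
      ∑ j ∈ Finset.Icc (n + 1) k, (t (j + 1) - t j) • w j
        - (t (k + 1) - s') • w k + (t (n + 1) - s) • w n := by
  rw [polygonalPath_eq_sum_range_succ_sub, polygonalPath_eq_sum_range_succ_sub,
    ← Finset.Ico_add_one_right_eq_Icc, Finset.sum_Ico_eq_sub _ (by omega)]
  abel

theorem norm_smul_sub_le_of_mem_Icc {a c s : ℝ} (hs : s ∈ Icc a c) (x : E) :
    ‖(c - s) • x‖ ≤ ‖(c - a) • x‖ := by
  rw [norm_smul, norm_smul, Real.norm_of_nonneg (by linarith [hs.2]),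
    Real.norm_of_nonneg (by linarith [hs.1, hs.2])]
  gcongr
  exact hs.1

theorem norm_polygonalPath_sub_le (w : ℕ → E) {n k : ℕ} (hnk : n ≤ k) {s s' : ℝ}
    (hs : s ∈ Icc (t n) (t (n + 1))) (hs' : s' ∈ Icc (t k) (t (k + 1))) {δ : ℝ}
    (hn : ‖(t (n + 1) - t n) • w n‖ ≤ δ) (hk : ‖(t (k + 1) - t k) • w k‖ ≤ δ)
    (hmid : ‖∑ j ∈ Finset.Icc (n + 1) k, (t (j + 1) - t j) • w j‖ ≤ δ) :
    ‖polygonalPath t w k s' - polygonalPath t w n s‖ ≤ 3 * δ := by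
  rw [polygonalPath_sub_polygonalPath w hnk]
  calc _ ≤ ‖∑ j ∈ Finset.Icc (n + 1) k, (t (j + 1) - t j) • w j‖
          + ‖(t (k + 1) - s') • w k‖ + ‖(t (n + 1) - s) • w n‖ :=
        (norm_add_le _ _).trans (add_le_add_left (norm_sub_le _ _) _)
    _ ≤ 3 * δ := by
      linarith [norm_smul_sub_le_of_mem_Icc hs' (w k), norm_smul_sub_le_of_mem_Icc hs (w n)]

theorem eq_add_polygonalPath_of_interpolates (ht : StrictMono t) {ybar : ℝ → E}
    {y w : ℕ → E}
    (hy : ∀ n, y (n + 1) = y n + (t (n + 1) - t n) • w n)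
    (hybar : ∀ n, ∀ θ ∈ Icc (0 : ℝ) 1,
      ybar (t n + θ * (t (n + 1) - t n)) = y n + θ • (y (n + 1) - y n)) :
    ∀ n, ∀ s ∈ Icc (t n) (t (n + 1)), ybar s = y 0 + polygonalPath t w n s := by
  intro n s hs
  have hlen : 0 < t (n + 1) - t n := sub_pos.2 (ht n.lt_succ_self)
  have hθ : (s - t n) / (t (n + 1) - t n) ∈ Icc (0 : ℝ) 1 :=
    ⟨div_nonneg (by linarith [hs.1]) hlen.le, (div_le_one hlen).2 (by linarith [hs.2])⟩
  have hy_sum : y n = y 0 + ∑ j ∈ Finset.range n, (t (j + 1) - t j) • w j := by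
    rw [← Finset.sum_congr rfl fun j _ => sub_eq_of_eq_add' (hy j), Finset.sum_range_sub]
    abel
  have h := hybar n _ hθ
  rw [div_mul_cancel₀ _ hlen.ne', add_sub_cancel, hy n, add_sub_cancel_left, smul_smul,
    div_mul_cancel₀ _ hlen.ne'] at h
  rw [h, hy_sum, polygonalPath, add_assoc]

variable [CompleteSpace E] {g : ℝ → E}

theorem integral_of_eqOn_Ico {a c s : ℝ} {v : E} (hg : EqOn g (fun _ => v) (Ico a c))
    (hs : s ∈ Icc a c) :
    IntervalIntegrable g volume a s ∧ ∫ u in a..s, g u = (s - a) • v := by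
  have hEq : EqOn g (fun _ => v) (uIoo a s) := by
    rw [uIoo_of_le hs.1]
    exact hg.mono (Ioo_subset_Ico_self.trans (Ico_subset_Ico_right hs.2))
  exact ⟨(intervalIntegrable_congr_uIoo hEq).2 intervalIntegrable_const,
    by rw [intervalIntegral.integral_congr_uIoo hEq, intervalIntegral.integral_const]⟩

theorem integral_eq_polygonalPath (ht : Monotone t) {v : ℕ → E}
    (hg : ∀ n, EqOn g (fun _ => v n) (Ico (t n) (t (n + 1)))) :
    ∀ n, ∀ s ∈ Icc (t n) (t (n + 1)),
      IntervalIntegrable g volume (t 0) s ∧ ∫ u in t 0..s, g u = polygonalPath t v n s := by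
  intro n
  induction n with
  | zero =>
    intro s hs
    simpa [polygonalPath] using integral_of_eqOn_Ico (hg 0) hs
  | succ n ih =>
    intro s hs
    obtain ⟨hint, hval⟩ := ih (t (n + 1)) ⟨ht n.le_succ, le_rfl⟩
    obtain ⟨hint', hval'⟩ := integral_of_eqOn_Ico (hg (n + 1)) hs
    refine ⟨hint.trans hint', ?_⟩
    rw [← intervalIntegral.integral_add_adjacent_intervals hint hint', hval, hval',
      polygonalPath_succ]

theorem sub_integral_eq_add_polygonalPath (ht : StrictMono t) {ybar : ℝ → E} {y v w : ℕ → E}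
    (hy : ∀ n, y (n + 1) = y n + (t (n + 1) - t n) • (v n + w n))
    (hybar : ∀ n, ∀ θ ∈ Icc (0 : ℝ) 1,
      ybar (t n + θ * (t (n + 1) - t n)) = y n + θ • (y (n + 1) - y n))
    (hg : ∀ n, EqOn g (fun _ => v n) (Ico (t n) (t (n + 1)))) :
    ∀ n, ∀ s ∈ Icc (t n) (t (n + 1)), IntervalIntegrable g volume (t 0) s ∧
      ybar s - ∫ u in t 0..s, g u = y 0 + polygonalPath t w n s := by
  intro n s hs
  obtain ⟨hint, hint_eq⟩ := integral_eq_polygonalPath ht.monotone hg n s hs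
  refine ⟨hint, ?_⟩
  rw [hint_eq, eq_add_polygonalPath_of_interpolates (w := v + w) ht hy hybar n s hs,
    polygonalPath_add]
  abel

end PolygonalPath

theorem sub_add_integral_comp_add_left {E : Type*} [NormedAddCommGroup E] [NormedSpace ℝ E]
    {F f : ℝ → E} {a x h : ℝ} (hx : IntervalIntegrable f volume a x)
    (hxh : IntervalIntegrable f volume a (x + h)) :
    F (x + h) - (F x + ∫ u in (0 : ℝ)..h, f (x + u)) =
      (F (x + h) - ∫ u in a..x + h, f u) - (F x - ∫ u in a..x, f u) := by
  rw [intervalIntegral.integral_comp_add_left f x, add_zero,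
    ← intervalIntegral.integral_interval_sub_left hxh hx]
  abel

theorem norm_sum_Icc_lt_of_sum_range_lt {E : Type*} [NormedAddCommGroup E] {b : ℕ → ℝ}
    (hb : ∀ n, 0 ≤ b n) {x : ℕ → E} {n τ : ℕ} {T ε : ℝ}
    (hT : T ≤ ∑ j ∈ Finset.Ico n τ, b j) (hε : 0 < ε)
    (h : ∀ k, n ≤ k → k ≤ τ → ‖∑ j ∈ Finset.Icc n k, x j‖ < ε) {k : ℕ}
    (hk : ∑ j ∈ Finset.range k, b j < ∑ j ∈ Finset.range n, b j + T) :
    ‖∑ j ∈ Finset.Icc n k, x j‖ < ε := by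
  rcases lt_or_ge k n with hkn | hnk
  · rwa [Finset.Icc_eq_empty (by omega), Finset.sum_empty, norm_zero]
  refine h k hnk (le_of_not_gt fun hτk => ?_)
  have hsum : ∑ j ∈ Finset.Ico n τ, b j ≤ ∑ j ∈ Finset.Ico n k, b j :=
    Finset.sum_le_sum_of_subset_of_nonneg (Finset.Ico_subset_Ico_right hτk.le)
      fun j _ _ => hb j
  rw [Finset.sum_Ico_eq_sub _ hnk] at hsum
  linarith

theorem interpolation_tracks_piecewise_ode_general
    (d₂ : ℕ)
    (b : ℕ → ℝ) (hb : ∀ n, 0 < b n)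
    (hbsum : Tendsto (fun n => ∑ k ∈ Finset.range n, b k) atTop atTop)
    (y v m : ℕ → Euc d₂)
    (t : ℕ → ℝ) (ht : ∀ n, t n = ∑ k ∈ Finset.range n, b k)
    -- the piecewise linear interpolation ȳ
    (ybar : ℝ → Euc d₂)
    (hybar : ∀ n : ℕ, ∀ s ∈ Set.Icc (0 : ℝ) 1,
      ybar (t n + s * b n) = y n + s • (y (n + 1) - y n))
    -- the piecewise-constant driving function g
    (g : ℝ → Euc d₂)
    (hg : ∀ n : ℕ, ∀ u ∈ Set.Ico (t n) (t (n + 1)), g u = v n)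
    -- the solutions ỹ(·;t) of the o.d.e. with vector field g(·+t)
    (ytil : ℝ → ℝ → Euc d₂)
    (hytil : ∀ tt q : ℝ, ytil tt q = ybar tt + ∫ u in (0 : ℝ)..q, g (tt + u))
    -- the recursion
    (hrec : ∀ n, y (n + 1) = y n + b n • v n + b n • m (n + 1))
    -- τ(n,T)
    (τ : ℕ → ℝ → ℕ)
    (hτ : ∀ (n : ℕ) (T : ℝ), 0 < T →
      n < τ n T ∧ T ≤ ∑ k ∈ Finset.Ico n (τ n T), b k ∧
      ∀ mm : ℕ, n < mm → T ≤ ∑ k ∈ Finset.Ico n mm, b k → τ n T ≤ mm)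
    -- the noise condition
    (hnoise : ∀ T > (0 : ℝ), ∀ ε > (0 : ℝ), ∃ N : ℕ, ∀ n ≥ N, ∀ k : ℕ,
      n ≤ k → k ≤ τ n T → ‖∑ j ∈ Finset.Icc n k, b j • m (j + 1)‖ < ε) :
    ∀ T > (0 : ℝ), ∀ ε > (0 : ℝ), ∃ t₀ : ℝ, ∀ tt ≥ t₀, ∀ q : ℝ, 0 ≤ q → q ≤ T →
      ‖ybar (tt + q) - ytil tt q‖ ≤ ε := by
  intro T hT ε hε
  have hb_eq : ∀ n, b n = t (n + 1) - t n := fun n => by simp [ht, Finset.sum_range_succ]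
  have ht_mono : StrictMono t := strictMono_nat_of_lt_succ fun n => by linarith [hb n, hb_eq n]
  have ht_top : Tendsto t atTop atTop := by rwa [funext ht]
  have hdev := sub_integral_eq_add_polygonalPath (y := y) (w := fun j => m (j + 1))
    ht_mono (fun n => by rw [hrec, hb_eq, add_assoc, smul_add])
    (by simpa only [hb_eq] using hybar) hg
  obtain ⟨N, hN⟩ := hnoise T hT (ε / 3) (by positivity)
  have hwindow : ∀ n ≥ N, ∀ k, t k < t n + T →
      ‖∑ j ∈ Finset.Icc n k, (t (j + 1) - t j) • m (j + 1)‖ ≤ ε / 3 := by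
    intro n hn k hk
    rw [ht, ht] at hk
    simpa only [← hb_eq] using (norm_sum_Icc_lt_of_sum_range_lt (fun j => (hb j).le)
      (hτ n T hT).2.1 (by positivity) (hN n hn) hk).le
  have hstep : ∀ j ≥ N, ‖(t (j + 1) - t j) • m (j + 1)‖ ≤ ε / 3 := fun j hj => by
    simpa using hwindow j hj j (by linarith)
  refine ⟨t N, fun tt htt q hq0 hqT => ?_⟩
  obtain ⟨n, hn⟩ := exists_mem_Ico_of_tendsto_atTop ht_top (s := tt)
    (by linarith [ht_mono.monotone N.zero_le])
  obtain ⟨k, hk⟩ := exists_mem_Ico_of_tendsto_atTop ht_top (s := tt + q)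
    (by linarith [ht_mono.monotone N.zero_le])
  have hNn : N ≤ n := Nat.lt_succ_iff.1 (ht_mono.lt_iff_lt.1 (htt.trans_lt hn.2))
  have hnk : n ≤ k := Nat.lt_succ_iff.1 (ht_mono.lt_iff_lt.1 (by linarith [hn.1, hk.2]))
  obtain ⟨hint_n, hdev_n⟩ := hdev n tt (Ico_subset_Icc_self hn)
  obtain ⟨hint_k, hdev_k⟩ := hdev k (tt + q) (Ico_subset_Icc_self hk)
  rw [hytil, sub_add_integral_comp_add_left hint_n hint_k, hdev_n, hdev_k,
    add_sub_add_left_eq_sub]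
  calc _ ≤ 3 * (ε / 3) := norm_polygonalPath_sub_le _ hnk (Ico_subset_Icc_self hn)
          (Ico_subset_Icc_self hk) (hstep n hNn) (hstep k (hNn.trans hnk))
          (hwindow (n + 1) (by omega) k (by linarith [hk.1, hn.2]))
    _ = ε := by ring

/-- If the iterates satisfy `yₙ₊₁ = yₙ + b(n)vₙ + b(n)mₙ₊₁` with additive
noise satisfying the standard condition, then the interpolated trajectory `ȳ` and the
solutions `ỹ(·;t)` of the piecewise-constant o.d.e. are asymptotically uniformly close on
intervals of length `T`. -/
theorem interpolation_tracks_piecewise_ode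
    (d₂ : ℕ) (hd₂ : 0 < d₂)
    (b : ℕ → ℝ) (hb : ∀ n, 0 < b n)
    (hbsum : Tendsto (fun n => ∑ k ∈ Finset.range n, b k) atTop atTop)
    (y v m : ℕ → Euc d₂)
    (t : ℕ → ℝ) (ht : ∀ n, t n = ∑ k ∈ Finset.range n, b k)
    -- the piecewise linear interpolation ȳ
    (ybar : ℝ → Euc d₂)
    (hybar : ∀ n : ℕ, ∀ s ∈ Set.Icc (0 : ℝ) 1,
      ybar (t n + s * b n) = y n + s • (y (n + 1) - y n))
    -- the piecewise-constant driving function g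
    (g : ℝ → Euc d₂)
    (hg : ∀ n : ℕ, ∀ u ∈ Set.Ico (t n) (t (n + 1)), g u = v n)
    -- the solutions ỹ(·;t) of the o.d.e. with vector field g(·+t)
    (ytil : ℝ → ℝ → Euc d₂)
    (hytil : ∀ tt q : ℝ, ytil tt q = ybar tt + ∫ u in (0 : ℝ)..q, g (tt + u))
    -- the recursion
    (hrec : ∀ n, y (n + 1) = y n + b n • v n + b n • m (n + 1))
    -- τ(n,T)
    (τ : ℕ → ℝ → ℕ)
    (hτ : ∀ (n : ℕ) (T : ℝ), 0 < T →
      n < τ n T ∧ T ≤ ∑ k ∈ Finset.Ico n (τ n T), b k ∧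
      ∀ mm : ℕ, n < mm → T ≤ ∑ k ∈ Finset.Ico n mm, b k → τ n T ≤ mm)
    -- the noise condition
    (hnoise : ∀ T > (0 : ℝ), ∀ ε > (0 : ℝ), ∃ N : ℕ, ∀ n ≥ N, ∀ k : ℕ,
      n ≤ k → k ≤ τ n T → ‖∑ j ∈ Finset.Icc n k, b j • m (j + 1)‖ < ε) :
    ∀ T > (0 : ℝ), ∀ ε > (0 : ℝ), ∃ t₀ : ℝ, ∀ tt ≥ t₀, ∀ q : ℝ, 0 ≤ q → q ≤ T →
      ‖ybar (tt + q) - ytil tt q‖ ≤ ε :=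
  interpolation_tracks_piecewise_ode_general d₂ b hb hbsum y v m t ht ybar hybar g hg ytil hytil
    hrec τ hτ hnoise
end

section
/- Let (Ω, 𝓕) be a measurable space, S a compact metric space, U the closed unit ball of ℝ^{d₂}, and f : ℝ^{d₁} × ℝ^{d₂} × S × U → ℝ^{d₂} a continuous map. Suppose X : Ω → ℝ^{d₁}, Y : Ω → ℝ^{d₂}, Z : Ω → S and W : Ω → ℝ^{d₂} are measurable (with respect to the Borel σ-algebras on the targets) and W(ω) ∈ {f(X(ω),Y(ω),Z(ω),u) : u ∈ U} for every ω ∈ Ω. Then there exists a measurable map V : Ω → U such that W(ω) = f(X(ω),Y(ω),Z(ω),V(ω)) for every ω ∈ Ω. -/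
open MeasureTheory Metric Filter Topology
open scoped Pointwise NNReal ENNReal RealInnerProductSpace

/-- Auxiliary measurable selection lemma on a compact metric space. -/
lemma selection_aux {Ω K E : Type*} [MeasurableSpace Ω]
    [MetricSpace K] [CompactSpace K] [TopologicalSpace.SeparableSpace K]
    [MeasurableSpace K] [BorelSpace K] [Nonempty K]
    [MetricSpace E]
    (g : Ω → K → E) (W : Ω → E)
    (hc : ∀ ω, Continuous (g ω))
    (hm : ∀ u : K, Measurable (fun ω => dist (g ω u) (W ω)))
    (hmem : ∀ ω, ∃ u, g ω u = W ω) :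
    ∃ V : Ω → K, Measurable V ∧ ∀ ω, g ω (V ω) = W ω := by
  classical
  set e : ℕ → K := TopologicalSpace.denseSeq K with he_def
  have he : DenseRange e := TopologicalSpace.denseRange_denseSeq K
  set r : ℕ → ℝ := fun n => (1/2 : ℝ)^n with hr_def
  have hrpos : ∀ n, 0 < r n := fun n => by positivity
  -- the "approximate fiber" sets
  set A : K → ℝ → Set Ω := fun q ρ => {ω | ∃ t, dist q t ≤ ρ ∧ g ω t = W ω} with hA_def
  have hone : Tendsto (fun m : ℕ => 1/((m:ℝ)+1)) atTop (𝓝 0) :=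
    tendsto_one_div_add_atTop_nhds_zero_nat
  have hA : ∀ (q : K) (ρ : ℝ), MeasurableSet (A q ρ) := by
    intro q ρ
    have hrepr : A q ρ = ⋂ m : ℕ, ⋃ k : ℕ,
        {ω | dist q (e k) ≤ ρ + 1/((m:ℝ)+1) ∧ dist (g ω (e k)) (W ω) ≤ 1/((m:ℝ)+1)} := by
      ext ω
      simp only [Set.mem_iInter, Set.mem_iUnion, Set.mem_setOf_eq, hA_def]
      constructor
      · rintro ⟨t, htd, hte⟩ m
        have hpos : (0:ℝ) < 1/((m:ℝ)+1) := by positivity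
        obtain ⟨δ, hδpos, hδ⟩ := Metric.continuous_iff.mp (hc ω) t _ hpos
        obtain ⟨k, hk⟩ := he.exists_dist_lt t (lt_min hδpos hpos)
        refine ⟨k, ?_, ?_⟩
        · have hh : dist t (e k) < 1/((m:ℝ)+1) := (lt_min_iff.mp hk).2
          have := dist_triangle q t (e k)
          linarith
        · have hd : dist (e k) t < δ := by
            rw [dist_comm]; exact (lt_min_iff.mp hk).1
          have := hδ (e k) hd
          rw [hte] at this
          exact le_of_lt this
      · intro h
        choose kk hk1 hk2 using h
        obtain ⟨t, φ, hφ, hconv⟩ := CompactSpace.tendsto_subseq (fun m => e (kk m))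
        have hφm : ∀ m, 1/((φ m : ℝ)+1) ≤ 1/((m:ℝ)+1) := by
          intro m
          apply one_div_le_one_div_of_le (by positivity)
          have : (m:ℝ) ≤ (φ m : ℝ) := by exact_mod_cast hφ.le_apply
          linarith
        have hzero : Tendsto (fun m : ℕ => 1/((φ m:ℝ)+1)) atTop (𝓝 0) := by
          apply squeeze_zero (fun m => by positivity) hφm hone
        refine ⟨t, ?_, ?_⟩
        · have h1 : Tendsto (fun m => dist q (e (kk (φ m)))) atTop (𝓝 (dist q t)) :=
            (Continuous.tendsto (continuous_const.dist continuous_id) t).comp hconv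
          have h2 : Tendsto (fun m : ℕ => ρ + 1/((φ m:ℝ)+1)) atTop (𝓝 ρ) := by
            simpa using tendsto_const_nhds.add hzero
          exact le_of_tendsto_of_tendsto' h1 h2 (fun m => hk1 (φ m))
        · have h1 : Tendsto (fun m => dist (g ω (e (kk (φ m)))) (W ω)) atTop
              (𝓝 (dist (g ω t) (W ω))) :=
            (Continuous.tendsto ((hc ω).dist continuous_const) t).comp hconv
          have h3 : dist (g ω t) (W ω) ≤ 0 :=
            le_of_tendsto_of_tendsto' h1 hzero (fun m => hk2 (φ m))
          exact dist_le_zero.mp h3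
    rw [hrepr]
    refine MeasurableSet.iInter fun m => MeasurableSet.iUnion fun k => ?_
    by_cases hq : dist q (e k) ≤ ρ + 1/((m:ℝ)+1)
    · have : {ω | dist q (e k) ≤ ρ + 1/((m:ℝ)+1) ∧ dist (g ω (e k)) (W ω) ≤ 1/((m:ℝ)+1)}
          = {ω | dist (g ω (e k)) (W ω) ≤ 1/((m:ℝ)+1)} := by
        ext ω
        simp only [Set.mem_setOf_eq]
        exact ⟨fun h => h.2, fun h => ⟨hq, h⟩⟩
      rw [this]
      exact measurableSet_le (hm (e k)) measurable_const
    · have : {ω | dist q (e k) ≤ ρ + 1/((m:ℝ)+1) ∧ dist (g ω (e k)) (W ω) ≤ 1/((m:ℝ)+1)}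
          = ∅ := by
        ext ω
        simp only [Set.mem_setOf_eq, Set.mem_empty_iff_false, iff_false]
        exact fun h => hq h.1
      rw [this]; exact MeasurableSet.empty
  -- recursive construction of approximating indices
  set k : ℕ → Ω → ℕ := fun n => n.rec
    (fun ω => if h : ∃ m, ω ∈ A (e m) (r 0) then Nat.find h else 0)
    (fun n ih ω => if h : ∃ m, ω ∈ A (e m) (r (n+1)) ∧
        dist (e m) (e (ih ω)) ≤ r n + r (n+1) then Nat.find h else 0) with hk_def
  have hex0 : ∀ ω, ∃ m, ω ∈ A (e m) (r 0) := by
    intro ω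
    obtain ⟨t, ht⟩ := hmem ω
    obtain ⟨m, hm'⟩ := he.exists_dist_lt t (hrpos 0)
    exact ⟨m, ⟨t, by rw [dist_comm] at hm'; exact le_of_lt hm', ht⟩⟩
  have hk0 : ∀ ω, k 0 ω = Nat.find (hex0 ω) := fun ω => dif_pos (hex0 ω)
  -- invariant and step existence
  have hexS : ∀ n ω, ω ∈ A (e (k n ω)) (r n) → ∃ m, ω ∈ A (e m) (r (n+1)) ∧
      dist (e m) (e (k n ω)) ≤ r n + r (n+1) := by
    intro n ω hinv
    obtain ⟨t, htd, hte⟩ := hinv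
    obtain ⟨m, hm'⟩ := he.exists_dist_lt t (hrpos (n+1))
    rw [dist_comm] at hm'
    refine ⟨m, ⟨t, le_of_lt hm', hte⟩, ?_⟩
    calc dist (e m) (e (k n ω)) ≤ dist (e m) t + dist t (e (k n ω)) := dist_triangle _ _ _
      _ ≤ r n + r (n+1) := by rw [dist_comm t]; linarith
  have hinv : ∀ n ω, ω ∈ A (e (k n ω)) (r n) := by
    intro n
    induction n with
    | zero => intro ω; rw [hk0 ω]; exact Nat.find_spec (hex0 ω)
    | succ n ih =>
      intro ω
      have hex := hexS n ω (ih ω)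
      have : k (n+1) ω = Nat.find hex := dif_pos hex
      rw [this]
      exact (Nat.find_spec hex).1
  have hkS : ∀ n ω, k (n+1) ω = Nat.find (hexS n ω (hinv n ω)) :=
    fun n ω => dif_pos _
  have hcauchy : ∀ n ω, dist (e (k (n+1) ω)) (e (k n ω)) ≤ r n + r (n+1) := by
    intro n ω
    rw [hkS n ω]
    exact (Nat.find_spec (hexS n ω (hinv n ω))).2
  -- measurability of the indices
  have hkm : ∀ n, Measurable (k n) := by
    intro n
    induction n with
    | zero =>
      apply measurable_to_countable'
      intro m
      have : k 0 ⁻¹' {m} = A (e m) (r 0) ∩ ⋂ l : ℕ, ⋂ _ : l < m, (A (e l) (r 0))ᶜ := by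
        ext ω
        simp only [Set.mem_preimage, Set.mem_singleton_iff, hk0 ω, Nat.find_eq_iff,
          Set.mem_inter_iff, Set.mem_iInter, Set.mem_compl_iff]
        try tauto
      rw [this]
      exact (hA _ _).inter (MeasurableSet.iInter fun l => MeasurableSet.iInter
        fun _ => (hA _ _).compl)
    | succ n ih =>
      apply measurable_to_countable'
      intro m
      have key : ∀ l : ℕ, MeasurableSet {ω | ω ∈ A (e l) (r (n+1)) ∧
          dist (e l) (e (k n ω)) ≤ r n + r (n+1)} := by
        intro l
        have : {ω | ω ∈ A (e l) (r (n+1)) ∧ dist (e l) (e (k n ω)) ≤ r n + r (n+1)}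
            = A (e l) (r (n+1)) ∩ (k n) ⁻¹' {j | dist (e l) (e j) ≤ r n + r (n+1)} := rfl
        rw [this]
        exact (hA _ _).inter (ih (by trivial))
      have : k (n+1) ⁻¹' {m} = {ω | ω ∈ A (e m) (r (n+1)) ∧
            dist (e m) (e (k n ω)) ≤ r n + r (n+1)} ∩
          ⋂ l : ℕ, ⋂ _ : l < m, {ω | ω ∈ A (e l) (r (n+1)) ∧
            dist (e l) (e (k n ω)) ≤ r n + r (n+1)}ᶜ := by
        ext ω
        simp only [Set.mem_preimage, Set.mem_singleton_iff, hkS n ω, Nat.find_eq_iff,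
          Set.mem_inter_iff, Set.mem_iInter, Set.mem_compl_iff, Set.mem_setOf_eq]
        try tauto
      rw [this]
      exact (key m).inter (MeasurableSet.iInter fun l => MeasurableSet.iInter
        fun _ => (key l).compl)
  -- the approximating sequence and its limit
  set v : ℕ → Ω → K := fun n ω => e (k n ω) with hv_def
  have hvm : ∀ n, Measurable (v n) := fun n => measurable_from_top.comp (hkm n)
  have hcs : ∀ ω, CauchySeq (fun n => v n ω) := by
    intro ω
    apply cauchySeq_of_le_geometric (1/2 : ℝ) 4 (by norm_num)
    intro n
    have h1 := hcauchy n ω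
    have : r n + r (n+1) ≤ 4 * (1/2)^n := by
      simp only [hr_def]
      rw [pow_succ]
      have : (0:ℝ) < (1/2)^n := by positivity
      nlinarith
    rw [dist_comm]
    exact le_trans h1 this
  have hlim : ∀ ω, ∃ x, Tendsto (fun n => v n ω) atTop (𝓝 x) :=
    fun ω => cauchySeq_tendsto_of_complete (hcs ω)
  set V : Ω → K := fun ω => (hlim ω).choose with hV_def
  have hVt : ∀ ω, Tendsto (fun n => v n ω) atTop (𝓝 (V ω)) := fun ω => (hlim ω).choose_spec
  refine ⟨V, ?_, ?_⟩
  · exact measurable_of_tendsto_metrizable hvm (tendsto_pi_nhds.mpr hVt)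
  · intro ω
    -- extract witnesses from the invariant
    have hw : ∀ n, ∃ t : K, dist (v n ω) t ≤ r n ∧ g ω t = W ω := fun n => hinv n ω
    choose t htd hte using hw
    have hrz : Tendsto r atTop (𝓝 0) := by
      simp only [hr_def]
      exact tendsto_pow_atTop_nhds_zero_of_lt_one (by norm_num) (by norm_num)
    have htt : Tendsto t atTop (𝓝 (V ω)) := by
      rw [tendsto_iff_dist_tendsto_zero]
      apply squeeze_zero (fun n => dist_nonneg)
        (fun n => dist_triangle_left (t n) (V ω) (v n ω))
      have h1 : Tendsto (fun n => dist (v n ω) (t n)) atTop (𝓝 0) :=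
        squeeze_zero (fun n => dist_nonneg) htd hrz
      have h2 : Tendsto (fun n => dist (v n ω) (V ω)) atTop (𝓝 0) :=
        tendsto_iff_dist_tendsto_zero.mp (hVt ω)
      simpa using h1.add h2
    have : Tendsto (fun n => g ω (t n)) atTop (𝓝 (g ω (V ω))) :=
      ((hc ω).tendsto (V ω)).comp htt
    have hconst : Tendsto (fun n => g ω (t n)) atTop (𝓝 (W ω)) := by
      simp only [hte]; exact tendsto_const_nhds
    exact tendsto_nhds_unique this hconst

/-- Measurable implicit-function/selection lemma: if
`W(ω) ∈ f(X(ω),Y(ω),Z(ω),U)` for all `ω`, then there is a measurable `V : Ω → U` with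
`W(ω) = f(X(ω),Y(ω),Z(ω),V(ω))` for all `ω`. -/
theorem measurable_parametrization_selection
    (d₁ d₂ : ℕ) (hd₁ : 0 < d₁) (hd₂ : 0 < d₂)
    (Ω : Type) [MeasurableSpace Ω]
    (S : Type) [MetricSpace S] [CompactSpace S] [MeasurableSpace S] [BorelSpace S]
    (f : Euc d₁ → Euc d₂ → S → (closedBall (0 : Euc d₂) 1 : Set (Euc d₂)) → Euc d₂)
    (hf : Continuous (fun q :
      Euc d₁ × Euc d₂ × S × (closedBall (0 : Euc d₂) 1 : Set (Euc d₂)) =>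
      f q.1 q.2.1 q.2.2.1 q.2.2.2))
    (X : Ω → Euc d₁) (Y : Ω → Euc d₂) (Z : Ω → S) (W : Ω → Euc d₂)
    (hX : Measurable X) (hY : Measurable Y) (hZ : Measurable Z) (hW : Measurable W)
    (hmem : ∀ ω, W ω ∈ Set.range (f (X ω) (Y ω) (Z ω))) :
    ∃ V : Ω → (closedBall (0 : Euc d₂) 1 : Set (Euc d₂)),
      Measurable V ∧ ∀ ω, W ω = f (X ω) (Y ω) (Z ω) (V ω) := by
  haveI : CompactSpace (closedBall (0 : Euc d₂) 1 : Set (Euc d₂)) :=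
    isCompact_iff_compactSpace.mp (isCompact_closedBall _ _)
  haveI : Nonempty (closedBall (0 : Euc d₂) 1 : Set (Euc d₂)) :=
    ⟨⟨0, mem_closedBall_self zero_le_one⟩⟩
  have hgc : ∀ ω, Continuous (fun u : (closedBall (0 : Euc d₂) 1 : Set (Euc d₂)) =>
      f (X ω) (Y ω) (Z ω) u) := fun ω =>
    hf.comp (continuous_const.prodMk (continuous_const.prodMk
      (continuous_const.prodMk continuous_id)))
  have hgm : ∀ u : (closedBall (0 : Euc d₂) 1 : Set (Euc d₂)),
      Measurable (fun ω => dist (f (X ω) (Y ω) (Z ω) u) (W ω)) := by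
    intro u
    have hcont : Continuous (fun p : Euc d₁ × Euc d₂ × S => f p.1 p.2.1 p.2.2 u) :=
      hf.comp (continuous_fst.prodMk (((continuous_fst.comp continuous_snd)).prodMk
        ((continuous_snd.comp continuous_snd).prodMk continuous_const)))
    have : Measurable (fun ω => f (X ω) (Y ω) (Z ω) u) :=
      hcont.measurable.comp (hX.prodMk (hY.prodMk hZ))
    exact this.dist hW
  obtain ⟨V, hVm, hV⟩ := selection_aux (fun ω u => f (X ω) (Y ω) (Z ω) u) W hgc hgm
    (fun ω => hmem ω)
  exact ⟨V, hVm, fun ω => (hV ω).symm⟩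
end

section
/- Envelope theorem: let C : ℝ^{d₁} → ℝ^{d₂} be a linear map, w ∈ ℝ^{d₂}, Ĵ : ℝ^{d₁} → ℝ a continuous function, and define L(x,y) := Ĵ(x) + ⟨y, Cx − w⟩. Let T > 0 and let y : [0,T] → ℝ^{d₂} satisfy y(t) = y(0) + ∫_0^t g(q) dq for all t ∈ [0,T], where g : [0,T] → ℝ^{d₂} is integrable. Let λ : ℝ^{d₂} → ℝ^{d₁} be continuous and satisfy, for some K' > 0, L(λ(y'), y') = inf_{x ∈ ℝ^{d₁}} L(x, y') and ‖λ(y')‖ ≤ K'(1+‖y'‖) for every y' ∈ ℝ^{d₂}. Then: (i) for every fixed x ∈ ℝ^{d₁} and every t ∈ [0,T], L(x, y(t)) = L(x, y(0)) + ∫_0^t ⟨g(q), Cx − w⟩ dq; and (ii) the value function V(t) := inf_{x ∈ ℝ^{d₁}} L(x, y(t)) satisfies V(t) = V(0) + ∫_0^t ⟨g(q), Cλ(y(q)) − w⟩ dq for every t ∈ [0,T]. -/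
open MeasureTheory Metric Filter Topology
open scoped Pointwise NNReal ENNReal RealInnerProductSpace

lemma inner_intervalIntegral {n : ℕ} {a b : ℝ} {f : ℝ → Euc n}
    (hf : IntervalIntegrable f volume a b) (c : Euc n) :
    ∫ q in a..b, ⟪c, f q⟫ = ⟪c, ∫ q in a..b, f q⟫ := by
  rw [intervalIntegral, intervalIntegral, integral_inner hf.1 c, integral_inner hf.2 c,
    inner_sub_right]

/-- Envelope theorem for the Lagrangian `L(x,y) = Ĵ(x) + ⟨y, Cx − w⟩` along an
absolutely continuous curve `y(t) = y(0) + ∫₀ᵗ g`. -/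
theorem envelope_theorem
    (d₁ d₂ : ℕ) (hd₁ : 0 < d₁) (hd₂ : 0 < d₂)
    (C : Euc d₁ →ₗ[ℝ] Euc d₂) (w : Euc d₂)
    (Jhat : Euc d₁ → ℝ) (hJhat : Continuous Jhat)
    (L : Euc d₁ → Euc d₂ → ℝ)
    (hL : ∀ x y, L x y = Jhat x + ⟪y, C x - w⟫)
    (T : ℝ) (hT : 0 < T)
    (g : ℝ → Euc d₂) (hg : IntervalIntegrable g volume 0 T)
    (yf : ℝ → Euc d₂)
    (hyf : ∀ t ∈ Set.Icc (0 : ℝ) T, yf t = yf 0 + ∫ q in (0 : ℝ)..t, g q)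
    (lam : Euc d₂ → Euc d₁) (hlam : Continuous lam)
    (K' : ℝ) (hK' : 0 < K')
    -- λ(y') attains the infimum of L(·,y') and has linear growth
    (hmin : ∀ y' : Euc d₂, ∀ x : Euc d₁, L (lam y') y' ≤ L x y')
    (hgrow : ∀ y' : Euc d₂, ‖lam y'‖ ≤ K' * (1 + ‖y'‖)) :
    -- (i) for fixed x, t ↦ L(x,y(t)) is absolutely continuous with the stated derivative
    (∀ x : Euc d₁, ∀ t ∈ Set.Icc (0 : ℝ) T,
      L x (yf t) = L x (yf 0) + ∫ q in (0 : ℝ)..t, ⟪g q, C x - w⟫) ∧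
    -- (ii) the value function V(t) = inf_x L(x,y(t)) = L(λ(y(t)),y(t)) satisfies the
    -- envelope formula
    (∀ t ∈ Set.Icc (0 : ℝ) T,
      L (lam (yf t)) (yf t) = L (lam (yf 0)) (yf 0) +
        ∫ q in (0 : ℝ)..t, ⟪g q, C (lam (yf q)) - w⟫) := by
  -- sub-interval integrability of g
  have huIcc : Set.uIcc (0:ℝ) T = Set.Icc 0 T := Set.uIcc_of_le hT.le
  have hgsub : ∀ s ∈ Set.Icc (0:ℝ) T, ∀ t ∈ Set.Icc (0:ℝ) T, IntervalIntegrable g volume s t := by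
    intro s hs t ht
    exact hg.mono_set (by rw [huIcc]; exact Set.uIcc_subset_Icc hs ht)
  -- key: generalized part (i)
  have key : ∀ (x : Euc d₁), ∀ s ∈ Set.Icc (0:ℝ) T, ∀ t ∈ Set.Icc (0:ℝ) T,
      L x (yf t) = L x (yf s) + ∫ q in s..t, ⟪g q, C x - w⟫ := by
    intro x s hs t ht
    have h1 : yf t - yf s = ∫ q in s..t, g q := by
      rw [hyf t ht, hyf s hs]
      rw [add_sub_add_left_eq_sub]
      rw [← intervalIntegral.integral_add_adjacent_intervals (hgsub 0 (Set.left_mem_Icc.2 hT.le) s hs) (hgsub s hs t ht)]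
      abel
    have h2 : ∫ q in s..t, ⟪g q, C x - w⟫ = ⟪yf t - yf s, C x - w⟫ := by
      rw [h1, real_inner_comm, ← inner_intervalIntegral (hgsub s hs t ht) (C x - w)]
      exact intervalIntegral.integral_congr fun q _ => real_inner_comm _ _
    rw [hL, hL, h2, inner_sub_left]
    ring
  -- continuity of yf on Icc
  have hyc : ContinuousOn yf (Set.Icc 0 T) := by
    have h1 : ContinuousOn (fun t => yf 0 + ∫ q in (0:ℝ)..t, g q) (Set.Icc 0 T) := by
      refine ContinuousOn.add continuousOn_const ?_
      have := intervalIntegral.continuousOn_primitive_interval' hg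
        (a := 0) (by rw [huIcc]; exact Set.left_mem_Icc.2 hT.le)
      rwa [huIcc] at this
    exact h1.congr hyf
  -- Φ q = C (lam (yf q)) - w
  set Φ : ℝ → Euc d₂ := fun q => C (lam (yf q)) - w with hΦ
  have hΦc : ContinuousOn Φ (Set.Icc 0 T) :=
    ((C.continuous_of_finiteDimensional.comp hlam).comp_continuousOn hyc).sub continuousOn_const
  -- bound on Φ
  obtain ⟨M, hM⟩ := isCompact_Icc.exists_bound_of_continuousOn hΦc
  -- integrability of q ↦ ⟪g q, Φ q⟫ on Icc 0 T
  have hgicc : IntegrableOn g (Set.Icc 0 T) volume :=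
    (intervalIntegrable_iff_integrableOn_Icc_of_le hT.le).mp hg
  have hipIcc : IntegrableOn (fun q => ⟪g q, Φ q⟫) (Set.Icc 0 T) volume := by
    refine Integrable.mono' ((hgicc.norm.mul_const M)) ?_ ?_
    · exact hgicc.aestronglyMeasurable.inner (hΦc.aestronglyMeasurable measurableSet_Icc)
    · filter_upwards [ae_restrict_mem measurableSet_Icc] with q hq
      calc ‖⟪g q, Φ q⟫‖ ≤ ‖g q‖ * ‖Φ q‖ := norm_inner_le_norm _ _
        _ ≤ ‖g q‖ * M := by
            exact mul_le_mul_of_nonneg_left (hM q hq) (norm_nonneg _)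
  have hip : ∀ s ∈ Set.Icc (0:ℝ) T, ∀ t ∈ Set.Icc (0:ℝ) T,
      IntervalIntegrable (fun q => ⟪g q, Φ q⟫) volume s t :=
    fun s hs t ht => (hipIcc.mono_set (Set.uIcc_subset_Icc hs ht)).intervalIntegrable
  have hnormint : ∀ s ∈ Set.Icc (0:ℝ) T, ∀ t ∈ Set.Icc (0:ℝ) T,
      IntervalIntegrable (fun q => ‖g q‖) volume s t :=
    fun s hs t ht => by
      have h : IntegrableOn (fun q => ‖g q‖) (Set.Icc 0 T) volume := hgicc.norm
      exact (h.mono_set (Set.uIcc_subset_Icc hs ht)).intervalIntegrable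
  -- integrability of ⟪g q, c⟫ for constant c
  have hcint : ∀ c : Euc d₂, ∀ s ∈ Set.Icc (0:ℝ) T, ∀ t ∈ Set.Icc (0:ℝ) T,
      IntervalIntegrable (fun q => ⟪g q, c⟫) volume s t := by
    intro c s hs t ht
    have h1 : IntegrableOn (fun q => ⟪g q, c⟫) (Set.Icc 0 T) volume := by
      have h2 : IntegrableOn (fun q => ⟪c, g q⟫) (Set.Icc 0 T) volume :=
        (innerSL ℝ c).integrable_comp hgicc
      exact h2.congr_fun (fun q _ => real_inner_comm _ _) measurableSet_Icc
    exact (h1.mono_set (Set.uIcc_subset_Icc hs ht)).intervalIntegrable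
  -- value function
  set V : ℝ → ℝ := fun t => L (lam (yf t)) (yf t) with hV
  have key2 : ∀ s ∈ Set.Icc (0:ℝ) T, ∀ t ∈ Set.Icc (0:ℝ) T,
      V t - V s ≤ ∫ q in s..t, ⟪g q, C (lam (yf s)) - w⟫ := by
    intro s hs t ht
    have h1 : V t ≤ L (lam (yf s)) (yf t) := hmin (yf t) (lam (yf s))
    have h2 := key (lam (yf s)) s hs t ht
    simp only [hV]
    linarith
  -- per-interval two-sided estimate
  have est : ∀ s ∈ Set.Icc (0:ℝ) T, ∀ t ∈ Set.Icc (0:ℝ) T, s ≤ t → ∀ ε : ℝ, 0 ≤ ε →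
      (∀ q ∈ Set.Icc s t, ‖C (lam (yf s)) - C (lam (yf q))‖ ≤ ε ∧
        ‖C (lam (yf t)) - C (lam (yf q))‖ ≤ ε) →
      |V t - V s - ∫ q in s..t, ⟪g q, Φ q⟫| ≤ ε * ∫ q in s..t, ‖g q‖ := by
    intro s hs t ht hst ε hε hb
    have hqmem : ∀ q ∈ Set.Icc s t, q ∈ Set.Icc (0:ℝ) T :=
      fun q hq => ⟨le_trans hs.1 hq.1, le_trans hq.2 ht.2⟩
    have hipst := hip s hs t ht
    have hnst := hnormint s hs t ht
    have hεg : IntervalIntegrable (fun q => ‖g q‖ * ε) volume s t := hnst.mul_const ε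
    have hdiff : ∀ c : Euc d₂, (∫ q in s..t, ⟪g q, c - w⟫) - (∫ q in s..t, ⟪g q, Φ q⟫)
        = ∫ q in s..t, ⟪g q, c - C (lam (yf q))⟫ := by
      intro c
      rw [← intervalIntegral.integral_sub (hcint (c - w) s hs t ht) hipst]
      refine intervalIntegral.integral_congr fun q _ => ?_
      rw [← inner_sub_right]
      congr 1
      simp only [hΦ]
      abel
    have hintub : ∀ c : Euc d₂, (∀ q ∈ Set.Icc s t, ‖c - C (lam (yf q))‖ ≤ ε) →
        |∫ q in s..t, ⟪g q, c - C (lam (yf q))⟫| ≤ ε * ∫ q in s..t, ‖g q‖ := by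
      intro c hc
      have hint : IntervalIntegrable (fun q => ⟪g q, c - C (lam (yf q))⟫) volume s t := by
        have heq : (fun q => ⟪g q, c - w⟫ - ⟪g q, Φ q⟫)
            = fun q => ⟪g q, c - C (lam (yf q))⟫ := by
          funext q
          rw [← inner_sub_right]
          congr 1
          simp only [hΦ]
          abel
        rw [← heq]
        exact (hcint (c - w) s hs t ht).sub hipst
      rw [abs_le]
      constructor
      · have h1 : ∀ q ∈ Set.Icc s t, -(‖g q‖ * ε) ≤ ⟪g q, c - C (lam (yf q))⟫ := by
          intro q hq
          have := abs_real_inner_le_norm (g q) (c - C (lam (yf q)))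
          have h2 : ‖g q‖ * ‖c - C (lam (yf q))‖ ≤ ‖g q‖ * ε :=
            mul_le_mul_of_nonneg_left (hc q hq) (norm_nonneg _)
          have := abs_le.mp (this.trans h2)
          linarith [this.1]
        have := intervalIntegral.integral_mono_on hst (hεg.neg) hint
          (fun q hq => h1 q hq)
        simp only [Pi.neg_apply] at this
        rw [intervalIntegral.integral_neg] at this
        have h3 : ∫ q in s..t, ‖g q‖ * ε = ε * ∫ q in s..t, ‖g q‖ := by
          rw [← intervalIntegral.integral_const_mul]
          exact intervalIntegral.integral_congr fun q _ => mul_comm _ _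
        linarith
      · have h1 : ∀ q ∈ Set.Icc s t, ⟪g q, c - C (lam (yf q))⟫ ≤ ‖g q‖ * ε := by
          intro q hq
          have := real_inner_le_norm (g q) (c - C (lam (yf q)))
          have h2 : ‖g q‖ * ‖c - C (lam (yf q))‖ ≤ ‖g q‖ * ε :=
            mul_le_mul_of_nonneg_left (hc q hq) (norm_nonneg _)
          linarith
        have := intervalIntegral.integral_mono_on hst hint hεg (fun q hq => h1 q hq)
        have h3 : ∫ q in s..t, ‖g q‖ * ε = ε * ∫ q in s..t, ‖g q‖ := by
          rw [← intervalIntegral.integral_const_mul]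
          exact intervalIntegral.integral_congr fun q _ => mul_comm _ _
        linarith
    -- combine upper and lower bounds
    have hub : V t - V s - ∫ q in s..t, ⟪g q, Φ q⟫ ≤ ε * ∫ q in s..t, ‖g q‖ := by
      have h1 := key2 s hs t ht
      have h2 := hdiff (C (lam (yf s)))
      have h3 := hintub (C (lam (yf s))) (fun q hq => (hb q hq).1)
      have := abs_le.mp h3
      linarith [this.2]
    have hlb : -(ε * ∫ q in s..t, ‖g q‖) ≤ V t - V s - ∫ q in s..t, ⟪g q, Φ q⟫ := by
      have h1 := key2 t ht s hs
      rw [intervalIntegral.integral_symm] at h1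
      have h2 := hdiff (C (lam (yf t)))
      have h3 := hintub (C (lam (yf t))) (fun q hq => (hb q hq).2)
      have := abs_le.mp h3
      linarith [this.1]
    rw [abs_le]
    exact ⟨hlb, hub⟩
  -- uniform continuity of q ↦ C (lam (yf q)) on [0,T]
  have hΨc : ContinuousOn (fun q => (C (lam (yf q)) : Euc d₂)) (Set.Icc 0 T) :=
    (C.continuous_of_finiteDimensional.comp hlam).comp_continuousOn hyc
  have hΨu := Metric.uniformContinuousOn_iff_le.mp
    (isCompact_Icc.uniformContinuousOn_of_continuous hΨc)
  -- main envelope identity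
  have main : ∀ t ∈ Set.Icc (0:ℝ) T, V t = V 0 + ∫ q in (0:ℝ)..t, ⟪g q, Φ q⟫ := by
    intro t ht
    have h0T : (0:ℝ) ∈ Set.Icc (0:ℝ) T := Set.left_mem_Icc.2 hT.le
    set D := V t - V 0 - ∫ q in (0:ℝ)..t, ⟪g q, Φ q⟫ with hD
    set B := ∫ q in (0:ℝ)..t, ‖g q‖ with hB
    have hBnn : 0 ≤ B := intervalIntegral.integral_nonneg ht.1 (fun q _ => norm_nonneg _)
    have habs : ∀ ε : ℝ, 0 < ε → |D| ≤ ε * B := by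
      intro ε hε
      obtain ⟨δ, hδ, hδ'⟩ := hΨu ε hε
      obtain ⟨n, hn⟩ := exists_nat_gt (t / δ)
      have hn0 : 0 < (n:ℝ) := lt_of_le_of_lt (div_nonneg ht.1 hδ.le) hn
      have htn : t / n ≤ δ := by
        rw [div_le_iff₀ hn0]
        rw [div_lt_iff₀ hδ] at hn
        nlinarith
      set u : ℕ → ℝ := fun i => (i:ℝ) * t / n with hu
      have hu0 : u 0 = 0 := by simp [hu]
      have hun : u n = t := by
        simp only [hu]
        field_simp
      have humem : ∀ i ≤ n, u i ∈ Set.Icc (0:ℝ) T := by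
        intro i hi
        constructor
        · exact div_nonneg (mul_nonneg (Nat.cast_nonneg i) ht.1) hn0.le
        · have h1 : u i ≤ t := by
            simp only [hu]
            rw [div_le_iff₀ hn0]
            have h2 : (i:ℝ) ≤ n := Nat.cast_le.mpr hi
            nlinarith [mul_le_mul_of_nonneg_left h2 ht.1]
          exact h1.trans ht.2
      have hustep : ∀ i : ℕ, u (i+1) - u i = t / n := by
        intro i
        simp only [hu]
        push_cast
        ring
      have htn0 : 0 ≤ t / n := div_nonneg ht.1 hn0.le
      have humono : ∀ i : ℕ, u i ≤ u (i+1) := by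
        intro i
        have := hustep i
        linarith
      have hmesh : ∀ i : ℕ, u (i+1) - u i ≤ δ := by
        intro i
        rw [hustep i]
        exact htn
      -- telescoping
      have hVsum : ∑ i ∈ Finset.range n, (V (u (i+1)) - V (u i)) = V t - V 0 := by
        rw [Finset.sum_range_sub (fun i => V (u i))]
        rw [hu0, hun]
      have hIsum : ∑ i ∈ Finset.range n, ∫ q in u i..u (i+1), ⟪g q, Φ q⟫
          = ∫ q in (0:ℝ)..t, ⟪g q, Φ q⟫ := by
        rw [intervalIntegral.sum_integral_adjacent_intervals
          (fun k hk => hip (u k) (humem k (le_of_lt hk)) (u (k+1)) (humem (k+1) hk))]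
        rw [hu0, hun]
      have hNsum : ∑ i ∈ Finset.range n, ∫ q in u i..u (i+1), ‖g q‖ = B := by
        rw [intervalIntegral.sum_integral_adjacent_intervals
          (fun k hk => hnormint (u k) (humem k (le_of_lt hk)) (u (k+1)) (humem (k+1) hk))]
        rw [hu0, hun]
      have hper : ∀ i ∈ Finset.range n,
          |V (u (i+1)) - V (u i) - ∫ q in u i..u (i+1), ⟪g q, Φ q⟫|
            ≤ ε * ∫ q in u i..u (i+1), ‖g q‖ := by
        intro i hi
        rw [Finset.mem_range] at hi
        refine est (u i) (humem i hi.le) (u (i+1)) (humem (i+1) hi) (humono i) ε hε.le ?_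
        intro q hq
        have hqmem : q ∈ Set.Icc (0:ℝ) T :=
          ⟨(humem i hi.le).1.trans hq.1, hq.2.trans (humem (i+1) hi).2⟩
        constructor
        · have hd : dist (u i) q ≤ δ := by
            rw [Real.dist_eq, abs_le]
            constructor <;> [linarith [hq.2, hmesh i]; linarith [hq.1, hδ.le]]
          have := hδ' (u i) (humem i hi.le) q hqmem hd
          rwa [dist_eq_norm] at this
        · have hd : dist (u (i+1)) q ≤ δ := by
            rw [Real.dist_eq, abs_le]
            constructor <;> [linarith [hq.2, hδ.le]; linarith [hq.1, hmesh i]]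
          have := hδ' (u (i+1)) (humem (i+1) hi) q hqmem hd
          rwa [dist_eq_norm] at this
      have hDsum : D = ∑ i ∈ Finset.range n,
          (V (u (i+1)) - V (u i) - ∫ q in u i..u (i+1), ⟪g q, Φ q⟫) := by
        rw [Finset.sum_sub_distrib, hVsum, hIsum, hD]
      calc |D| ≤ ∑ i ∈ Finset.range n,
            |V (u (i+1)) - V (u i) - ∫ q in u i..u (i+1), ⟪g q, Φ q⟫| := by
              rw [hDsum]; exact Finset.abs_sum_le_sum_abs _ _
        _ ≤ ∑ i ∈ Finset.range n, ε * ∫ q in u i..u (i+1), ‖g q‖ :=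
              Finset.sum_le_sum hper
        _ = ε * B := by rw [← Finset.mul_sum, hNsum]
    have hD0 : |D| ≤ 0 := by
      refine le_of_forall_pos_le_add fun ε hε => ?_
      have h1 := habs (ε / (B + 1)) (by positivity)
      have h2 : ε / (B + 1) * B ≤ ε := by
        rw [div_mul_eq_mul_div, div_le_iff₀ (by positivity)]
        nlinarith
      linarith
    have : D = 0 := abs_eq_zero.mp (le_antisymm hD0 (abs_nonneg _))
    rw [hD] at this
    linarith
  have h0T : (0:ℝ) ∈ Set.Icc (0:ℝ) T := Set.left_mem_Icc.2 hT.le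
  exact ⟨fun x t ht => key x 0 h0T t ht, fun t ht => main t ht⟩
end

section
/- Let J : ℝ^{d₁} → ℝ be convex and suppose there is K > 0 such that every subgradient g of J at any point x (i.e. any g ∈ ℝ^{d₁} with J(x') ≥ J(x) + ⟨g, x' − x⟩ for all x' ∈ ℝ^{d₁}) satisfies ‖g‖ ≤ K(1+‖x‖). Fix r > 0, ε > 0, a linear map C : ℝ^{d₁} → ℝ^{d₂} and w ∈ ℝ^{d₂}, and define Ĵ(x) := J(x) + (ε/(2r²))‖x‖² + ((K+1)/2)·max{‖x‖² − r², 0} and L(x,y) := Ĵ(x) + ⟨y, Cx − w⟩. Then for every y ∈ ℝ^{d₂} the function x ↦ L(x,y) attains its infimum over ℝ^{d₁} at a unique point λ(y), and ‖λ(y)‖ ≤ K'(1+‖y‖), where K' := max{K, r, ‖C*‖} and C* is the adjoint of C. -/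
/-!
For fixed `y`, `x ↦ L x y` is a convex function plus `c‖x‖²` with `c = ε / (2r²) > 0`. A convex
function lies above some `a - b‖x‖`, so this sum is coercive, and it is strictly convex; hence it
has exactly one minimizer `x₀`.

If `‖x₀‖ > r`, then near `x₀` the penalty is the quadratic `(K+1)/2 (‖x‖² - r²)`, so minimality
says that `J + ⟪g, ·⟫` with `g = 2(c + (K+1)/2) x₀ + C* y` exceeds its value at `x₀` up to an
error `O(‖x - x₀‖²)`. For a convex function such a local quadratic bound already forces a global
minimum, so `-g` is a subgradient of `J` at `x₀`. The growth bound `‖g‖ ≤ K(1 + ‖x₀‖)` and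
`2c + K + 1 ≥ K + 1` then give `‖x₀‖ ≤ K + ‖C*‖‖y‖`.
-/

open MeasureTheory Metric Filter Topology
open scoped Pointwise NNReal ENNReal RealInnerProductSpace

open Set

section NormedSpace

variable {E : Type*} [NormedAddCommGroup E] [NormedSpace ℝ E] {f : E → ℝ}

theorem ConvexOn.exists_forall_sub_mul_norm_le (hf : ConvexOn ℝ univ f) (hf₀ : ContinuousAt f 0) :
    ∃ a b : ℝ, ∀ x, a - b * ‖x‖ ≤ f x := by
  obtain ⟨δ, hδ, hball⟩ := Metric.continuousAt_iff.1 hf₀ 1 one_pos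
  have hnear : ∀ x : E, ‖x‖ < δ → f 0 - 1 < f x := fun x hx => by
    have := hball (by simpa using hx)
    rw [Real.dist_eq] at this
    linarith [neg_abs_le (f x - f 0)]
  refine ⟨f 0 - 1, 2 / δ, fun x => ?_⟩
  rcases lt_or_ge ‖x‖ δ with hx | hx
  · have : 0 ≤ 2 / δ * ‖x‖ := by positivity
    linarith [hnear x hx]
  -- rescale `x` to the sphere of radius `δ / 2`, where `f` is close to `f 0`
  set s := δ / (2 * ‖x‖)
  have hxpos : 0 < ‖x‖ := hδ.trans_le hx
  have hs : 0 < s := by positivity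
  have hs1 : s ≤ 1 := by rw [div_le_one (by positivity)]; linarith
  have hsx : ‖s • x‖ < δ := by
    have : s * ‖x‖ = δ / 2 := by simp only [s]; field_simp
    rw [norm_smul, Real.norm_of_nonneg hs.le, this]; linarith
  have hconv : f (s • x) ≤ s * f x + (1 - s) * f 0 := by
    simpa using hf.2 (mem_univ x) (mem_univ 0) hs.le (by linarith) (by ring)
  have hs' : s * (2 / δ * ‖x‖) = 1 := by simp only [s]; field_simp
  have : 0 ≤ s * (f x - f 0 + 2 / δ * ‖x‖) := by
    rw [mul_add, hs']; linarith [hnear _ hsx]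
  linarith [(mul_nonneg_iff_of_pos_left hs).1 this]

theorem ConvexOn.isMinOn_of_eventually_le_add_mul_sq_norm_sub (hf : ConvexOn ℝ univ f) {x₀ : E}
    {a : ℝ} (h : ∀ᶠ x in 𝓝 x₀, f x₀ ≤ f x + a * ‖x - x₀‖ ^ 2) : IsMinOn f univ x₀ := by
  intro x _
  set v := x - x₀
  have hpath : Tendsto (fun t : ℝ => x₀ + t • v) (𝓝[>] 0) (𝓝 x₀) :=
    tendsto_nhdsWithin_of_tendsto_nhds <|
      (by fun_prop : Continuous fun t : ℝ => x₀ + t • v).tendsto' 0 x₀ (by simp)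
  have hlim : Tendsto (fun t : ℝ => f x + a * t * ‖v‖ ^ 2) (𝓝[>] 0) (𝓝 (f x)) :=
    tendsto_nhdsWithin_of_tendsto_nhds <|
      (by fun_prop : Continuous fun t : ℝ => f x + a * t * ‖v‖ ^ 2).tendsto' 0 (f x) (by simp)
  refine ge_of_tendsto hlim ?_
  filter_upwards [hpath.eventually h, Ioo_mem_nhdsGT one_pos] with t hloc ht
  -- convexity along the segment from `x₀` to `x` beats the quadratic error as `t → 0`
  have hconv : f (x₀ + t • v) ≤ (1 - t) * f x₀ + t * f x := by
    have hseg : (1 - t) • x₀ + t • x = x₀ + t • v := by simp only [v]; module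
    simpa [hseg] using hf.2 (mem_univ x₀) (mem_univ x) (show 0 ≤ 1 - t by linarith [ht.2])
      ht.1.le (by ring)
  rw [add_sub_cancel_left, norm_smul, Real.norm_of_nonneg ht.1.le] at hloc
  have : t * f x₀ ≤ t * (f x + a * t * ‖v‖ ^ 2) := by nlinarith
  exact le_of_mul_le_mul_left this ht.1

theorem convexOn_univ_max_sq_norm_sub_sq_zero (r : ℝ) :
    ConvexOn ℝ univ fun x : E => max (‖x‖ ^ 2 - r ^ 2) 0 :=
  ((convexOn_univ_norm.pow (fun x _ => norm_nonneg x) 2).sub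
    (concaveOn_const (r ^ 2) convex_univ)).sup (convexOn_const 0 convex_univ)

theorem norm_le_add_norm_of_norm_smul_add_le {x b : E} {K s : ℝ} (hs : K + 1 ≤ s)
    (h : ‖s • x + b‖ ≤ K * (1 + ‖x‖)) : ‖x‖ ≤ K + ‖b‖ := by
  have hsx : s * ‖x‖ ≤ ‖s • x + b‖ + ‖b‖ :=
    calc s * ‖x‖ ≤ ‖s • x‖ := by
          rw [norm_smul]; exact mul_le_mul_of_nonneg_right (Real.le_norm_self s) (norm_nonneg x)
      _ = ‖(s • x + b) - b‖ := by rw [add_sub_cancel_right]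
      _ ≤ ‖s • x + b‖ + ‖b‖ := norm_sub_le _ _
  nlinarith [mul_le_mul_of_nonneg_right hs (norm_nonneg x)]

end NormedSpace

section InnerProductSpace

variable {E : Type*} [NormedAddCommGroup E] [InnerProductSpace ℝ E] {f : E → ℝ}

theorem ConvexOn.existsUnique_isMinOn_add_mul_sq_norm [FiniteDimensional ℝ E]
    (hf : ConvexOn ℝ univ f) {c : ℝ} (hc : 0 < c) :
    ∃! x, IsMinOn (fun x => f x + c * ‖x‖ ^ 2) univ x := by
  have hcont : Continuous f := continuousOn_univ.1 (hf.continuousOn isOpen_univ)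
  obtain ⟨a, b, hab⟩ := hf.exists_forall_sub_mul_norm_le hcont.continuousAt
  have hquad : Tendsto (fun t : ℝ => t * (c * t - b) + a) atTop atTop :=
    tendsto_atTop_add_const_right _ a <| tendsto_id.atTop_mul_atTop₀ <|
      tendsto_atTop_add_const_right _ (-b) (tendsto_id.const_mul_atTop hc)
  have hcoer : Tendsto (fun x => f x + c * ‖x‖ ^ 2) (cocompact E) atTop :=
    tendsto_atTop_mono (fun x => by dsimp only [Function.comp_apply]; nlinarith [hab x])
      (hquad.comp tendsto_norm_cocompact_atTop)
  obtain ⟨x₀, hx₀⟩ := (by fun_prop : Continuous fun x => f x + c * ‖x‖ ^ 2).exists_forall_le hcoer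
  have hstrict : StrictConvexOn ℝ univ fun x => f x + c * ‖x‖ ^ 2 := by
    refine (strongConvexOn_iff_convex.2 ?_).strictConvexOn (by positivity : 0 < 2 * c)
    simpa using hf
  exact ⟨x₀, fun x _ => hx₀ x,
    fun y hy => hstrict.eq_of_isMinOn hy (fun x _ => hx₀ x) (mem_univ y) (mem_univ x₀)⟩

theorem ConvexOn.add_inner_sub_le_of_isMinOn_of_sq_lt_sq_norm {J : E → ℝ}
    (hJ : ConvexOn ℝ univ J) {c k r : ℝ} {b x₀ : E} (hx₀ : r ^ 2 < ‖x₀‖ ^ 2)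
    (hmin : IsMinOn (fun x => J x + c * ‖x‖ ^ 2 + k * max (‖x‖ ^ 2 - r ^ 2) 0 + ⟪b, x⟫) univ x₀)
    (x : E) : J x₀ + ⟪-((2 * (c + k)) • x₀ + b), x - x₀⟫ ≤ J x := by
  set g := (2 * (c + k)) • x₀ + b
  have hconv : ConvexOn ℝ univ fun x => J x + ⟪g, x⟫ := hJ.add ((innerₛₗ ℝ g).convexOn convex_univ)
  have hnear : ∀ᶠ y in 𝓝 x₀, r ^ 2 < ‖y‖ ^ 2 :=
    (continuous_norm.pow 2).continuousAt.eventually (lt_mem_nhds hx₀)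
  have hglobal := hconv.isMinOn_of_eventually_le_add_mul_sq_norm_sub (a := c + k) <| by
    filter_upwards [hnear] with y hy
    have hy' := isMinOn_univ_iff.1 hmin y
    rw [max_eq_left (by linarith), max_eq_left (by linarith)] at hy'
    rw [inner_add_left, inner_add_left, real_inner_smul_left, real_inner_smul_left,
      norm_sub_sq_real, real_inner_comm x₀ y, real_inner_self_eq_norm_sq]
    linear_combination hy'
  have hx := isMinOn_univ_iff.1 hglobal x
  rw [inner_neg_left, inner_sub_right]
  linarith

theorem ConvexOn.norm_le_of_isMinOn_penalized {J : E → ℝ} (hJ : ConvexOn ℝ univ J) {K : ℝ}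
    (hsub : ∀ x g : E, (∀ x', J x + ⟪g, x' - x⟫ ≤ J x') → ‖g‖ ≤ K * (1 + ‖x‖))
    {c k r : ℝ} (hr : 0 ≤ r) (hck : K + 1 ≤ 2 * (c + k)) {b x₀ : E}
    (hmin : IsMinOn (fun x => J x + c * ‖x‖ ^ 2 + k * max (‖x‖ ^ 2 - r ^ 2) 0 + ⟪b, x⟫) univ x₀) :
    ‖x₀‖ ≤ max r (K + ‖b‖) := by
  rcases le_or_gt ‖x₀‖ r with h | h
  · exact le_max_of_le_left h
  · refine le_max_of_le_right (norm_le_add_norm_of_norm_smul_add_le hck ?_)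
    rw [← norm_neg]
    exact hsub x₀ _ (hJ.add_inner_sub_le_of_isMinOn_of_sq_lt_sq_norm
      (pow_lt_pow_left₀ h hr two_ne_zero) hmin)

end InnerProductSpace

theorem penalized_lagrangian_unique_minimizer_general
    (d₁ d₂ : ℕ)
    (J : Euc d₁ → ℝ) (hJconv : ConvexOn ℝ Set.univ J)
    (K : ℝ) (hK : 0 < K)
    -- every subgradient of J at x has norm at most K(1+‖x‖)
    (hsub : ∀ x gsg : Euc d₁, (∀ x' : Euc d₁, J x + ⟪gsg, x' - x⟫ ≤ J x') →
      ‖gsg‖ ≤ K * (1 + ‖x‖))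
    (r ε : ℝ) (hr : 0 < r) (hε : 0 < ε)
    (C : Euc d₁ →L[ℝ] Euc d₂) (w : Euc d₂)
    (Jhat : Euc d₁ → ℝ)
    (hJhat : ∀ x, Jhat x =
      J x + (ε / (2 * r ^ 2)) * ‖x‖ ^ 2 + ((K + 1) / 2) * max (‖x‖ ^ 2 - r ^ 2) 0)
    (L : Euc d₁ → Euc d₂ → ℝ)
    (hL : ∀ x y, L x y = Jhat x + ⟪y, C x - w⟫) :
    ∀ y : Euc d₂, ∃ xstar : Euc d₁,
      (∀ x : Euc d₁, L xstar y ≤ L x y) ∧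
      (∀ x' : Euc d₁, (∀ x : Euc d₁, L x' y ≤ L x y) → x' = xstar) ∧
      ‖xstar‖ ≤ max (max K r) ‖ContinuousLinearMap.adjoint C‖ * (1 + ‖y‖) := by
  intro y
  set c := ε / (2 * r ^ 2)
  set k := (K + 1) / 2
  set b := ContinuousLinearMap.adjoint C y
  have hc : 0 < c := by positivity
  have hk : 2 * k = K + 1 := by ring
  have hLy : ∀ x, L x y = (J x + k * max (‖x‖ ^ 2 - r ^ 2) 0 + ⟪b, x⟫ - ⟪y, w⟫) + c * ‖x‖ ^ 2 := by
    intro x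
    rw [hL, hJhat, inner_sub_right, ContinuousLinearMap.adjoint_inner_left]
    ring
  have hconv : ConvexOn ℝ univ
      fun x => J x + k * max (‖x‖ ^ 2 - r ^ 2) 0 + ⟪b, x⟫ - ⟪y, w⟫ :=
    ((hJconv.add ((convexOn_univ_max_sq_norm_sub_sq_zero r).smul (by positivity))).add
      ((innerₛₗ ℝ b).convexOn convex_univ)).add_const _
  obtain ⟨x₀, hmin, huniq⟩ := hconv.existsUnique_isMinOn_add_mul_sq_norm hc
  rw [← funext hLy] at hmin huniq
  refine ⟨x₀, isMinOn_univ_iff.1 hmin, fun x' hx' => huniq x' (isMinOn_univ_iff.2 hx'), ?_⟩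
  have hbound : ‖x₀‖ ≤ max r (K + ‖b‖) := by
    refine hJconv.norm_le_of_isMinOn_penalized (c := c) (k := k) hsub hr.le (by linarith)
      (isMinOn_univ_iff.2 fun x => ?_)
    linarith [isMinOn_univ_iff.1 hmin x, hLy x, hLy x₀]
  have hb : ‖b‖ ≤ ‖ContinuousLinearMap.adjoint C‖ * ‖y‖ :=
    (ContinuousLinearMap.adjoint C).le_opNorm y
  set K' := max (max K r) ‖ContinuousLinearMap.adjoint C‖
  have hKK' : K ≤ K' := (le_max_left K r).trans (le_max_left _ _)
  have hrK' : r ≤ K' := (le_max_right K r).trans (le_max_left _ _)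
  have hCK' : ‖ContinuousLinearMap.adjoint C‖ ≤ K' := le_max_right _ _
  have hyK' : 0 ≤ K' * ‖y‖ := mul_nonneg (hr.le.trans hrK') (norm_nonneg y)
  refine hbound.trans (max_le ?_ ?_)
  · linarith
  · nlinarith [mul_le_mul_of_nonneg_right hCK' (norm_nonneg y)]

/-- The penalized Lagrangian `L(x,y) = Ĵ(x) + ⟨y, Cx − w⟩`, with
`Ĵ(x) = J(x) + (ε/(2r²))‖x‖² + ((K+1)/2)·max{‖x‖² − r², 0}`, has for every `y` a unique
minimizer `λ(y)` in `x`, which satisfies `‖λ(y)‖ ≤ K'(1+‖y‖)` with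
`K' = max{K, r, ‖C*‖}`. -/
theorem penalized_lagrangian_unique_minimizer
    (d₁ d₂ : ℕ) (hd₁ : 0 < d₁) (hd₂ : 0 < d₂)
    (J : Euc d₁ → ℝ) (hJconv : ConvexOn ℝ Set.univ J)
    (K : ℝ) (hK : 0 < K)
    -- every subgradient of J at x has norm at most K(1+‖x‖)
    (hsub : ∀ x gsg : Euc d₁, (∀ x' : Euc d₁, J x + ⟪gsg, x' - x⟫ ≤ J x') →
      ‖gsg‖ ≤ K * (1 + ‖x‖))
    (r ε : ℝ) (hr : 0 < r) (hε : 0 < ε)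
    (C : Euc d₁ →L[ℝ] Euc d₂) (w : Euc d₂)
    (Jhat : Euc d₁ → ℝ)
    (hJhat : ∀ x, Jhat x =
      J x + (ε / (2 * r ^ 2)) * ‖x‖ ^ 2 + ((K + 1) / 2) * max (‖x‖ ^ 2 - r ^ 2) 0)
    (L : Euc d₁ → Euc d₂ → ℝ)
    (hL : ∀ x y, L x y = Jhat x + ⟪y, C x - w⟫) :
    ∀ y : Euc d₂, ∃ xstar : Euc d₁,
      (∀ x : Euc d₁, L xstar y ≤ L x y) ∧
      (∀ x' : Euc d₁, (∀ x : Euc d₁, L x' y ≤ L x y) → x' = xstar) ∧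
      ‖xstar‖ ≤ max (max K r) ‖ContinuousLinearMap.adjoint C‖ * (1 + ‖y‖) :=
  penalized_lagrangian_unique_minimizer_general d₁ d₂ J hJconv K hK hsub r ε hr hε C w Jhat hJhat L
    hL
end

section
/- Let C : ℝ^{d₁} → ℝ^{d₂} be a linear map, w ∈ ℝ^{d₂}, Ĵ : ℝ^{d₁} → ℝ a continuous function, and define L(x,y) := Ĵ(x) + ⟨y, Cx − w⟩. Let λ : ℝ^{d₂} → ℝ^{d₁} be continuous and satisfy, for some K' > 0, L(λ(y'), y') = inf_{x ∈ ℝ^{d₁}} L(x, y') and ‖λ(y')‖ ≤ K'(1+‖y'‖) for every y' ∈ ℝ^{d₂}, and assume the dual function Q(y') := inf_{x ∈ ℝ^{d₁}} L(x, y') is bounded above on ℝ^{d₂}. Let y : [0,∞) → ℝ^{d₂} satisfy y(t) = y(0) + ∫_0^t (Cλ(y(q)) − w) dq for all t ≥ 0 and sup_{t ≥ 0} ‖y(t)‖ < ∞. Then ‖Cλ(y(t)) − w‖ → 0 as t → ∞, and dist(y(t), 𝒴) → 0 as t → ∞, where 𝒴 := {y' ∈ ℝ^{d₂} : Cλ(y')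 = w} and dist denotes the Euclidean distance from a point to a set. -/
open MeasureTheory Metric Filter Topology
open scoped Pointwise NNReal ENNReal RealInnerProductSpace

/-!
The dual function `Q y = L (λ y) y` is concave with supergradient `G y = C (λ y) - w`:
`Q u ≤ L (λ v) u = Q v + ⟪u - v, G v⟫`. Pinching `Q ∘ y` between the supergradient
inequalities at `y s` and `y t` shows that along the flow `ẏ = G y` it has derivative
`‖G (y t)‖²`. So `Q ∘ y` increases to a finite limit, and since `t ↦ ‖G (y t)‖²` is uniformly
continuous (`y` is Lipschitz and stays in a compact ball), the mean value theorem on short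
intervals forces `‖G (y t)‖ → 0` (Barbalat's argument). On a compact set, points where `‖G‖`
is small are uniformly close to the zero set of `G`, which gives the second limit.
-/

open Set Asymptotics

variable {E : Type*} [NormedAddCommGroup E]

theorem integrableOn_Ioc_of_forall_lt {f : ℝ → E} {a b R : ℝ}
    (hf : ∀ c < b, IntegrableOn f (Ioc a c)) (hR : ∀ x ∈ Ioc a b, ‖f x‖ ≤ R) :
    IntegrableOn f (Ioc a b) := by
  have hb : Tendsto (fun n : ℕ => b - 1 / (n + 1)) atTop (𝓝 b) := by
    simpa using (tendsto_const_nhds (x := b)).sub tendsto_one_div_add_atTop_nhds_zero_nat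
  have hmeas := (aecover_Ioc_of_Ioc (μ := volume) tendsto_const_nhds hb).aestronglyMeasurable
    fun n => (hf _ (sub_lt_self b Nat.one_div_pos_of_nat)).restrict.aestronglyMeasurable
  exact .of_bound measure_Ioc_lt_top hmeas R ((ae_restrict_mem measurableSet_Ioc).mono hR)

section IntegralEquation

variable [NormedSpace ℝ E] {G : E → E} {y : ℝ → E}

theorem intervalIntegrable_of_eq_add_integral {R : ℝ}
    (hy : ∀ t, 0 ≤ t → y t = y 0 + ∫ q in (0 : ℝ)..t, G (y q))
    (hR : ∀ t, 0 ≤ t → ‖G (y t)‖ ≤ R) {t : ℝ} (ht : 0 ≤ t) :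
    IntervalIntegrable (fun q => G (y q)) volume 0 t := by
  set S := {u ∈ Icc 0 t | IntervalIntegrable (fun q => G (y q)) volume 0 u}
  have hS0 : 0 ∈ S := ⟨⟨le_rfl, ht⟩, .refl⟩
  have hSbdd : BddAbove S := ⟨t, fun u hu => hu.1.2⟩
  set T := sSup S
  have hT0 : 0 ≤ T := le_csSup hSbdd hS0
  have hTt : T ≤ t := csSup_le ⟨0, hS0⟩ fun u hu => hu.1.2
  have hbelow : ∀ c < T, IntegrableOn (fun q => G (y q)) (Ioc 0 c) := by
    intro c hc
    obtain ⟨u, huS, hcu⟩ := exists_lt_of_lt_csSup ⟨0, hS0⟩ hc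
    exact huS.2.1.mono_set (Ioc_subset_Ioc_right hcu.le)
  have hIntT : IntegrableOn (fun q => G (y q)) (Ioc 0 T) :=
    integrableOn_Ioc_of_forall_lt hbelow fun x hx => hR x hx.1.le
  -- beyond `T` the integral takes its junk value `0`, so `y` stays at `y 0`
  have habove : EqOn (fun _ => G (y 0)) (fun q => G (y q)) (Ioc T t) := by
    intro s hs
    have hsS : s ∉ S := fun hsS => (le_csSup hSbdd hsS).not_gt hs.1
    have hs0 : 0 ≤ s := hT0.trans hs.1.le
    have hys : y s = y 0 := by
      rw [hy s hs0, intervalIntegral.integral_undef fun h => hsS ⟨⟨hs0, hs.2⟩, h⟩, add_zero]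
    simp only [hys]
  rw [intervalIntegrable_iff_integrableOn_Ioc_of_le ht, ← Ioc_union_Ioc_eq_Ioc hT0 hTt]
  exact hIntT.union
    ((integrableOn_const measure_Ioc_lt_top.ne).congr_fun habove measurableSet_Ioc)

theorem sub_eq_integral_of_eq_add_integral {R : ℝ}
    (hy : ∀ t, 0 ≤ t → y t = y 0 + ∫ q in (0 : ℝ)..t, G (y q))
    (hR : ∀ t, 0 ≤ t → ‖G (y t)‖ ≤ R) {s t : ℝ} (hs : 0 ≤ s) (ht : 0 ≤ t) :
    y t - y s = ∫ q in s..t, G (y q) := by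
  rw [hy t ht, hy s hs, add_sub_add_left_eq_sub, intervalIntegral.integral_interval_sub_left
    (intervalIntegrable_of_eq_add_integral hy hR ht)
    (intervalIntegrable_of_eq_add_integral hy hR hs)]

theorem lipschitzOnWith_of_eq_add_integral {R : ℝ≥0}
    (hy : ∀ t, 0 ≤ t → y t = y 0 + ∫ q in (0 : ℝ)..t, G (y q))
    (hR : ∀ t, 0 ≤ t → ‖G (y t)‖ ≤ R) :
    LipschitzOnWith R y (Ici 0) := by
  refine .of_dist_le_mul fun t ht s hs => ?_
  rw [dist_eq_norm, sub_eq_integral_of_eq_add_integral hy hR hs ht, Real.dist_eq]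
  refine intervalIntegral.norm_integral_le_of_norm_le_const fun q hq => hR q ?_
  rcases le_total s t with hst | hts
  · exact hs.trans (uIoc_of_le hst ▸ hq).1.le
  · exact ht.trans (uIoc_of_ge hts ▸ hq).1.le

theorem hasDerivAt_of_eq_add_integral [CompleteSpace E] {R : ℝ≥0} (hG : Continuous G)
    (hy : ∀ t, 0 ≤ t → y t = y 0 + ∫ q in (0 : ℝ)..t, G (y q))
    (hR : ∀ t, 0 ≤ t → ‖G (y t)‖ ≤ R) {t : ℝ} (ht : 0 < t) :
    HasDerivAt y (G (y t)) t := by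
  have hcont : ContinuousOn (fun q => G (y q)) (Ioi 0) :=
    hG.comp_continuousOn ((lipschitzOnWith_of_eq_add_integral hy hR).continuousOn.mono
      Ioi_subset_Ici_self)
  have hprim := (intervalIntegral.integral_hasDerivAt_right
    (intervalIntegrable_of_eq_add_integral hy hR ht.le)
    (hcont.stronglyMeasurableAtFilter isOpen_Ioi t ht)
    (hcont.continuousAt (Ioi_mem_nhds ht))).const_add (y 0)
  exact hprim.congr_of_eventuallyEq <|
    eventually_of_mem (Ioi_mem_nhds ht) fun s hs => hy s hs.le

end IntegralEquation

theorem tendsto_zero_of_hasDerivAt_of_uniformContinuousOn {f h : ℝ → ℝ} {a M : ℝ}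
    (hderiv : ∀ t > a, HasDerivAt h (f t) t) (hf : ∀ t > a, 0 ≤ f t)
    (hfuc : UniformContinuousOn f (Ioi a)) (hM : ∀ t > a, h t ≤ M) :
    Tendsto f atTop (𝓝 0) := by
  have hmono : MonotoneOn h (Ioi a) := by
    refine monotoneOn_of_hasDerivWithinAt_nonneg (f' := f) (convex_Ioi a)
      (fun t ht => (hderiv t ht).continuousAt.continuousWithinAt) (fun t ht => ?_) fun t ht => ?_
    · rw [interior_Ioi] at ht
      exact (hderiv t ht).hasDerivWithinAt
    · rw [interior_Ioi] at ht
      exact hf t ht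
  obtain ⟨ℓ, hℓ⟩ : ∃ ℓ, Tendsto h atTop (𝓝 ℓ) := by
    have hmax : ∀ t, max t (a + 1) ∈ Ioi a := fun t =>
      (lt_add_one a).trans_le (le_max_right _ _)
    have hk : Monotone fun t => h (max t (a + 1)) := fun s t hst =>
      hmono (hmax s) (hmax t) (max_le_max_right _ hst)
    refine ⟨_, (tendsto_atTop_ciSup hk ⟨M, ?_⟩).congr' ?_⟩
    · rintro _ ⟨t, rfl⟩
      exact hM _ (hmax t)
    · filter_upwards [eventually_ge_atTop (a + 1)] with t ht
      rw [max_eq_left ht]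
  refine tendsto_order.2 ⟨fun b hb => ?_, fun ε hε => ?_⟩
  · filter_upwards [eventually_gt_atTop a] with t ht using hb.trans_le (hf t ht)
  obtain ⟨δ, hδ, hfδ⟩ := Metric.uniformContinuousOn_iff.mp hfuc (ε / 2) (half_pos hε)
  have hincr : Tendsto (fun t => h (t + δ / 2) - h t) atTop (𝓝 0) := by
    simpa using (hℓ.comp (tendsto_atTop_add_const_right _ _ tendsto_id)).sub hℓ
  have hgain : 0 < δ / 2 * (ε / 2) := by positivity
  filter_upwards [eventually_gt_atTop a, hincr.eventually (gt_mem_nhds hgain)] with t hta hsmall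
  by_contra! hft
  obtain ⟨ξ, hξ, hslope⟩ := exists_hasDerivAt_eq_slope h f (by linarith : t < t + δ / 2)
    (fun s hs => (hderiv s (hta.trans_le hs.1)).continuousAt.continuousWithinAt)
    fun s hs => hderiv s (hta.trans hs.1)
  have hfξ : ε / 2 < f ξ := by
    have hclose : |ξ - t| < δ := by
      rw [abs_of_pos (sub_pos.mpr hξ.1)]
      linarith [hξ.2]
    have := hfδ t hta ξ (hta.trans hξ.1) (by rwa [Real.dist_eq, abs_sub_comm])
    rw [Real.dist_eq] at this
    linarith [abs_lt.mp this]
  rw [add_sub_cancel_left, eq_div_iff (by positivity)] at hslope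
  nlinarith

theorem tendsto_infDist_of_tendsto_norm {X F ι : Type*} [PseudoMetricSpace X]
    [NormedAddCommGroup F] {G : X → F} (hG : Continuous G) {K : Set X} (hK : IsCompact K)
    {l : Filter ι} {u : ι → X} (hu : ∀ᶠ i in l, u i ∈ K)
    (hGu : Tendsto (fun i => ‖G (u i)‖) l (𝓝 0)) :
    Tendsto (fun i => infDist (u i) {x | G x = 0}) l (𝓝 0) := by
  refine tendsto_order.2 ⟨fun b hb => .of_forall fun i => hb.trans_le infDist_nonneg,
    fun ε hε => ?_⟩
  set K' := K ∩ {x | ε ≤ infDist x {x | G x = 0}}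
  have hK' : IsCompact K' :=
    hK.inter_right (isClosed_le continuous_const (continuous_infDist_pt _))
  obtain ⟨ρ, hρ, hρK'⟩ : ∃ ρ > 0, ∀ x ∈ K', ρ ≤ ‖G x‖ := by
    rcases K'.eq_empty_or_nonempty with hempty | hne
    · exact ⟨1, one_pos, by simp [hempty]⟩
    obtain ⟨x₀, hx₀, hmin⟩ := hK'.exists_isMinOn hne hG.norm.continuousOn
    refine ⟨‖G x₀‖, norm_pos_iff.mpr fun hzero => ?_, fun x hx => hmin hx⟩
    have hfar : ε ≤ infDist x₀ {x | G x = 0} := hx₀.2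
    rw [infDist_zero_of_mem (s := {x | G x = 0}) hzero] at hfar
    exact hfar.not_gt hε
  filter_upwards [hu, hGu.eventually (gt_mem_nhds hρ)] with i hi hsmall
  by_contra! hfar
  exact (hρK' _ ⟨hi, hfar⟩).not_gt hsmall

section InnerProduct

variable [InnerProductSpace ℝ E]

theorem HasDerivAt.comp_of_supergradient {F : E → ℝ} {G : E → E}
    (hF : ∀ u v, F u ≤ F v + ⟪u - v, G v⟫) {y : ℝ → E} {y' : E} {t : ℝ}
    (hy : HasDerivAt y y' t) (hG : ContinuousAt G (y t)) :
    HasDerivAt (fun s => F (y s)) ⟪y', G (y t)⟫ t := by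
  set φ : ℝ → ℝ := fun s => F (y s) - ⟪y s, G (y t)⟫
  have hpinch : ∀ s, |φ s - φ t| ≤ ‖y s - y t‖ * ‖G (y s) - G (y t)‖ := by
    intro s
    have hupper := hF (y s) (y t)
    have hlower := hF (y t) (y s)
    have hcs := abs_le.mp (abs_real_inner_le_norm (y s - y t) (G (y s) - G (y t)))
    have hφ : φ s - φ t = F (y s) - F (y t) - ⟪y s - y t, G (y t)⟫ := by
      simp only [φ, inner_sub_left]; ring
    have hswap : ⟪y t - y s, G (y s)⟫ =
        -⟪y s - y t, G (y s) - G (y t)⟫ - ⟪y s - y t, G (y t)⟫ := by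
      rw [← neg_sub (y s), inner_neg_left, inner_sub_right]; ring
    rw [abs_le]
    constructor <;>
      linarith [mul_nonneg (norm_nonneg (y s - y t)) (norm_nonneg (G (y s) - G (y t)))]
  have hG' : (fun s => G (y s) - G (y t)) =o[𝓝 t] fun _ => (1 : ℝ) :=
    (isLittleO_one_iff ℝ).mpr (tendsto_sub_nhds_zero_iff.mpr (hG.tendsto.comp hy.continuousAt))
  have hφ : HasDerivAt φ 0 t := by
    rw [hasDerivAt_iff_isLittleO]
    have hprod := hy.isBigO_sub.norm_left.mul_isLittleO hG'.norm_left
    simp only [mul_one, smul_zero, sub_zero] at hprod ⊢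
    refine (isBigO_of_le _ fun s => ?_).trans_isLittleO hprod
    simpa [abs_mul] using hpinch s
  simpa only [φ, Pi.add_def, sub_add_cancel, inner_zero_right, zero_add] using
    hφ.add (hy.inner ℝ (hasDerivAt_const t (G (y t))))

theorem tendsto_norm_of_supergradient_flow [CompleteSpace E] {F : E → ℝ} {G : E → E}
    (hF : ∀ u v, F u ≤ F v + ⟪u - v, G v⟫) (hG : Continuous G) {K : Set E}
    (hK : IsCompact K) {M : ℝ} (hFM : ∀ v ∈ K, F v ≤ M) {y : ℝ → E}
    (hy : ∀ t, 0 ≤ t → y t = y 0 + ∫ q in (0 : ℝ)..t, G (y q))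
    (hyK : ∀ t, 0 ≤ t → y t ∈ K) :
    Tendsto (fun t => ‖G (y t)‖) atTop (𝓝 0) := by
  obtain ⟨C, hC⟩ := hK.exists_bound_of_continuousOn hG.continuousOn
  have hR : ∀ t, 0 ≤ t → ‖G (y t)‖ ≤ C.toNNReal := fun t ht =>
    (hC _ (hyK t ht)).trans (Real.le_coe_toNNReal C)
  have hderiv : ∀ t > 0, HasDerivAt (fun s => F (y s)) (‖G (y t)‖ ^ 2) t := fun t ht => by
    simpa only [real_inner_self_eq_norm_sq] using
      (hasDerivAt_of_eq_add_integral hG hy hR ht).comp_of_supergradient hF hG.continuousAt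
  have huc : UniformContinuousOn (fun t => ‖G (y t)‖ ^ 2) (Ioi 0) :=
    (hK.uniformContinuousOn_of_continuous (hG.norm.pow 2).continuousOn).comp
      ((lipschitzOnWith_of_eq_add_integral hy hR).uniformContinuousOn.mono Ioi_subset_Ici_self)
      fun t ht => hyK t ht.le
  have hsq := tendsto_zero_of_hasDerivAt_of_uniformContinuousOn hderiv
    (fun t _ => sq_nonneg _) huc fun t ht => hFM _ (hyK t ht.le)
  simpa [Real.sqrt_sq (norm_nonneg _)] using hsq.sqrt

end InnerProduct

theorem dual_ascent_convergence_general
    (d₁ d₂ : ℕ)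
    (C : Euc d₁ →ₗ[ℝ] Euc d₂) (w : Euc d₂)
    (Jhat : Euc d₁ → ℝ)
    (L : Euc d₁ → Euc d₂ → ℝ)
    (hL : ∀ x y, L x y = Jhat x + ⟪y, C x - w⟫)
    (lam : Euc d₂ → Euc d₁) (hlam : Continuous lam)
    -- λ(y') attains the infimum of L(·,y') and has linear growth
    (hmin : ∀ y' : Euc d₂, ∀ x : Euc d₁, L (lam y') y' ≤ L x y')
    -- the dual function Q(y') = inf_x L(x,y') = L(λ(y'),y') is bounded above
    (M : ℝ) (hQbd : ∀ y' : Euc d₂, L (lam y') y' ≤ M)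
    -- y solves the o.d.e. ẏ = Cλ(y) − w on [0,∞) and is bounded
    (yf : ℝ → Euc d₂)
    (hyf : ∀ t : ℝ, 0 ≤ t → yf t = yf 0 + ∫ q in (0 : ℝ)..t, (C (lam (yf q)) - w))
    (B : ℝ) (hB : ∀ t : ℝ, 0 ≤ t → ‖yf t‖ ≤ B) :
    Tendsto (fun t : ℝ => ‖C (lam (yf t)) - w‖) atTop (𝓝 0) ∧
    Tendsto (fun t : ℝ => Metric.infDist (yf t) {y' : Euc d₂ | C (lam y') = w})
      atTop (𝓝 0) := by
  set G : Euc d₂ → Euc d₂ := fun v => C (lam v) - w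
  have hG : Continuous G := (C.continuous_of_finiteDimensional.comp hlam).sub continuous_const
  have hsuper : ∀ u v, L (lam u) u ≤ L (lam v) v + ⟪u - v, G v⟫ := fun u v => by
    have := hmin u (lam v)
    rw [hL, hL] at this ⊢
    simp only [G, inner_sub_left] at this ⊢
    linarith
  have hyK : ∀ t, 0 ≤ t → yf t ∈ closedBall 0 B := fun t ht =>
    mem_closedBall_zero_iff.mpr (hB t ht)
  have hnorm := tendsto_norm_of_supergradient_flow hsuper hG (isCompact_closedBall 0 B)
    (fun v _ => hQbd v) hyf hyK
  refine ⟨hnorm, ?_⟩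
  simpa only [G, sub_eq_zero] using tendsto_infDist_of_tendsto_norm hG
    (isCompact_closedBall 0 B) ((eventually_ge_atTop 0).mono hyK) hnorm

/-- Along any bounded solution of `ẏ = Cλ(y) − w`, one has
`‖Cλ(y(t)) − w‖ → 0` and `dist(y(t), 𝒴) → 0`, where `𝒴 = {y' : Cλ(y') = w}`. -/
theorem dual_ascent_convergence
    (d₁ d₂ : ℕ) (hd₁ : 0 < d₁) (hd₂ : 0 < d₂)
    (C : Euc d₁ →ₗ[ℝ] Euc d₂) (w : Euc d₂)
    (Jhat : Euc d₁ → ℝ) (hJhat : Continuous Jhat)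
    (L : Euc d₁ → Euc d₂ → ℝ)
    (hL : ∀ x y, L x y = Jhat x + ⟪y, C x - w⟫)
    (lam : Euc d₂ → Euc d₁) (hlam : Continuous lam)
    (K' : ℝ) (hK' : 0 < K')
    -- λ(y') attains the infimum of L(·,y') and has linear growth
    (hmin : ∀ y' : Euc d₂, ∀ x : Euc d₁, L (lam y') y' ≤ L x y')
    (hgrow : ∀ y' : Euc d₂, ‖lam y'‖ ≤ K' * (1 + ‖y'‖))
    -- the dual function Q(y') = inf_x L(x,y') = L(λ(y'),y') is bounded above
    (M : ℝ) (hQbd : ∀ y' : Euc d₂, L (lam y') y' ≤ M)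
    -- y solves the o.d.e. ẏ = Cλ(y) − w on [0,∞) and is bounded
    (yf : ℝ → Euc d₂)
    (hyf : ∀ t : ℝ, 0 ≤ t → yf t = yf 0 + ∫ q in (0 : ℝ)..t, (C (lam (yf q)) - w))
    (B : ℝ) (hB : ∀ t : ℝ, 0 ≤ t → ‖yf t‖ ≤ B) :
    Tendsto (fun t : ℝ => ‖C (lam (yf t)) - w‖) atTop (𝓝 0) ∧
    Tendsto (fun t : ℝ => Metric.infDist (yf t) {y' : Euc d₂ | C (lam y') = w})
      atTop (𝓝 0) :=
  dual_ascent_convergence_general d₁ d₂ C w Jhat L hL lam hlam hmin M hQbd yf hyf B hB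
end
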